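/- arXiv:2107.05788 — 9 statements merged into one kernel-verified Lean document; each statement's English description precedes it below -/
import Mathlib

section
/- Let n = p0+p1+p2+p3+p4-3 and let A be the Batyrev matrix determined by integers p0,p1,p2,p3,p4 ≥ 1 and nonnegative integers b_1,…,b_{p3}, c_2,…,c_{p2}. Let d,e,f,d',e',f' be nonnegative integers and let h = h(d,e,f) and h' = h(d',e',f') be the corresponding normalized height vectors. Then the pair (P(A,h), P(A,h')) has the integer decomposition property: (P(A,h) ∩ ℤ^n) + (P(A,h') ∩ ℤ^n) = (P(A,h) + P(A,h')) ∩ ℤ^n. -/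
open Finset Pointwise

/-- Column index type for the Batyrev matrix:
left part `S = {v₁,…,v_{p0}, u₂,…,u_{p4}, y₂,…,y_{p1}}`,
right part `J = {t₁,…,t_{p3}, z₂,…,z_{p2}}`. -/
abbrev BCol (p0 p1 p2 p3 p4 : ℕ) :=
  (Fin p0 ⊕ (Fin (p4 - 1) ⊕ Fin (p1 - 1))) ⊕ (Fin p3 ⊕ Fin (p2 - 1))

/-- Row index type: `v₁,…,v_{p0}`, `u₁,…,u_{p4}` (index 0 is u₁),
`y₁,…,y_{p1}` (index 0 is y₁), `t₁,…,t_{p3}`, `z₁,…,z_{p2}` (index 0 is z₁). -/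
abbrev BRow (p0 p1 p2 p3 p4 : ℕ) :=
  Fin p0 ⊕ (Fin p4 ⊕ (Fin p1 ⊕ (Fin p3 ⊕ Fin p2)))

def batyrevA (p0 p1 p2 p3 p4 : ℕ) (b : Fin p3 → ℤ) (c : Fin (p2 - 1) → ℤ) :
    BRow p0 p1 p2 p3 p4 → BCol p0 p1 p2 p3 p4 → ℤ
  | .inl i, .inl (.inl i') => if (i : ℕ) = (i' : ℕ) then 1 else 0
  | .inl _, _ => 0
  | .inr (.inl j), .inl (.inl _) => if (j : ℕ) = 0 then -1 else 0
  | .inr (.inl j), .inl (.inr (.inl j')) =>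
      if (j : ℕ) = 0 then -1 else if (j : ℕ) = (j' : ℕ) + 1 then 1 else 0
  | .inr (.inl _), .inl (.inr (.inr _)) => 0
  | .inr (.inl j), .inr (.inl i) => if (j : ℕ) = 0 then b i else 0
  | .inr (.inl j), .inr (.inr k) => if (j : ℕ) = 0 then c k else 0
  | .inr (.inr (.inl j)), .inl (.inl _) => if (j : ℕ) = 0 then -1 else 0
  | .inr (.inr (.inl _)), .inl (.inr (.inl _)) => 0
  | .inr (.inr (.inl j)), .inl (.inr (.inr j')) =>
      if (j : ℕ) = 0 then -1 else if (j : ℕ) = (j' : ℕ) + 1 then 1 else 0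
  | .inr (.inr (.inl j)), .inr (.inl i) => if (j : ℕ) = 0 then b i + 1 else 0
  | .inr (.inr (.inl j)), .inr (.inr k) => if (j : ℕ) = 0 then c k else 0
  | .inr (.inr (.inr (.inl i))), .inr (.inl i') => if (i : ℕ) = (i' : ℕ) then 1 else 0
  | .inr (.inr (.inr (.inl _))), _ => 0
  | .inr (.inr (.inr (.inr j))), .inr (.inl _) => if (j : ℕ) = 0 then -1 else 0
  | .inr (.inr (.inr (.inr j))), .inr (.inr j') =>
      if (j : ℕ) = 0 then -1 else if (j : ℕ) = (j' : ℕ) + 1 then 1 else 0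
  | .inr (.inr (.inr (.inr _))), .inl _ => 0



/-- The normalized height vector `h(d,e,f)`: entry `d` at `v₁`, `f` at `u₁`,
`e+f` at `z₁`, and `0` elsewhere. -/
def batyrevH (p0 p1 p2 p3 p4 : ℕ) (d e f : ℤ) : BRow p0 p1 p2 p3 p4 → ℤ
  | .inl i => if (i : ℕ) = 0 then d else 0
  | .inr (.inl j) => if (j : ℕ) = 0 then f else 0
  | .inr (.inr (.inr (.inr j))) => if (j : ℕ) = 0 then e + f else 0
  | _ => 0

/-- `P(A,h) = {x ∈ ℝⁿ : (Ax)ᵢ ≥ -hᵢ}`. -/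
def polyP {ι κ : Type*} [Fintype κ] (A : ι → κ → ℤ) (h : ι → ℤ) : Set (κ → ℝ) :=
  {x | ∀ i, -(h i : ℝ) ≤ ∑ j, (A i j : ℝ) * x j}

/-- The set of integral points of `ℝ^κ`. -/
def intZ {κ : Type*} : Set (κ → ℝ) := {x | ∀ j, ∃ k : ℤ, x j = (k : ℝ)}

set_option linter.all false

lemma exists_split_on {κ : Type*} [DecidableEq κ] (w : κ → ℤ) (hw : ∀ i, 0 ≤ w i)
    (s : Finset κ) : ∀ k : ℤ, 0 ≤ k → k ≤ ∑ i ∈ s, w i →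
    ∃ w' : κ → ℤ, (∀ i, 0 ≤ w' i) ∧ (∀ i, w' i ≤ w i) ∧ (∀ i ∉ s, w' i = 0) ∧
      ∑ i ∈ s, w' i = k := by
  induction s using Finset.induction_on with
  | empty =>
      intro k hk0 hk1
      refine ⟨fun _ => 0, fun i => le_refl 0, fun i => hw i, fun _ _ => rfl, ?_⟩
      simp at hk1 ⊢; omega
  | @insert a s ha ih =>
      intro k hk0 hk1
      rw [Finset.sum_insert ha] at hk1
      have hs : 0 ≤ ∑ i ∈ s, w i := Finset.sum_nonneg fun i _ => hw i
      have h1' := min_le_left (w a) k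
      have h2' := min_le_right (w a) k
      have h3' : 0 ≤ min (w a) k := le_min (hw a) hk0
      obtain ⟨w', h0, h1, h2, h3⟩ := ih (k - min (w a) k) (by omega) (by omega)
      refine ⟨Function.update w' a (min (w a) k), ?_, ?_, ?_, ?_⟩
      · intro i
        rcases eq_or_ne i a with rfl | hne
        · simpa using h3'
        · simpa [Function.update_of_ne hne] using h0 i
      · intro i
        rcases eq_or_ne i a with rfl | hne
        · simpa using h1'
        · simpa [Function.update_of_ne hne] using h1 i
      · intro i hi
        simp only [Finset.mem_insert, not_or] at hi
        rw [Function.update_of_ne hi.1]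
        exact h2 i hi.2
      · rw [Finset.sum_insert ha, Function.update_self]
        have heq : ∑ x ∈ s, Function.update w' a (min (w a) k) x = ∑ x ∈ s, w' x :=
          Finset.sum_congr rfl (fun i hi =>
            Function.update_of_ne (by rintro rfl; exact ha hi) _ _)
        rw [heq, h3]; omega

lemma exists_split {κ : Type*} [Fintype κ] [DecidableEq κ] (w : κ → ℤ) (hw : ∀ i, 0 ≤ w i)
    (k : ℤ) (hk0 : 0 ≤ k) (hk : k ≤ ∑ i, w i) :
    ∃ w' : κ → ℤ, (∀ i, 0 ≤ w' i) ∧ (∀ i, w' i ≤ w i) ∧ ∑ i, w' i = k := by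
  obtain ⟨w', h0, h1, _, h3⟩ := exists_split_on w hw Finset.univ k hk0 hk
  exact ⟨w', h0, h1, h3⟩

namespace Baty
variable {p0 p1 p2 p3 p4 : ℕ}

def cV (i : Fin p0) : BCol p0 p1 p2 p3 p4 := .inl (.inl i)
def cU (j : Fin (p4-1)) : BCol p0 p1 p2 p3 p4 := .inl (.inr (.inl j))
def cY (j : Fin (p1-1)) : BCol p0 p1 p2 p3 p4 := .inl (.inr (.inr j))
def cT (i : Fin p3) : BCol p0 p1 p2 p3 p4 := .inr (.inl i)
def cZ (j : Fin (p2-1)) : BCol p0 p1 p2 p3 p4 := .inr (.inr j)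

variable (b : Fin p3 → ℤ) (c : Fin (p2-1) → ℤ)

def SV (X : BCol p0 p1 p2 p3 p4 → ℤ) : ℤ := ∑ i, X (cV i)
def SU (X : BCol p0 p1 p2 p3 p4 → ℤ) : ℤ := ∑ j, X (cU j)
def SY (X : BCol p0 p1 p2 p3 p4 → ℤ) : ℤ := ∑ j, X (cY j)
def ST (X : BCol p0 p1 p2 p3 p4 → ℤ) : ℤ := ∑ i, X (cT i)
def SZ (X : BCol p0 p1 p2 p3 p4 → ℤ) : ℤ := ∑ j, X (cZ j)
def WB (X : BCol p0 p1 p2 p3 p4 → ℤ) : ℤ :=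
  (∑ i, b i * X (cT i)) + ∑ k, c k * X (cZ k)

def rowS (X : BCol p0 p1 p2 p3 p4 → ℤ) (i : BRow p0 p1 p2 p3 p4) : ℤ :=
  ∑ j, batyrevA p0 p1 p2 p3 p4 b c i j * X j

lemma sum_ind {n : ℕ} (i : Fin n) (g : Fin n → ℤ) :
    ∑ i' : Fin n, (if (i:ℕ) = (i':ℕ) then (1:ℤ) else 0) * g i' = g i := by
  simp [Fin.val_eq_val, ite_mul]

lemma sum_ind' {n : ℕ} (j : Fin n) (hj : (j:ℕ) ≠ 0) (g : Fin (n-1) → ℤ) :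
    ∑ j' : Fin (n-1), (if (j:ℕ) = (j':ℕ)+1 then (1:ℤ) else 0) * g j' =
      g ⟨(j:ℕ)-1, by omega⟩ := by
  rw [Finset.sum_eq_single (⟨(j:ℕ)-1, by omega⟩ : Fin (n-1))]
  · simp; omega
  · intro b _ hb
    rw [if_neg, zero_mul]
    intro h; apply hb; apply Fin.ext; simp; omega
  · simp

lemma sum_ite_zero {n : ℕ} (hn : 1 ≤ n) (A : ℤ) :
    ∑ i : Fin n, (if (i:ℕ) = 0 then A else 0) = A := by
  rw [Finset.sum_eq_single (⟨0, hn⟩ : Fin n)]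
  · simp
  · intro b _ hb
    rw [if_neg]
    intro h; apply hb; exact Fin.ext h
  · simp

variable (X : BCol p0 p1 p2 p3 p4 → ℤ)

lemma rowS_v (i : Fin p0) : rowS b c X (.inl i) = X (cV i) := by
  rw [rowS, Fintype.sum_sum_type, Fintype.sum_sum_type, Fintype.sum_sum_type,
    Fintype.sum_sum_type]
  simp only [batyrevA, zero_mul, Finset.sum_const_zero, add_zero]
  exact sum_ind i _

lemma rowS_u0 (j : Fin p4) (hj : (j:ℕ) = 0) :
    rowS b c X (.inr (.inl j)) = -(SV X) - SU X + WB b c X := by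
  rw [rowS, Fintype.sum_sum_type, Fintype.sum_sum_type, Fintype.sum_sum_type,
    Fintype.sum_sum_type]
  simp only [batyrevA, hj, if_true, if_pos, zero_mul, Finset.sum_const_zero, add_zero,
    neg_one_mul, Finset.sum_neg_distrib]
  rw [SV, SU, WB]
  rfl

lemma rowS_u (j : Fin p4) (hj : (j:ℕ) ≠ 0) :
    rowS b c X (.inr (.inl j)) = X (cU ⟨(j:ℕ)-1, by omega⟩) := by
  rw [rowS, Fintype.sum_sum_type, Fintype.sum_sum_type, Fintype.sum_sum_type,
    Fintype.sum_sum_type]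
  simp only [batyrevA, hj, if_neg, if_false, zero_mul, Finset.sum_const_zero, add_zero]
  rw [sum_ind' j hj]
  simp [cU]

lemma rowS_y0 (j : Fin p1) (hj : (j:ℕ) = 0) :
    rowS b c X (.inr (.inr (.inl j))) = -(SV X) - SY X + WB b c X + ST X := by
  rw [rowS, Fintype.sum_sum_type, Fintype.sum_sum_type, Fintype.sum_sum_type,
    Fintype.sum_sum_type]
  simp only [batyrevA, hj, if_true, if_pos, zero_mul, Finset.sum_const_zero, add_zero,
    zero_add, neg_one_mul, Finset.sum_neg_distrib, add_mul, one_mul, Finset.sum_add_distrib]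
  rw [SV, SY, WB, ST]
  simp only [cV, cY, cT, cZ]
  ring

lemma rowS_y (j : Fin p1) (hj : (j:ℕ) ≠ 0) :
    rowS b c X (.inr (.inr (.inl j))) = X (cY ⟨(j:ℕ)-1, by omega⟩) := by
  rw [rowS, Fintype.sum_sum_type, Fintype.sum_sum_type, Fintype.sum_sum_type,
    Fintype.sum_sum_type]
  simp only [batyrevA, hj, if_neg, if_false, zero_mul, Finset.sum_const_zero, add_zero,
    zero_add]
  rw [sum_ind' j hj]
  simp [cY]

lemma rowS_t (i : Fin p3) : rowS b c X (.inr (.inr (.inr (.inl i)))) = X (cT i) := by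
  rw [rowS, Fintype.sum_sum_type, Fintype.sum_sum_type, Fintype.sum_sum_type,
    Fintype.sum_sum_type]
  simp only [batyrevA, zero_mul, Finset.sum_const_zero, add_zero, zero_add]
  exact sum_ind i _

lemma rowS_z0 (j : Fin p2) (hj : (j:ℕ) = 0) :
    rowS b c X (.inr (.inr (.inr (.inr j)))) = -(ST X) - SZ X := by
  rw [rowS, Fintype.sum_sum_type, Fintype.sum_sum_type, Fintype.sum_sum_type,
    Fintype.sum_sum_type]
  simp only [batyrevA, hj, if_true, if_pos, zero_mul, Finset.sum_const_zero, add_zero,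
    zero_add, neg_one_mul, Finset.sum_neg_distrib]
  rw [ST, SZ]
  simp only [cT, cZ]
  ring

lemma rowS_z (j : Fin p2) (hj : (j:ℕ) ≠ 0) :
    rowS b c X (.inr (.inr (.inr (.inr j)))) = X (cZ ⟨(j:ℕ)-1, by omega⟩) := by
  rw [rowS, Fintype.sum_sum_type, Fintype.sum_sum_type, Fintype.sum_sum_type,
    Fintype.sum_sum_type]
  simp only [batyrevA, hj, if_neg, if_false, zero_mul, Finset.sum_const_zero, add_zero,
    zero_add]
  rw [sum_ind' j hj]
  simp [cZ]

variable (d e f : ℤ)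

structure SatZ (b : Fin p3 → ℤ) (c : Fin (p2-1) → ℤ) (d e f : ℤ)
    (X : BCol p0 p1 p2 p3 p4 → ℤ) : Prop where
  hv : ∀ i : Fin p0, -(if (i:ℕ) = 0 then d else 0) ≤ X (cV i)
  hu : ∀ j, 0 ≤ X (cU j)
  hy : ∀ j, 0 ≤ X (cY j)
  ht : ∀ i, 0 ≤ X (cT i)
  hz : ∀ j, 0 ≤ X (cZ j)
  hU : SV X + SU X ≤ f + WB b c X
  hY : SV X + SY X ≤ WB b c X + ST X
  hZ : ST X + SZ X ≤ e + f

set_option maxHeartbeats 1000000 in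
theorem mem_iff (hp1 : 1 ≤ p1) (hp2 : 1 ≤ p2) (hp4 : 1 ≤ p4)
    (X : BCol p0 p1 p2 p3 p4 → ℤ) :
    (fun j => (X j : ℝ)) ∈ polyP (batyrevA p0 p1 p2 p3 p4 b c)
        (batyrevH p0 p1 p2 p3 p4 d e f) ↔ SatZ b c d e f X := by
  have key : (fun j => (X j : ℝ)) ∈ polyP (batyrevA p0 p1 p2 p3 p4 b c)
        (batyrevH p0 p1 p2 p3 p4 d e f) ↔
      ∀ i, -(batyrevH p0 p1 p2 p3 p4 d e f i) ≤ rowS b c X i := by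
    unfold polyP
    rw [Set.mem_setOf_eq]
    apply forall_congr'
    intro i
    rw [show (∑ j, ((batyrevA p0 p1 p2 p3 p4 b c i j : ℤ) : ℝ) * ((X j : ℤ):ℝ))
        = ((rowS b c X i : ℤ) : ℝ) by rw [rowS]; push_cast; rfl]
    exact_mod_cast Iff.rfl
  rw [key]
  constructor
  · intro H
    constructor
    · intro i
      have := H (.inl i)
      rw [rowS_v] at this
      simpa [batyrevH] using this
    · intro j'
      have := H (.inr (.inl ⟨(j':ℕ)+1, by omega⟩))
      rw [rowS_u b c X _ (by simp)] at this
      simp [batyrevH] at this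
      convert this using 3
    · intro j'
      have := H (.inr (.inr (.inl ⟨(j':ℕ)+1, by omega⟩)))
      rw [rowS_y b c X _ (by simp)] at this
      simp [batyrevH] at this
      convert this using 3
    · intro i
      have := H (.inr (.inr (.inr (.inl i))))
      rw [rowS_t] at this
      simpa [batyrevH] using this
    · intro j'
      have := H (.inr (.inr (.inr (.inr ⟨(j':ℕ)+1, by omega⟩))))
      rw [rowS_z b c X _ (by simp)] at this
      simp [batyrevH] at this
      convert this using 3
    · have := H (.inr (.inl ⟨0, by omega⟩))
      rw [rowS_u0 b c X _ rfl] at this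
      simp [batyrevH] at this
      omega
    · have := H (.inr (.inr (.inl ⟨0, by omega⟩)))
      rw [rowS_y0 b c X _ rfl] at this
      simp [batyrevH] at this
      omega
    · have := H (.inr (.inr (.inr (.inr ⟨0, by omega⟩))))
      rw [rowS_z0 b c X _ rfl] at this
      simp [batyrevH] at this
      omega
  · intro H i
    obtain ⟨hv, hu, hy, ht, hz, hU, hY, hZ⟩ := H
    match i with
    | .inl i =>
        rw [rowS_v]
        simpa [batyrevH] using hv i
    | .inr (.inl j) =>
        by_cases hj : (j:ℕ) = 0
        · rw [rowS_u0 b c X _ hj]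
          simp [batyrevH, hj]
          omega
        · rw [rowS_u b c X _ hj]
          simp [batyrevH, hj]
          exact hu _
    | .inr (.inr (.inl j)) =>
        by_cases hj : (j:ℕ) = 0
        · rw [rowS_y0 b c X _ hj]
          simp [batyrevH, hj]
          omega
        · rw [rowS_y b c X _ hj]
          simp [batyrevH, hj]
          exact hy _
    | .inr (.inr (.inr (.inl i))) =>
        rw [rowS_t]
        simpa [batyrevH] using ht i
    | .inr (.inr (.inr (.inr j))) =>
        by_cases hj : (j:ℕ) = 0
        · rw [rowS_z0 b c X _ hj]
          simp [batyrevH, hj]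
          omega
        · rw [rowS_z b c X _ hj]
          simp [batyrevH, hj]
          exact hz _


lemma choose_TZ (de ee fe d' e' f' sv su sy st sz w : ℤ)
    (hd : 0 ≤ de) (he : 0 ≤ ee) (hf : 0 ≤ fe) (hd' : 0 ≤ d') (he' : 0 ≤ e') (hf' : 0 ≤ f')
    (hsu : 0 ≤ su) (hsy : 0 ≤ sy) (hst : 0 ≤ st) (hsz : 0 ≤ sz) (hw : 0 ≤ w)
    (hsv : -(de + d') ≤ sv)
    (hU : sv + su ≤ fe + f' + w) (hY : sv + sy ≤ w + st) (hZ : st + sz ≤ ee + e' + (fe + f')) :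
    ∃ Tp Zp : ℤ, 0 ≤ Tp ∧ Tp ≤ st ∧ 0 ≤ Zp ∧ Zp ≤ sz ∧ Tp + Zp ≤ ee + fe ∧
      (st - Tp) + (sz - Zp) ≤ e' + f' ∧ sv - w - f' ≤ Tp ∧ sv - w ≤ (st - Tp) + fe := by
    refine ⟨max 0 (max (sv - w - f') (st - e' - f')),
      max 0 (st + sz - e' - f' - max 0 (max (sv - w - f') (st - e' - f'))), ?_, ?_, ?_, ?_,
      ?_, ?_, ?_, ?_⟩ <;> omega

lemma choose_VUY (de fe d' f' sv su sy st w Tp Wp : ℤ)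
    (hd : 0 ≤ de) (hf : 0 ≤ fe) (hd' : 0 ≤ d') (hf' : 0 ≤ f')
    (hsu : 0 ≤ su) (hsy : 0 ≤ sy) (hst : 0 ≤ st) (hw : 0 ≤ w)
    (hsv : -(de + d') ≤ sv)
    (hU : sv + su ≤ fe + f' + w) (hY : sv + sy ≤ w + st)
    (hTp0 : 0 ≤ Tp) (hTp1 : Tp ≤ st) (hTp2 : sv - w - f' ≤ Tp) (hTp3 : sv - w ≤ (st - Tp) + fe)
    (hWp0 : 0 ≤ Wp) (hWp1 : Wp ≤ w) :
    ∃ Vp Up Yp : ℤ, -de ≤ Vp ∧ Vp ≤ sv + d' ∧ 0 ≤ Up ∧ Up ≤ su ∧ 0 ≤ Yp ∧ Yp ≤ sy ∧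
      Vp + Up ≤ fe + Wp ∧ Vp + Yp ≤ Wp + Tp ∧
      (sv - Vp) + (su - Up) ≤ f' + (w - Wp) ∧ (sv - Vp) + (sy - Yp) ≤ (w - Wp) + (st - Tp) := by
    refine ⟨max (-de) (max (sv - f' - (w - Wp)) (sv - (w - Wp) - (st - Tp))),
      max 0 (sv + su - f' - (w - Wp) - max (-de) (max (sv - f' - (w - Wp))
        (sv - (w - Wp) - (st - Tp)))),
      max 0 (sv + sy - (w - Wp) - (st - Tp) - max (-de) (max (sv - f' - (w - Wp))
        (sv - (w - Wp) - (st - Tp)))), ?_, ?_, ?_, ?_, ?_, ?_, ?_, ?_, ?_, ?_⟩ <;> omega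


lemma satZ_mk (G : BCol p0 p1 p2 p3 p4 → ℤ)
    (h1 : ∀ i : Fin p0, -(if (i:ℕ) = 0 then d else 0) ≤ G (cV i))
    (h2 : ∀ j : Fin (p4-1), 0 ≤ G (cU j)) (h3 : ∀ j : Fin (p1-1), 0 ≤ G (cY j))
    (h4 : ∀ i : Fin p3, 0 ≤ G (cT i)) (h5 : ∀ j : Fin (p2-1), 0 ≤ G (cZ j))
    (h6 : (∑ i, G (cV i)) + (∑ j, G (cU j)) ≤
      f + ((∑ i, b i * G (cT i)) + ∑ k, c k * G (cZ k)))
    (h7 : (∑ i, G (cV i)) + (∑ j, G (cY j)) ≤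
      ((∑ i, b i * G (cT i)) + ∑ k, c k * G (cZ k)) + ∑ i, G (cT i))
    (h8 : (∑ i, G (cT i)) + (∑ j, G (cZ j)) ≤ e + f) :
    SatZ b c d e f G := ⟨h1, h2, h3, h4, h5, h6, h7, h8⟩

theorem satZ_split (hp0 : 1 ≤ p0)
    (hb : ∀ i, 0 ≤ b i) (hc : ∀ k, 0 ≤ c k)
    (d' e' f' : ℤ) (hd : 0 ≤ d) (he : 0 ≤ e) (hf : 0 ≤ f)
    (hd' : 0 ≤ d') (he' : 0 ≤ e') (hf' : 0 ≤ f')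
    (X : BCol p0 p1 p2 p3 p4 → ℤ)
    (hX : SatZ b c (d+d') (e+e') (f+f') X) :
    ∃ P Q : BCol p0 p1 p2 p3 p4 → ℤ, (∀ j, P j + Q j = X j) ∧
      SatZ b c d e f P ∧ SatZ b c d' e' f' Q := by
  obtain ⟨hv, hu, hy, ht, hz, hU, hY, hZ⟩ := hX
  have hSU : 0 ≤ SU X := Finset.sum_nonneg fun j _ => hu j
  have hSY : 0 ≤ SY X := Finset.sum_nonneg fun j _ => hy j
  have hST : 0 ≤ ST X := Finset.sum_nonneg fun i _ => ht i
  have hSZ : 0 ≤ SZ X := Finset.sum_nonneg fun j _ => hz j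
  have hW : 0 ≤ WB b c X :=
    add_nonneg (Finset.sum_nonneg fun i _ => mul_nonneg (hb i) (ht i))
      (Finset.sum_nonneg fun k _ => mul_nonneg (hc k) (hz k))
  have hSV : -(d + d') ≤ SV X := by
    have : ∑ i : Fin p0, -(if (i:ℕ) = 0 then d+d' else 0) ≤ SV X :=
      Finset.sum_le_sum fun i _ => hv i
    rwa [Finset.sum_neg_distrib, sum_ite_zero hp0] at this
  obtain ⟨Tp, Zp, hTp0, hTp1, hZp0, hZp1, hTZ1, hTZ2, hTp2, hTp3⟩ :=
    choose_TZ d e f d' e' f' (SV X) (SU X) (SY X) (ST X) (SZ X) (WB b c X)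
      hd he hf hd' he' hf' hSU hSY hST hSZ hW hSV hU hY hZ
  obtain ⟨t', ht'0, ht'1, ht'2⟩ := exists_split (fun i => X (cT i)) ht Tp hTp0 hTp1
  obtain ⟨z', hz'0, hz'1, hz'2⟩ := exists_split (fun j => X (cZ j)) hz Zp hZp0 hZp1
  have hWp0 : 0 ≤ (∑ i, b i * t' i) + ∑ k, c k * z' k :=
    add_nonneg (Finset.sum_nonneg fun i _ => mul_nonneg (hb i) (ht'0 i))
      (Finset.sum_nonneg fun k _ => mul_nonneg (hc k) (hz'0 k))
  have hWp1 : (∑ i, b i * t' i) + ∑ k, c k * z' k ≤ WB b c X :=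
    add_le_add (Finset.sum_le_sum fun i _ => mul_le_mul_of_nonneg_left (ht'1 i) (hb i))
      (Finset.sum_le_sum fun k _ => mul_le_mul_of_nonneg_left (hz'1 k) (hc k))
  obtain ⟨Vp, Up, Yp, hVp0, hVp1, hUp0, hUp1, hYp0, hYp1, hQ1, hQ2, hQ3, hQ4⟩ :=
    choose_VUY d f d' f' (SV X) (SU X) (SY X) (ST X) (WB b c X) Tp
      ((∑ i, b i * t' i) + ∑ k, c k * z' k)
      hd hf hd' hf' hSU hSY hST hW hSV hU hY hTp0 hTp1 hTp2 hTp3 hWp0 hWp1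
  obtain ⟨w', hw'0, hw'1, hw'2⟩ := exists_split
    (fun i : Fin p0 => X (cV i) + (if (i:ℕ) = 0 then d+d' else 0))
    (fun i => by have := hv i; by_cases hi : (i:ℕ) = 0 <;> simp [hi] at this ⊢ <;> omega)
    (Vp + d) (by omega)
    (by
      rw [Finset.sum_add_distrib, sum_ite_zero hp0]
      change SV X + (d + d') ≥ _
      omega)
  obtain ⟨u', hu'0, hu'1, hu'2⟩ := exists_split (fun j => X (cU j)) hu Up hUp0 hUp1
  obtain ⟨y', hy'0, hy'1, hy'2⟩ := exists_split (fun j => X (cY j)) hy Yp hYp0 hYp1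
  refine ⟨Sum.elim (Sum.elim (fun i => w' i - (if (i:ℕ) = 0 then d else 0)) (Sum.elim u' y'))
    (Sum.elim t' z'), fun j => X j - Sum.elim (Sum.elim (fun i => w' i -
      (if (i:ℕ) = 0 then d else 0)) (Sum.elim u' y')) (Sum.elim t' z') j,
    fun j => by ring, ?_, ?_⟩
  all_goals {
    have eV : SV X = ∑ x : Fin p0, X (Sum.inl (Sum.inl x)) := rfl
    have eU : SU X = ∑ x : Fin (p4-1), X (Sum.inl (Sum.inr (Sum.inl x))) := rfl
    have eY : SY X = ∑ x : Fin (p1-1), X (Sum.inl (Sum.inr (Sum.inr x))) := rfl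
    have eT : ST X = ∑ x : Fin p3, X (Sum.inr (Sum.inl x)) := rfl
    have eZ : SZ X = ∑ x : Fin (p2-1), X (Sum.inr (Sum.inr x)) := rfl
    have eW : WB b c X = (∑ x : Fin p3, b x * X (Sum.inr (Sum.inl x))) +
      ∑ x : Fin (p2-1), c x * X (Sum.inr (Sum.inr x)) := rfl
    have eIf : ∑ x : Fin p0, (if (x:ℕ) = 0 then d else 0) = d := sum_ite_zero hp0 d
    apply satZ_mk
    · intro i
      simp only [cV, Sum.elim_inl, Sum.elim_inr]
      have h1 := hw'0 i
      have h2 := hw'1 i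
      by_cases hi : (i:ℕ) = 0 <;> simp [cV, hi] at h2 ⊢ <;> omega
    · intro j
      simp only [cU, Sum.elim_inl, Sum.elim_inr]
      have h1 := hu'0 j
      have h2 := hu'1 j
      simp only [cU] at h2
      omega
    · intro j
      simp only [cY, Sum.elim_inl, Sum.elim_inr]
      have h1 := hy'0 j
      have h2 := hy'1 j
      simp only [cY] at h2
      omega
    · intro i
      simp only [cT, Sum.elim_inl, Sum.elim_inr]
      have h1 := ht'0 i
      have h2 := ht'1 i
      simp only [cT] at h2
      omega
    · intro j
      simp only [cZ, Sum.elim_inl, Sum.elim_inr]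
      have h1 := hz'0 j
      have h2 := hz'1 j
      simp only [cZ] at h2
      omega
    all_goals
      simp only [cV, cU, cY, cT, cZ, Sum.elim_inl, Sum.elim_inr, mul_sub,
        Finset.sum_sub_distrib]
      omega
  }

lemma batyrevH_add :
    (fun i => batyrevH p0 p1 p2 p3 p4 d e f i + batyrevH p0 p1 p2 p3 p4 d' e' f' i) =
      batyrevH p0 p1 p2 p3 p4 (d+d') (e+e') (f+f') := by
  funext i
  rcases i with i | j | j | i | j <;> simp [batyrevH] <;> split <;> ring

lemma polyP_add {ι : Type*} (A : ι → BCol p0 p1 p2 p3 p4 → ℤ) (h h' : ι → ℤ)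
    {x y : BCol p0 p1 p2 p3 p4 → ℝ} (hx : x ∈ polyP A h) (hy : y ∈ polyP A h') :
    x + y ∈ polyP A (fun i => h i + h' i) := by
  intro i
  have h1 := hx i
  have h2 := hy i
  simp only [Pi.add_apply, mul_add, Finset.sum_add_distrib]
  push_cast
  linarith

end Baty

/-- For the Batyrev matrix `A` and normalized height vectors
`h = h(d,e,f)`, `h' = h(d',e',f')` with `d,e,f,d',e',f' ≥ 0`, the pair
`(P(A,h), P(A,h'))` has the integer decomposition property. -/
theorem batyrev_IDP (p0 p1 p2 p3 p4 : ℕ)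
    (hp0 : 1 ≤ p0) (hp1 : 1 ≤ p1) (hp2 : 1 ≤ p2) (hp3 : 1 ≤ p3) (hp4 : 1 ≤ p4)
    (b : Fin p3 → ℤ) (c : Fin (p2 - 1) → ℤ)
    (hb : ∀ i, 0 ≤ b i) (hc : ∀ k, 0 ≤ c k)
    (d e f d' e' f' : ℤ)
    (hd : 0 ≤ d) (he : 0 ≤ e) (hf : 0 ≤ f)
    (hd' : 0 ≤ d') (he' : 0 ≤ e') (hf' : 0 ≤ f') :
    (polyP (batyrevA p0 p1 p2 p3 p4 b c) (batyrevH p0 p1 p2 p3 p4 d e f) ∩ intZ) +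
      (polyP (batyrevA p0 p1 p2 p3 p4 b c) (batyrevH p0 p1 p2 p3 p4 d' e' f') ∩ intZ) =
    (polyP (batyrevA p0 p1 p2 p3 p4 b c) (batyrevH p0 p1 p2 p3 p4 d e f) +
      polyP (batyrevA p0 p1 p2 p3 p4 b c) (batyrevH p0 p1 p2 p3 p4 d' e' f')) ∩ intZ := by
  classical
  have key : ∀ (dd ee ff : ℤ) (X : BCol p0 p1 p2 p3 p4 → ℤ),
      ((fun j => (X j : ℝ)) ∈ polyP (batyrevA p0 p1 p2 p3 p4 b c)
        (batyrevH p0 p1 p2 p3 p4 dd ee ff)) ↔ Baty.SatZ b c dd ee ff X :=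
    fun dd ee ff X => Baty.mem_iff b c dd ee ff hp1 hp2 hp4 X
  ext x
  constructor
  · rintro ⟨p, ⟨hpP, hpZ⟩, q, ⟨hqP, hqZ⟩, rfl⟩
    refine ⟨Set.add_mem_add hpP hqP, fun j => ?_⟩
    obtain ⟨a, ha⟩ := hpZ j
    obtain ⟨b', hb'⟩ := hqZ j
    exact ⟨a + b', by simp [ha, hb']⟩
  · rintro ⟨⟨p, hpP, q, hqP, hpq⟩, hxZ⟩
    choose X hXeq using hxZ
    have hxX : x = fun j => (X j : ℝ) := funext hXeq
    have hmem : (fun j => (X j : ℝ)) ∈ polyP (batyrevA p0 p1 p2 p3 p4 b c)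
        (batyrevH p0 p1 p2 p3 p4 (d+d') (e+e') (f+f')) := by
      rw [← Baty.batyrevH_add, ← hxX, ← hpq]
      exact Baty.polyP_add _ _ _ hpP hqP
    have hsat := (key (d+d') (e+e') (f+f') X).mp hmem
    obtain ⟨P, Q, hPQ, hsP, hsQ⟩ := Baty.satZ_split b c d e f hp0 hb hc d' e' f'
      hd he hf hd' he' hf' X hsat
    refine ⟨fun j => (P j : ℝ), ⟨(key d e f P).mpr hsP, fun j => ⟨P j, rfl⟩⟩,
      fun j => (Q j : ℝ), ⟨(key d' e' f' Q).mpr hsQ, fun j => ⟨Q j, rfl⟩⟩, ?_⟩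
    funext j
    simp only [Pi.add_apply]
    rw [hXeq j, ← hPQ j]
    push_cast
    ring
end

section
/- Let n = p0+p1+p2+p3+p4-3 and let A be the Batyrev matrix determined by integers p0,p1,p2,p3,p4 ≥ 1 and nonnegative integers b_1,…,b_{p3}, c_2,…,c_{p2}. Suppose h, h' ∈ ℤ^{n+3} each satisfy the five convexity inequalities for A. Then the pair (P(A,h), P(A,h')) has the integer decomposition property: (P(A,h) ∩ ℤ^n) + (P(A,h') ∩ ℤ^n) = (P(A,h) + P(A,h')) ∩ ℤ^n. -/
open Finset Pointwise

/-- Embedding `Fin (n-1) → Fin n`, `k ↦ k+1` (so index `k` of `c₂,…,c_{p2}`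
corresponds to ray `z_{k+2}`, i.e. index `k+1` among `z₁,…,z_{p2}`). -/
def embSucc {n : ℕ} (k : Fin (n - 1)) : Fin n :=
  ⟨(k : ℕ) + 1, by have := k.isLt; omega⟩

/-- The five convexity inequalities for a height vector `h` on the Batyrev fan. -/
def batyrevConvex (p0 p1 p2 p3 p4 : ℕ) (b : Fin p3 → ℤ) (c : Fin (p2 - 1) → ℤ)
    (h : BRow p0 p1 p2 p3 p4 → ℤ) : Prop :=
  ((∑ i, h (.inl i)) + (∑ j, h (.inr (.inr (.inl j)))) ≥
      (∑ k, c k * h (.inr (.inr (.inr (.inr (embSucc k)))))) +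
        (∑ i, (b i + 1) * h (.inr (.inr (.inr (.inl i)))))) ∧
  ((∑ j, h (.inr (.inr (.inl j)))) + (∑ j, h (.inr (.inr (.inr (.inr j))))) ≥
      ∑ j, h (.inr (.inl j))) ∧
  ((∑ j, h (.inr (.inr (.inr (.inr j))))) + (∑ i, h (.inr (.inr (.inr (.inl i))))) ≥ 0) ∧
  ((∑ i, h (.inr (.inr (.inr (.inl i))))) + (∑ j, h (.inr (.inl j))) ≥
      ∑ j, h (.inr (.inr (.inl j)))) ∧
  ((∑ j, h (.inr (.inl j))) + (∑ i, h (.inl i)) ≥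
      (∑ k, c k * h (.inr (.inr (.inr (.inr (embSucc k)))))) +
        (∑ i, b i * h (.inr (.inr (.inr (.inl i))))))


/-!
Translate a lattice point `ξ` by the heights of the unit rows of `A` (the row `e_s` for each
coordinate `s`). The lattice points of `P(A,h)` become the nonnegative integer vectors
`X = (V, U, Y, T, Z)`, split into the blocks of `v`-, `u`-, `y`-, `t`- and `z`-coordinates,
subject to the three remaining rows `u₁`, `y₁`, `z₁`:
`ΣV + ΣU ≤ K + w`, `ΣV + ΣY ≤ L + w + ΣT`, `ΣT + ΣZ ≤ M`, with `w = Σ bᵢTᵢ + Σ cⱼZⱼ`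
and `K, L, M` linear in `h`. The convexity inequalities amount to `0 ≤ L ≤ K ≤ L + M`.

To split a point of the cell of `h + h'`, first choose the part of `ΣT` (and then of `ΣZ`)
that goes to `h`; this fixes the weights `w` on both sides, and a suitable choice makes the
block totals `ΣV`, `ΣU`, `ΣY` distributable as well. Inside a block every total between `0`
and the block sum is realised by a coordinatewise smaller nonnegative vector.
-/

section IntegerPoints

variable {ι κ : Type*}

lemma mem_intZ_iff {x : κ → ℝ} : x ∈ intZ ↔ ∃ ξ : κ → ℤ, x = fun j => (ξ j : ℝ) :=
  ⟨fun hx => ⟨fun j => (hx j).choose, funext fun j => (hx j).choose_spec⟩,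
    fun ⟨ξ, hξ⟩ j => ⟨ξ j, by rw [hξ]⟩⟩

variable [Fintype κ]

def intPoints (A : ι → κ → ℤ) (h : ι → ℤ) : Set (κ → ℤ) :=
  {ξ | ∀ i, -h i ≤ ∑ j, A i j * ξ j}

lemma intCast_mem_polyP_iff {A : ι → κ → ℤ} {h : ι → ℤ} {ξ : κ → ℤ} :
    (fun j => (ξ j : ℝ)) ∈ polyP A h ↔ ξ ∈ intPoints A h := by
  simp only [polyP, intPoints, Set.mem_ofPred_eq]
  norm_cast

lemma polyP_add_subset (A : ι → κ → ℤ) (h h' : ι → ℤ) :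
    polyP A h + polyP A h' ⊆ polyP A (h + h') := by
  rintro _ ⟨x, hx, x', hx', rfl⟩ i
  have := add_le_add (hx i) (hx' i)
  simp only [Pi.add_apply, Int.cast_add, mul_add, Finset.sum_add_distrib] at this ⊢
  linarith

theorem polyP_inter_intZ_add_eq {A : ι → κ → ℤ} {h h' : ι → ℤ}
    (H : intPoints A (h + h') ⊆ intPoints A h + intPoints A h') :
    (polyP A h ∩ intZ) + (polyP A h' ∩ intZ) = (polyP A h + polyP A h') ∩ intZ := by
  apply subset_antisymm
  · rintro _ ⟨x, ⟨hx, hxZ⟩, x', ⟨hx', hxZ'⟩, rfl⟩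
    refine ⟨Set.add_mem_add hx hx', fun j => ?_⟩
    obtain ⟨k, hk⟩ := hxZ j
    obtain ⟨k', hk'⟩ := hxZ' j
    exact ⟨k + k', by simp [hk, hk']⟩
  · rintro x ⟨hx, hxZ⟩
    obtain ⟨ξ, rfl⟩ := mem_intZ_iff.1 hxZ
    obtain ⟨ξ₁, hξ₁, ξ₂, hξ₂, rfl⟩ := H (intCast_mem_polyP_iff.1 (polyP_add_subset A h h' hx))
    refine ⟨_, ⟨intCast_mem_polyP_iff.2 hξ₁, mem_intZ_iff.2 ⟨ξ₁, rfl⟩⟩,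
      _, ⟨intCast_mem_polyP_iff.2 hξ₂, mem_intZ_iff.2 ⟨ξ₂, rfl⟩⟩, ?_⟩
    ext j
    simp

end IntegerPoints

lemma exists_le_sum_eq {ι : Type*} [Fintype ι] {X : ι → ℤ} (hX : 0 ≤ X) {s : ℤ}
    (hs : 0 ≤ s) (hsX : s ≤ ∑ i, X i) : ∃ Y, 0 ≤ Y ∧ Y ≤ X ∧ ∑ i, Y i = s := by
  classical
  suffices ∀ (S : Finset ι) (s : ℤ), 0 ≤ s → s ≤ ∑ i ∈ S, X i →
      ∃ Y, 0 ≤ Y ∧ Y ≤ X ∧ ∑ i ∈ S, Y i = s from this _ s hs hsX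
  intro S
  induction S using Finset.induction_on with
  | empty => exact fun s hs hsX => ⟨0, le_rfl, hX, by rw [Finset.sum_empty] at hsX ⊢; omega⟩
  | insert a S ha ih =>
    intro s hs hsX
    rw [Finset.sum_insert ha] at hsX
    have hSX : 0 ≤ ∑ i ∈ S, X i := Finset.sum_nonneg fun i _ => hX i
    obtain ⟨Y, hY, hYX, hYs⟩ := ih (s - min s (X a)) (by omega) (by omega)
    refine ⟨Function.update Y a (min s (X a)), fun i => ?_, fun i => ?_, ?_⟩
    · rcases eq_or_ne i a with rfl | hi
      · simpa using le_min hs (hX i)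
      · simpa [hi] using hY i
    · rcases eq_or_ne i a with rfl | hi
      · simp
      · simpa [hi] using hYX i
    · rw [Finset.sum_insert ha, Finset.sum_update_of_notMem ha, Function.update_self, hYs]
      omega

lemma exists_sBlock_totals {sV sU sY P P' Q Q' : ℤ} (hP : 0 ≤ P) (hP' : 0 ≤ P')
    (hQ : 0 ≤ Q) (hQ' : 0 ≤ Q') (hsV : 0 ≤ sV) (hsU : 0 ≤ sU) (hsY : 0 ≤ sY)
    (hPQ' : sV ≤ P + Q') (hQP' : sV ≤ Q + P') (hU : sV + sU ≤ P + P')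
    (hY : sV + sY ≤ Q + Q') :
    ∃ v u y, 0 ≤ v ∧ v ≤ sV ∧ 0 ≤ u ∧ u ≤ sU ∧ 0 ≤ y ∧ y ≤ sY ∧
      v + u ≤ P ∧ sV - v + (sU - u) ≤ P' ∧ v + y ≤ Q ∧ sV - v + (sY - y) ≤ Q' := by
  set v := max 0 (max (sV - P') (sV - Q'))
  exact ⟨v, max 0 (sV + sU - P' - v), max 0 (sV + sY - Q' - v), by omega⟩

/-- The last two conclusions yield the hypotheses `hPQ'`, `hQP'` of `exists_sBlock_totals`,
from which the weight of the chosen `t`/`z` split cancels. -/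
lemma exists_jBlock_totals {sV sT sZ B K L M K' L' M' : ℤ} (hLK : L ≤ K) (hKM : K ≤ L + M)
    (hLK' : L' ≤ K') (hKM' : K' ≤ L' + M') (hsT : 0 ≤ sT) (hsZ : 0 ≤ sZ)
    (hu : sV ≤ K + K' + B) (hy : sV ≤ L + L' + B + sT) (hz : sT + sZ ≤ M + M') :
    ∃ t z, 0 ≤ t ∧ t ≤ sT ∧ 0 ≤ z ∧ z ≤ sZ ∧ t + z ≤ M ∧ sT - t + (sZ - z) ≤ M' ∧
      sV ≤ L + K' + B + t ∧ sV ≤ K + L' + B + (sT - t) := by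
  set t := max (max 0 (sV - L - K' - B)) (sT - M')
  exact ⟨t, max 0 (sT + sZ - M' - t), by omega⟩

section Cell

variable {ι₀ ι₄ ι₁ ι₃ ι₂ : Type*} [Fintype ι₀] [Fintype ι₄] [Fintype ι₁] [Fintype ι₃]
  [Fintype ι₂]

local notation "Col" => (ι₀ ⊕ (ι₄ ⊕ ι₁)) ⊕ (ι₃ ⊕ ι₂)

def vSum (X : Col → ℤ) : ℤ := ∑ i, X (.inl (.inl i))
def uSum (X : Col → ℤ) : ℤ := ∑ k, X (.inl (.inr (.inl k)))
def ySum (X : Col → ℤ) : ℤ := ∑ k, X (.inl (.inr (.inr k)))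
def tSum (X : Col → ℤ) : ℤ := ∑ i, X (.inr (.inl i))
def zSum (X : Col → ℤ) : ℤ := ∑ k, X (.inr (.inr k))

def weight (b : ι₃ → ℤ) (c : ι₂ → ℤ) (X : Col → ℤ) : ℤ :=
  ∑ i, b i * X (.inr (.inl i)) + ∑ k, c k * X (.inr (.inr k))

def batyrevCell (b : ι₃ → ℤ) (c : ι₂ → ℤ) (K L M : ℤ) : Set (Col → ℤ) :=
  {X | 0 ≤ X ∧ vSum X + uSum X ≤ K + weight b c X ∧
    vSum X + ySum X ≤ L + weight b c X + tSum X ∧ tSum X + zSum X ≤ M}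

theorem mem_batyrevCell_add {b : ι₃ → ℤ} {c : ι₂ → ℤ} (hb : ∀ i, 0 ≤ b i)
    (hc : ∀ k, 0 ≤ c k) {K L M K' L' M' : ℤ} (hL : 0 ≤ L) (hLK : L ≤ K) (hKM : K ≤ L + M)
    (hL' : 0 ≤ L') (hLK' : L' ≤ K') (hKM' : K' ≤ L' + M') {X : Col → ℤ}
    (hX : X ∈ batyrevCell b c (K + K') (L + L') (M + M')) :
    X ∈ batyrevCell b c K L M + batyrevCell b c K' L' M' := by
  obtain ⟨hX, hu, hy, hz⟩ := hX
  have hsV : 0 ≤ vSum X := Finset.sum_nonneg fun i _ => hX _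
  have hsU : 0 ≤ uSum X := Finset.sum_nonneg fun i _ => hX _
  have hsY : 0 ≤ ySum X := Finset.sum_nonneg fun i _ => hX _
  have hsT : 0 ≤ tSum X := Finset.sum_nonneg fun i _ => hX _
  have hsZ : 0 ≤ zSum X := Finset.sum_nonneg fun i _ => hX _
  obtain ⟨t, z, ht, htT, hz₀, hzZ, htzM, htzM', htK', htK⟩ :=
    exists_jBlock_totals (sV := vSum X) (B := weight b c X) hLK hKM hLK' hKM' hsT hsZ
      (by linarith) (by linarith) hz
  obtain ⟨T, hT, hTX, rfl⟩ := exists_le_sum_eq (fun i => hX (.inr (.inl i))) ht htT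
  obtain ⟨Z, hZ, hZX, rfl⟩ := exists_le_sum_eq (fun k => hX (.inr (.inr k))) hz₀ hzZ
  set β := ∑ i, b i * T i + ∑ k, c k * Z k
  have hβ : 0 ≤ β := add_nonneg (Finset.sum_nonneg fun i _ => mul_nonneg (hb i) (hT i))
    (Finset.sum_nonneg fun k _ => mul_nonneg (hc k) (hZ k))
  have hβX : β ≤ weight b c X := add_le_add
    (Finset.sum_le_sum fun i _ => mul_le_mul_of_nonneg_left (hTX i) (hb i))
    (Finset.sum_le_sum fun k _ => mul_le_mul_of_nonneg_left (hZX k) (hc k))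
  obtain ⟨v, u, y, hv, hvV, hu₀, huU, hy₀, hyY, hvu, hvu', hvy, hvy'⟩ :=
    exists_sBlock_totals (P := K + β) (P' := K' + (weight b c X - β))
      (Q := L + β + ∑ i, T i) (Q' := L' + (weight b c X - β) + (tSum X - ∑ i, T i))
      (by linarith) (by linarith) (by linarith) (by linarith) hsV hsU hsY
      (by linarith) (by linarith) (by linarith) (by linarith)
  obtain ⟨V, hV, hVX, rfl⟩ := exists_le_sum_eq (fun i => hX (.inl (.inl i))) hv hvV
  obtain ⟨U, hU, hUX, rfl⟩ := exists_le_sum_eq (fun k => hX (.inl (.inr (.inl k)))) hu₀ huU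
  obtain ⟨Y, hY, hYX, rfl⟩ := exists_le_sum_eq (fun k => hX (.inl (.inr (.inr k)))) hy₀ hyY
  set X₁ : Col → ℤ := Sum.elim (Sum.elim V (Sum.elim U Y)) (Sum.elim T Z)
  have hX₁ : 0 ≤ X₁ := by
    rintro ((i | k | k) | (i | k))
    exacts [hV i, hU k, hY k, hT i, hZ k]
  have hX₁X : X₁ ≤ X := by
    rintro ((i | k | k) | (i | k))
    exacts [hVX i, hUX k, hYX k, hTX i, hZX k]
  refine ⟨X₁, ⟨hX₁, ?_⟩, X - X₁, ⟨sub_nonneg.2 hX₁X, ?_⟩, add_sub_cancel _ _⟩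
  · simp only [vSum, uSum, ySum, tSum, zSum, weight, X₁, Sum.elim_inl, Sum.elim_inr]
    exact ⟨hvu, hvy, htzM⟩
  · simp only [vSum, uSum, ySum, tSum, zSum, weight, X₁, Pi.sub_apply, Sum.elim_inl,
      Sum.elim_inr, mul_sub, Finset.sum_sub_distrib] at hvu' hvy' htzM' ⊢
    refine ⟨?_, ?_, ?_⟩ <;> linarith

end Cell

lemma Fin.sum_eq_add_sum_embSucc {M : Type*} [AddCommMonoid M] {n : ℕ} (hn : 1 ≤ n)
    (f : Fin n → M) : ∑ j, f j = f ⟨0, hn⟩ + ∑ k : Fin (n - 1), f (embSucc k) := by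
  obtain ⟨m, rfl⟩ : ∃ m, n = m + 1 := ⟨n - 1, by omega⟩
  exact Fin.sum_univ_succ f

lemma Fin.eq_zero_or_eq_embSucc {n : ℕ} (hn : 1 ≤ n) (j : Fin n) :
    j = ⟨0, hn⟩ ∨ ∃ k : Fin (n - 1), j = embSucc k := by
  obtain ⟨m, rfl⟩ : ∃ m, n = m + 1 := ⟨n - 1, by omega⟩
  exact (Fin.eq_zero_or_eq_succ j).imp id fun ⟨k, hk⟩ => ⟨k, hk⟩

section Batyrev

variable {p0 p1 p2 p3 p4 : ℕ} (b : Fin p3 → ℤ) (c : Fin (p2 - 1) → ℤ)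
  (h h' : BRow p0 p1 p2 p3 p4 → ℤ) (ξ : BCol p0 p1 p2 p3 p4 → ℤ)

def unitRow : BCol p0 p1 p2 p3 p4 → BRow p0 p1 p2 p3 p4
  | .inl (.inl i) => .inl i
  | .inl (.inr (.inl k)) => .inr (.inl (embSucc k))
  | .inl (.inr (.inr k)) => .inr (.inr (.inl (embSucc k)))
  | .inr (.inl i) => .inr (.inr (.inr (.inl i)))
  | .inr (.inr k) => .inr (.inr (.inr (.inr (embSucc k))))

lemma forall_batyrevRow_iff (hp1 : 1 ≤ p1) (hp2 : 1 ≤ p2) (hp4 : 1 ≤ p4)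
    {P : BRow p0 p1 p2 p3 p4 → Prop} :
    (∀ r, P r) ↔ (∀ s, P (unitRow s)) ∧ P (.inr (.inl ⟨0, hp4⟩)) ∧
      P (.inr (.inr (.inl ⟨0, hp1⟩))) ∧ P (.inr (.inr (.inr (.inr ⟨0, hp2⟩)))) := by
  refine ⟨fun H => ⟨fun s => H _, H _, H _, H _⟩, fun ⟨H, Hu, Hy, Hz⟩ r => ?_⟩
  rcases r with i | j | j | i | j
  · exact H (.inl (.inl i))
  · obtain rfl | ⟨k, rfl⟩ := Fin.eq_zero_or_eq_embSucc hp4 j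
    exacts [Hu, H (.inl (.inr (.inl k)))]
  · obtain rfl | ⟨k, rfl⟩ := Fin.eq_zero_or_eq_embSucc hp1 j
    exacts [Hy, H (.inl (.inr (.inr k)))]
  · exact H (.inr (.inl i))
  · obtain rfl | ⟨k, rfl⟩ := Fin.eq_zero_or_eq_embSucc hp2 j
    exacts [Hz, H (.inr (.inr k))]

lemma sum_batyrevA_unitRow_mul (s : BCol p0 p1 p2 p3 p4) :
    ∑ j, batyrevA p0 p1 p2 p3 p4 b c (unitRow s) j * ξ j = ξ s := by
  rcases s with (i | k | k) | (i | k) <;>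
    simp [unitRow, batyrevA, embSucc, Fintype.sum_sum_type, Fin.val_inj]

lemma sum_batyrevA_u_mul (hp4 : 1 ≤ p4) :
    ∑ j, batyrevA p0 p1 p2 p3 p4 b c (.inr (.inl ⟨0, hp4⟩)) j * ξ j =
      weight b c ξ - vSum ξ - uSum ξ := by
  simp only [batyrevA, Int.reduceNeg, Fintype.sum_sum_type, ↓reduceIte, neg_mul, one_mul,
    sum_neg_distrib, zero_mul, sum_const_zero, add_zero, weight, vSum, uSum]
  ring

lemma sum_batyrevA_y_mul (hp1 : 1 ≤ p1) :
    ∑ j, batyrevA p0 p1 p2 p3 p4 b c (.inr (.inr (.inl ⟨0, hp1⟩))) j * ξ j =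
      weight b c ξ + tSum ξ - vSum ξ - ySum ξ := by
  simp only [batyrevA, Int.reduceNeg, Fintype.sum_sum_type, ↓reduceIte, neg_mul, one_mul,
    sum_neg_distrib, zero_mul, sum_const_zero, zero_add, add_mul, sum_add_distrib, weight, tSum,
    vSum, ySum]
  ring

lemma sum_batyrevA_z_mul (hp2 : 1 ≤ p2) :
    ∑ j, batyrevA p0 p1 p2 p3 p4 b c (.inr (.inr (.inr (.inr ⟨0, hp2⟩)))) j * ξ j =
      -tSum ξ - zSum ξ := by
  simp only [batyrevA, Int.reduceNeg, Fintype.sum_sum_type, zero_mul, sum_const_zero,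
    ↓reduceIte, neg_mul, one_mul, sum_neg_distrib, zero_add, tSum, zSum]
  ring

def uBound : ℤ := ∑ j, h (.inr (.inl j)) + vSum (h ∘ unitRow) - weight b c (h ∘ unitRow)

def yBound : ℤ :=
  ∑ j, h (.inr (.inr (.inl j))) + vSum (h ∘ unitRow) - weight b c (h ∘ unitRow) -
    tSum (h ∘ unitRow)

def zBound : ℤ := ∑ j, h (.inr (.inr (.inr (.inr j)))) + tSum (h ∘ unitRow)

lemma uBound_add : uBound b c (h + h') = uBound b c h + uBound b c h' := by
  simp only [uBound, vSum, weight, Pi.add_apply, Function.comp_apply, mul_add,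
    Finset.sum_add_distrib]
  ring

lemma yBound_add : yBound b c (h + h') = yBound b c h + yBound b c h' := by
  simp only [yBound, vSum, tSum, weight, Pi.add_apply, Function.comp_apply, mul_add,
    Finset.sum_add_distrib]
  ring

lemma zBound_add : zBound (h + h') = zBound h + zBound h' := by
  simp only [zBound, tSum, Pi.add_apply, Function.comp_apply, Finset.sum_add_distrib]
  ring

variable {b c h} in
lemma bounds_of_batyrevConvex (hconv : batyrevConvex p0 p1 p2 p3 p4 b c h) :
    0 ≤ yBound b c h ∧ yBound b c h ≤ uBound b c h ∧
      uBound b c h ≤ yBound b c h + zBound h := by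
  obtain ⟨h1, h2, -, h4, -⟩ := hconv
  simp only [add_mul, one_mul, Finset.sum_add_distrib] at h1
  simp only [uBound, yBound, zBound, vSum, tSum, weight, Function.comp_apply, unitRow]
  refine ⟨?_, ?_, ?_⟩ <;> linarith

lemma mem_intPoints_batyrevA_iff (hp1 : 1 ≤ p1) (hp2 : 1 ≤ p2) (hp4 : 1 ≤ p4) :
    ξ ∈ intPoints (batyrevA p0 p1 p2 p3 p4 b c) h ↔
      ξ + h ∘ unitRow ∈ batyrevCell b c (uBound b c h) (yBound b c h) (zBound h) := by
  simp only [intPoints, Set.mem_ofPred_eq, forall_batyrevRow_iff hp1 hp2 hp4,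
    sum_batyrevA_unitRow_mul, sum_batyrevA_u_mul, sum_batyrevA_y_mul, sum_batyrevA_z_mul,
    batyrevCell]
  refine and_congr ?_ (and_congr ?_ (and_congr ?_ ?_))
  · simp only [Pi.le_def, Pi.add_apply, Pi.zero_apply, Function.comp_apply,
      neg_le_iff_add_nonneg]
  all_goals
    have hu := Fin.sum_eq_add_sum_embSucc hp4 fun j => h (.inr (.inl j))
    have hy := Fin.sum_eq_add_sum_embSucc hp1 fun j => h (.inr (.inr (.inl j)))
    have hz := Fin.sum_eq_add_sum_embSucc hp2 fun j => h (.inr (.inr (.inr (.inr j))))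
    simp only [uBound, yBound, zBound, vSum, uSum, ySum, tSum, zSum, weight, Pi.add_apply,
      Function.comp_apply, unitRow, mul_add, Finset.sum_add_distrib] at hu hy hz ⊢
    constructor <;> intro <;> linarith

end Batyrev

theorem batyrev_IDP_of_convex_general (p0 p1 p2 p3 p4 : ℕ)
    (hp1 : 1 ≤ p1) (hp2 : 1 ≤ p2) (hp4 : 1 ≤ p4)
    (b : Fin p3 → ℤ) (c : Fin (p2 - 1) → ℤ)
    (hb : ∀ i, 0 ≤ b i) (hc : ∀ k, 0 ≤ c k)
    (h h' : BRow p0 p1 p2 p3 p4 → ℤ)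
    (hconv : batyrevConvex p0 p1 p2 p3 p4 b c h)
    (hconv' : batyrevConvex p0 p1 p2 p3 p4 b c h') :
    (polyP (batyrevA p0 p1 p2 p3 p4 b c) h ∩ intZ) +
      (polyP (batyrevA p0 p1 p2 p3 p4 b c) h' ∩ intZ) =
    (polyP (batyrevA p0 p1 p2 p3 p4 b c) h +
      polyP (batyrevA p0 p1 p2 p3 p4 b c) h') ∩ intZ := by
  refine polyP_inter_intZ_add_eq fun ξ hξ => ?_
  rw [mem_intPoints_batyrevA_iff b c _ _ hp1 hp2 hp4, uBound_add, yBound_add,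
    zBound_add] at hξ
  obtain ⟨hL, hLK, hKM⟩ := bounds_of_batyrevConvex hconv
  obtain ⟨hL', hLK', hKM'⟩ := bounds_of_batyrevConvex hconv'
  obtain ⟨X, hX, X', hX', hXX'⟩ := mem_batyrevCell_add hb hc hL hLK hKM hL' hLK' hKM' hξ
  refine ⟨X - h ∘ unitRow, ?_, X' - h' ∘ unitRow, ?_, ?_⟩
  · rwa [mem_intPoints_batyrevA_iff b c h _ hp1 hp2 hp4, sub_add_cancel]
  · rwa [mem_intPoints_batyrevA_iff b c h' _ hp1 hp2 hp4, sub_add_cancel]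
  · rw [Pi.add_comp] at hXX'
    linear_combination hXX'

/-- If `h, h'` satisfy the five convexity inequalities for the
Batyrev matrix `A`, then `(P(A,h), P(A,h'))` has the integer decomposition property. -/
theorem batyrev_IDP_of_convex (p0 p1 p2 p3 p4 : ℕ)
    (hp0 : 1 ≤ p0) (hp1 : 1 ≤ p1) (hp2 : 1 ≤ p2) (hp3 : 1 ≤ p3) (hp4 : 1 ≤ p4)
    (b : Fin p3 → ℤ) (c : Fin (p2 - 1) → ℤ)
    (hb : ∀ i, 0 ≤ b i) (hc : ∀ k, 0 ≤ c k)
    (h h' : BRow p0 p1 p2 p3 p4 → ℤ)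
    (hconv : batyrevConvex p0 p1 p2 p3 p4 b c h)
    (hconv' : batyrevConvex p0 p1 p2 p3 p4 b c h') :
    (polyP (batyrevA p0 p1 p2 p3 p4 b c) h ∩ intZ) +
      (polyP (batyrevA p0 p1 p2 p3 p4 b c) h' ∩ intZ) =
    (polyP (batyrevA p0 p1 p2 p3 p4 b c) h +
      polyP (batyrevA p0 p1 p2 p3 p4 b c) h') ∩ intZ :=
  batyrev_IDP_of_convex_general p0 p1 p2 p3 p4 hp1 hp2 hp4 b c hb hc h h' hconv hconv'
end

section
/- Let n = p0+p1+p2+p3+p4-3 and let A be the Batyrev matrix determined by integers p0,p1,p2,p3,p4 ≥ 1 and nonnegative integers b_1,…,b_{p3}, c_2,…,c_{p2}. If h ∈ ℤ^{n+3} satisfies the five convexity inequalities for A, then there exist x ∈ ℤ^n and nonnegative integers d, e, f such that h + Ax equals the normalized height vector h(d,e,f) (i.e. its entry at v_1 is d, its entry at u_1 is f, its entry at z_1 is e+f, and all other entries are 0); consequently P(A,h) is an integer translate of P(A,h(d,e,f)). -/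
open Finset Pointwise

lemma sum_embSucc {n : ℕ} (hn : 1 ≤ n) (f : Fin n → ℤ) :
    ∑ k : Fin (n - 1), f (embSucc k) = (∑ j, f j) - f ⟨0, hn⟩ := by
  obtain ⟨m, rfl⟩ : ∃ m, n = m + 1 := ⟨n - 1, by omega⟩
  have h0 : (⟨0, hn⟩ : Fin (m + 1)) = 0 := rfl
  rw [h0, Fin.sum_univ_succ]
  have he : ∑ k : Fin (m + 1 - 1), f (embSucc k) = ∑ k : Fin m, f (Fin.succ k) := rfl
  rw [he]; ring

lemma sum_pick {n : ℕ} (i : Fin n) (g : Fin n → ℤ) :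
    ∑ i' : Fin n, (if (i : ℕ) = (i' : ℕ) then (1 : ℤ) else 0) * g i' = g i := by
  rw [Finset.sum_eq_single i]
  · simp
  · intro k _ hk
    have : (i : ℕ) ≠ (k : ℕ) := fun hik => hk (Fin.ext hik).symm
    simp [this]
  · simp

lemma sum_pickSucc {n : ℕ} (j : Fin n) (hj : (j : ℕ) ≠ 0) (g : Fin (n - 1) → ℤ) :
    ∑ k : Fin (n - 1), (if (j : ℕ) = (k : ℕ) + 1 then (1 : ℤ) else 0) * g k
      = g ⟨(j : ℕ) - 1, by have := j.isLt; omega⟩ := by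
  have hlt : (j : ℕ) - 1 < n - 1 := by have := j.isLt; omega
  rw [Finset.sum_eq_single (⟨(j : ℕ) - 1, hlt⟩ : Fin (n - 1))]
  · have : (j : ℕ) = ((⟨(j : ℕ) - 1, hlt⟩ : Fin (n - 1)) : ℕ) + 1 := by simp; omega
    simp [← this]
  · intro k _ hk
    have : (j : ℕ) ≠ (k : ℕ) + 1 := by
      intro he; exact hk (Fin.ext (by simp [he]))
    simp [this]
  · simp

lemma sum_if_zero {n : ℕ} (hn : 1 ≤ n) (d : ℤ) :
    ∑ i : Fin n, (if (i : ℕ) = 0 then d else 0) = d := by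
  rw [Finset.sum_eq_single (⟨0, hn⟩ : Fin n)]
  · simp
  · intro k _ hk
    have : (k : ℕ) ≠ 0 := fun h0 => hk (Fin.ext h0)
    simp [this]
  · simp

lemma polyP_translate {ι κ : Type*} [Fintype κ] (A : ι → κ → ℤ) (h h' : ι → ℤ)
    (x : κ → ℤ) (hx : ∀ i, h i + ∑ j, A i j * x j = h' i) :
    polyP A h = (fun q => q + fun j => (x j : ℝ)) '' polyP A h' := by
  have hcast : ∀ i, (h' i : ℝ) = (h i : ℝ) + ∑ j, (A i j : ℝ) * (x j : ℝ) := by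
    intro i; rw [← hx i]; push_cast; ring
  ext q
  constructor
  · intro hq
    refine ⟨fun j => q j - (x j : ℝ), fun i => ?_, ?_⟩
    · have h1 := hq i
      have h2 : ∑ j, (A i j : ℝ) * (q j - (x j : ℝ))
          = (∑ j, (A i j : ℝ) * q j) - ∑ j, (A i j : ℝ) * (x j : ℝ) := by
        rw [← Finset.sum_sub_distrib]; exact Finset.sum_congr rfl fun j _ => by ring
      rw [h2, hcast i]; linarith
    · funext j; simp
  · rintro ⟨p, hp, rfl⟩ i
    have h1 := hp i
    have h2 : ∑ j, (A i j : ℝ) * (p j + (x j : ℝ))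
        = (∑ j, (A i j : ℝ) * p j) + ∑ j, (A i j : ℝ) * (x j : ℝ) := by
      rw [← Finset.sum_add_distrib]; exact Finset.sum_congr rfl fun j _ => by ring
    show -(h i : ℝ) ≤ ∑ j, (A i j : ℝ) * (p j + (x j : ℝ))
    rw [h2]
    have := hcast i
    linarith

/-- The translation vector used to normalize a height vector. -/
def normX (p0 p1 p2 p3 p4 : ℕ) (d : ℤ) (h : BRow p0 p1 p2 p3 p4 → ℤ) :
    BCol p0 p1 p2 p3 p4 → ℤ
  | .inl (.inl i) => (if (i : ℕ) = 0 then d else 0) - h (.inl i)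
  | .inl (.inr (.inl k)) => -h (.inr (.inl (embSucc k)))
  | .inl (.inr (.inr k)) => -h (.inr (.inr (.inl (embSucc k))))
  | .inr (.inl i) => -h (.inr (.inr (.inr (.inl i))))
  | .inr (.inr k) => -h (.inr (.inr (.inr (.inr (embSucc k)))))

/-- Any height vector satisfying the five convexity inequalities
can be normalized: there are `x ∈ ℤⁿ` and `d,e,f ≥ 0` with `h + Ax = h(d,e,f)`;
consequently `P(A,h)` is an integer translate of `P(A,h(d,e,f))`. -/
theorem batyrev_normalize (p0 p1 p2 p3 p4 : ℕ)
    (hp0 : 1 ≤ p0) (hp1 : 1 ≤ p1) (hp2 : 1 ≤ p2) (hp3 : 1 ≤ p3) (hp4 : 1 ≤ p4)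
    (b : Fin p3 → ℤ) (c : Fin (p2 - 1) → ℤ)
    (hb : ∀ i, 0 ≤ b i) (hc : ∀ k, 0 ≤ c k)
    (h : BRow p0 p1 p2 p3 p4 → ℤ)
    (hconv : batyrevConvex p0 p1 p2 p3 p4 b c h) :
    ∃ (x : BCol p0 p1 p2 p3 p4 → ℤ) (d e f : ℤ),
      0 ≤ d ∧ 0 ≤ e ∧ 0 ≤ f ∧
      (∀ i, h i + ∑ j, batyrevA p0 p1 p2 p3 p4 b c i j * x j =
        batyrevH p0 p1 p2 p3 p4 d e f i) ∧
      polyP (batyrevA p0 p1 p2 p3 p4 b c) h =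
        (fun q => q + fun j => (x j : ℝ)) ''
          polyP (batyrevA p0 p1 p2 p3 p4 b c) (batyrevH p0 p1 p2 p3 p4 d e f) := by
  obtain ⟨h1, h2, h3, h4, h5⟩ := hconv
  set Hv := ∑ i, h (.inl i) with hHv
  set Hu := ∑ j, h (.inr (.inl j)) with hHu
  set Hy := ∑ j, h (.inr (.inr (.inl j))) with hHy
  set Ht := ∑ i, h (.inr (.inr (.inr (.inl i)))) with hHt
  set Hz := ∑ j, h (.inr (.inr (.inr (.inr j)))) with hHz
  set B := ∑ i, b i * h (.inr (.inr (.inr (.inl i)))) with hB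
  set C := ∑ k, c k * h (.inr (.inr (.inr (.inr (embSucc k))))) with hC
  have hBt : ∑ i, (b i + 1) * h (.inr (.inr (.inr (.inl i)))) = B + Ht := by
    rw [hB, hHt, ← Finset.sum_add_distrib]
    exact Finset.sum_congr rfl fun i _ => by ring
  rw [hBt] at h1
  set d := Hv + Hy - B - Ht - C with hd
  set e := Hz + Hy - Hu with he
  set f := Hu - Hy + Ht with hf
  set x := normX p0 p1 p2 p3 p4 d h with hx
  -- sums of x over the five column groups
  have hsv : ∑ i, x (.inl (.inl i)) = d - Hv := by
    rw [hx]; simp only [normX]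
    rw [Finset.sum_sub_distrib, sum_if_zero hp0, hHv]
  have hsu : ∑ k, x (.inl (.inr (.inl k))) = -(Hu - h (.inr (.inl ⟨0, hp4⟩))) := by
    rw [hx]; simp only [normX]
    rw [Finset.sum_neg_distrib, sum_embSucc hp4 (fun j => h (.inr (.inl j))), hHu]
  have hsy : ∑ k, x (.inl (.inr (.inr k))) = -(Hy - h (.inr (.inr (.inl ⟨0, hp1⟩)))) := by
    rw [hx]; simp only [normX]
    rw [Finset.sum_neg_distrib, sum_embSucc hp1 (fun j => h (.inr (.inr (.inl j)))), hHy]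
  have hst : ∑ i, x (.inr (.inl i)) = -Ht := by
    rw [hx]; simp only [normX]
    rw [Finset.sum_neg_distrib, hHt]
  have hsz : ∑ k, x (.inr (.inr k)) = -(Hz - h (.inr (.inr (.inr (.inr ⟨0, hp2⟩))))) := by
    rw [hx]; simp only [normX]
    rw [Finset.sum_neg_distrib,
      sum_embSucc hp2 (fun j => h (.inr (.inr (.inr (.inr j))))), hHz]
  have hsbt : ∑ i, b i * x (.inr (.inl i)) = -B := by
    rw [hx]; simp only [normX, mul_neg]
    rw [Finset.sum_neg_distrib, hB]
  have hsb1t : ∑ i, (b i + 1) * x (.inr (.inl i)) = -(B + Ht) := by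
    rw [hx]; simp only [normX, mul_neg]
    rw [Finset.sum_neg_distrib, ← hBt]
  have hsct : ∑ k, c k * x (.inr (.inr k)) = -C := by
    rw [hx]; simp only [normX, mul_neg]
    rw [Finset.sum_neg_distrib, hC]
  have key : ∀ i, h i + ∑ j, batyrevA p0 p1 p2 p3 p4 b c i j * x j =
      batyrevH p0 p1 p2 p3 p4 d e f i := by
    rintro (i | j | j | i | j)
    · -- row v_i
      simp only [batyrevA, batyrevH, Fintype.sum_sum_type, zero_mul,
        Finset.sum_const_zero, add_zero]
      rw [sum_pick i (fun i' => x (.inl (.inl i')))]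
      rw [hx]; simp only [normX]; ring
    · -- row u_j
      by_cases hj : (j : ℕ) = 0
      · have hj0 : j = ⟨0, hp4⟩ := Fin.ext hj
        subst hj0
        simp only [batyrevA, batyrevH, Fintype.sum_sum_type, if_pos, zero_mul,
          Finset.sum_const_zero, neg_one_mul, add_zero, zero_add]
        rw [Finset.sum_neg_distrib, Finset.sum_neg_distrib, hsv, hsu, hsbt, hsct]
        rw [hd, hf]; ring
      · simp only [batyrevA, batyrevH, Fintype.sum_sum_type, if_neg hj, zero_mul,
          Finset.sum_const_zero, add_zero, zero_add]
        rw [sum_pickSucc j hj (fun k => x (.inl (.inr (.inl k))))]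
        have hemb : ∀ hlt, (embSucc (⟨(j : ℕ) - 1, hlt⟩ : Fin (p4 - 1)) : Fin p4) = j :=
          fun hlt => Fin.ext (by simp [embSucc]; omega)
        rw [hx]; simp only [normX]
        rw [hemb]; ring
    · -- row y_j
      by_cases hj : (j : ℕ) = 0
      · have hj0 : j = ⟨0, hp1⟩ := Fin.ext hj
        subst hj0
        simp only [batyrevA, batyrevH, Fintype.sum_sum_type, if_pos, zero_mul,
          Finset.sum_const_zero, neg_one_mul, add_zero, zero_add]
        rw [Finset.sum_neg_distrib, Finset.sum_neg_distrib, hsv, hsy, hsb1t, hsct]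
        rw [hd]; ring
      · simp only [batyrevA, batyrevH, Fintype.sum_sum_type, if_neg hj, zero_mul,
          Finset.sum_const_zero, add_zero, zero_add]
        rw [sum_pickSucc j hj (fun k => x (.inl (.inr (.inr k))))]
        have hemb : ∀ hlt, (embSucc (⟨(j : ℕ) - 1, hlt⟩ : Fin (p1 - 1)) : Fin p1) = j :=
          fun hlt => Fin.ext (by simp [embSucc]; omega)
        rw [hx]; simp only [normX]
        rw [hemb]; ring
    · -- row t_i
      simp only [batyrevA, batyrevH, Fintype.sum_sum_type, zero_mul,
        Finset.sum_const_zero, add_zero, zero_add]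
      rw [sum_pick i (fun i' => x (.inr (.inl i')))]
      rw [hx]; simp only [normX]; ring
    · -- row z_j
      by_cases hj : (j : ℕ) = 0
      · have hj0 : j = ⟨0, hp2⟩ := Fin.ext hj
        subst hj0
        simp only [batyrevA, batyrevH, Fintype.sum_sum_type, if_pos, zero_mul,
          Finset.sum_const_zero, neg_one_mul, add_zero, zero_add]
        rw [Finset.sum_neg_distrib, Finset.sum_neg_distrib, hst, hsz]
        rw [he, hf]; ring
      · simp only [batyrevA, batyrevH, Fintype.sum_sum_type, if_neg hj, zero_mul,
          Finset.sum_const_zero, add_zero, zero_add]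
        rw [sum_pickSucc j hj (fun k => x (.inr (.inr k)))]
        have hemb : ∀ hlt, (embSucc (⟨(j : ℕ) - 1, hlt⟩ : Fin (p2 - 1)) : Fin p2) = j :=
          fun hlt => Fin.ext (by simp [embSucc]; omega)
        rw [hx]; simp only [normX]
        rw [hemb]; ring
  refine ⟨x, d, e, f, by rw [hd]; linarith, by rw [he]; linarith, by rw [hf]; linarith,
    key, polyP_translate _ _ _ _ key⟩
end

section
/- Let n = p0+p1+p2+p3+p4-3 and let A be the Batyrev matrix determined by integers p0,p1,p2,p3,p4 ≥ 1 and nonnegative integers b_1,…,b_{p3}, c_2,…,c_{p2}. Let d,e,f,d',e',f' be nonnegative integers and let h = h(d,e,f), h' = h(d',e',f') be the corresponding normalized height vectors. Then the Minkowski sum of the two polytopes equals the polytope of the summed heights: P(A,h) + P(A,h') = P(A, h + h'). -/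
open Finset Pointwise

section Rows
variable {p0 p1 p2 p3 p4 : ℕ} (b : Fin p3 → ℤ) (c : Fin (p2 - 1) → ℤ)
  (x : BCol p0 p1 p2 p3 p4 → ℝ)

lemma rowsum_v (i : Fin p0) :
    ∑ j, ((batyrevA p0 p1 p2 p3 p4 b c (.inl i) j : ℤ) : ℝ) * x j = x (.inl (.inl i)) := by
  rw [Fintype.sum_sum_type, Fintype.sum_sum_type, Fintype.sum_sum_type, Fintype.sum_sum_type]
  simp [batyrevA, Fin.val_eq_val]

lemma rowsum_u0 (j : Fin p4) (hj : (j : ℕ) = 0) :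
    ∑ j', ((batyrevA p0 p1 p2 p3 p4 b c (.inr (.inl j)) j' : ℤ) : ℝ) * x j' =
      -∑ i, x (.inl (.inl i)) - ∑ j', x (.inl (.inr (.inl j')))
        + ∑ i, (b i : ℝ) * x (.inr (.inl i)) + ∑ k, (c k : ℝ) * x (.inr (.inr k)) := by
  rw [Fintype.sum_sum_type, Fintype.sum_sum_type, Fintype.sum_sum_type, Fintype.sum_sum_type]
  simp [batyrevA, hj, Finset.sum_neg_distrib]
  ring

lemma rowsum_usucc (j' : Fin (p4 - 1)) (h : (j' : ℕ) + 1 < p4) :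
    ∑ j'', ((batyrevA p0 p1 p2 p3 p4 b c (.inr (.inl ⟨(j' : ℕ) + 1, h⟩)) j'' : ℤ) : ℝ) * x j'' =
      x (.inl (.inr (.inl j'))) := by
  rw [Fintype.sum_sum_type, Fintype.sum_sum_type, Fintype.sum_sum_type, Fintype.sum_sum_type]
  simp only [batyrevA]
  simp only [Fin.val_mk, Nat.succ_ne_zero, if_false, Nat.add_right_cancel_iff, Fin.val_eq_val]
  simp

end Rows
section Rows2
variable {p0 p1 p2 p3 p4 : ℕ} (b : Fin p3 → ℤ) (c : Fin (p2 - 1) → ℤ)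
  (x : BCol p0 p1 p2 p3 p4 → ℝ)

lemma rowsum_y0 (j : Fin p1) (hj : (j : ℕ) = 0) :
    ∑ j', ((batyrevA p0 p1 p2 p3 p4 b c (.inr (.inr (.inl j))) j' : ℤ) : ℝ) * x j' =
      -∑ i, x (.inl (.inl i)) - ∑ j', x (.inl (.inr (.inr j')))
        + ∑ i, ((b i : ℝ) + 1) * x (.inr (.inl i)) + ∑ k, (c k : ℝ) * x (.inr (.inr k)) := by
  rw [Fintype.sum_sum_type, Fintype.sum_sum_type, Fintype.sum_sum_type, Fintype.sum_sum_type]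
  simp [batyrevA, hj]
  ring

lemma rowsum_ysucc (j' : Fin (p1 - 1)) (h : (j' : ℕ) + 1 < p1) :
    ∑ j'', ((batyrevA p0 p1 p2 p3 p4 b c (.inr (.inr (.inl ⟨(j' : ℕ) + 1, h⟩))) j'' : ℤ) : ℝ) * x j'' =
      x (.inl (.inr (.inr j'))) := by
  rw [Fintype.sum_sum_type, Fintype.sum_sum_type, Fintype.sum_sum_type, Fintype.sum_sum_type]
  simp only [batyrevA]
  simp only [Fin.val_mk, Nat.succ_ne_zero, if_false, Nat.add_right_cancel_iff, Fin.val_eq_val]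
  simp

lemma rowsum_t (i : Fin p3) :
    ∑ j, ((batyrevA p0 p1 p2 p3 p4 b c (.inr (.inr (.inr (.inl i)))) j : ℤ) : ℝ) * x j =
      x (.inr (.inl i)) := by
  rw [Fintype.sum_sum_type, Fintype.sum_sum_type, Fintype.sum_sum_type, Fintype.sum_sum_type]
  simp [batyrevA, Fin.val_eq_val]

lemma rowsum_z0 (j : Fin p2) (hj : (j : ℕ) = 0) :
    ∑ j', ((batyrevA p0 p1 p2 p3 p4 b c (.inr (.inr (.inr (.inr j)))) j' : ℤ) : ℝ) * x j' =
      -∑ i, x (.inr (.inl i)) - ∑ k, x (.inr (.inr k)) := by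
  rw [Fintype.sum_sum_type, Fintype.sum_sum_type, Fintype.sum_sum_type, Fintype.sum_sum_type]
  simp [batyrevA, hj]
  ring

lemma rowsum_zsucc (j' : Fin (p2 - 1)) (h : (j' : ℕ) + 1 < p2) :
    ∑ j'', ((batyrevA p0 p1 p2 p3 p4 b c (.inr (.inr (.inr (.inr ⟨(j' : ℕ) + 1, h⟩)))) j'' : ℤ) : ℝ) * x j'' =
      x (.inr (.inr j')) := by
  rw [Fintype.sum_sum_type, Fintype.sum_sum_type, Fintype.sum_sum_type, Fintype.sum_sum_type]
  simp only [batyrevA]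
  simp only [Fin.val_mk, Nat.succ_ne_zero, if_false, Nat.add_right_cancel_iff, Fin.val_eq_val]
  simp

end Rows2
section Pred
variable {p0 p1 p2 p3 p4 : ℕ}

/-- Explicit inequality description of membership in the Batyrev polytope. -/
def BPred (p0 p1 p2 p3 p4 : ℕ) (b : Fin p3 → ℤ) (c : Fin (p2 - 1) → ℤ) (d e f : ℤ)
    (x : BCol p0 p1 p2 p3 p4 → ℝ) : Prop :=
  (∀ i : Fin p0, -(if (i : ℕ) = 0 then (d : ℝ) else 0) ≤ x (.inl (.inl i))) ∧
  (∀ j, 0 ≤ x (.inl (.inr (.inl j)))) ∧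
  (∀ j, 0 ≤ x (.inl (.inr (.inr j)))) ∧
  (∀ i, 0 ≤ x (.inr (.inl i))) ∧
  (∀ k, 0 ≤ x (.inr (.inr k))) ∧
  (-(f : ℝ) ≤ -∑ i, x (.inl (.inl i)) - ∑ j', x (.inl (.inr (.inl j')))
      + ∑ i, (b i : ℝ) * x (.inr (.inl i)) + ∑ k, (c k : ℝ) * x (.inr (.inr k))) ∧
  (0 ≤ -∑ i, x (.inl (.inl i)) - ∑ j', x (.inl (.inr (.inr j')))
      + ∑ i, ((b i : ℝ) + 1) * x (.inr (.inl i)) + ∑ k, (c k : ℝ) * x (.inr (.inr k))) ∧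
  (-((e : ℝ) + f) ≤ -∑ i, x (.inr (.inl i)) - ∑ k, x (.inr (.inr k)))

lemma mem_polyP_iff_BPred (hp4 : 1 ≤ p4) (hp1 : 1 ≤ p1) (hp2 : 1 ≤ p2)
    (b : Fin p3 → ℤ) (c : Fin (p2 - 1) → ℤ) (d e f : ℤ) (x : BCol p0 p1 p2 p3 p4 → ℝ) :
    x ∈ polyP (batyrevA p0 p1 p2 p3 p4 b c) (batyrevH p0 p1 p2 p3 p4 d e f) ↔
      BPred p0 p1 p2 p3 p4 b c d e f x := by
  constructor
  · intro H
    refine ⟨fun i => ?_, fun j => ?_, fun j => ?_, fun i => ?_, fun k => ?_, ?_, ?_, ?_⟩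
    · have := H (.inl i); rw [rowsum_v] at this
      simpa [batyrevH, apply_ite (fun z : ℤ => (z : ℝ))] using this
    · have hlt : (j : ℕ) + 1 < p4 := by omega
      have := H (.inr (.inl ⟨(j : ℕ) + 1, hlt⟩))
      rw [rowsum_usucc b c x j hlt] at this
      simpa [batyrevH] using this
    · have hlt : (j : ℕ) + 1 < p1 := by omega
      have := H (.inr (.inr (.inl ⟨(j : ℕ) + 1, hlt⟩)))
      rw [rowsum_ysucc b c x j hlt] at this
      simpa [batyrevH] using this
    · have := H (.inr (.inr (.inr (.inl i)))); rw [rowsum_t] at this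
      simpa [batyrevH] using this
    · have hlt : (k : ℕ) + 1 < p2 := by omega
      have := H (.inr (.inr (.inr (.inr ⟨(k : ℕ) + 1, hlt⟩))))
      rw [rowsum_zsucc b c x k hlt] at this
      simpa [batyrevH] using this
    · have := H (.inr (.inl ⟨0, hp4⟩))
      rw [rowsum_u0 b c x _ rfl] at this
      simpa [batyrevH] using this
    · have := H (.inr (.inr (.inl ⟨0, hp1⟩)))
      rw [rowsum_y0 b c x _ rfl] at this
      simpa [batyrevH] using this
    · have := H (.inr (.inr (.inr (.inr ⟨0, hp2⟩))))
      rw [rowsum_z0 b c x _ rfl] at this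
      simpa [batyrevH] using this
  · rintro ⟨h1, h2, h3, h4, h5, h6, h7, h8⟩ i
    match i with
    | .inl i =>
        rw [rowsum_v]
        simpa [batyrevH, apply_ite (fun z : ℤ => (z : ℝ))] using h1 i
    | .inr (.inl j) =>
        rcases Nat.eq_zero_or_pos (j : ℕ) with hj | hj
        · rw [rowsum_u0 b c x j hj]; simpa [batyrevH, hj] using h6
        · have hlt : ((j : ℕ) - 1) + 1 < p4 := by omega
          have hje : j = ⟨((⟨(j : ℕ) - 1, by omega⟩ : Fin (p4 - 1)) : ℕ) + 1, hlt⟩ := by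
            apply Fin.ext; simp; omega
          rw [hje, rowsum_usucc b c x _ hlt]
          simpa [batyrevH] using h2 _
    | .inr (.inr (.inl j)) =>
        rcases Nat.eq_zero_or_pos (j : ℕ) with hj | hj
        · rw [rowsum_y0 b c x j hj]; simpa [batyrevH, hj] using h7
        · have hlt : ((j : ℕ) - 1) + 1 < p1 := by omega
          have hje : j = ⟨((⟨(j : ℕ) - 1, by omega⟩ : Fin (p1 - 1)) : ℕ) + 1, hlt⟩ := by
            apply Fin.ext; simp; omega
          rw [hje, rowsum_ysucc b c x _ hlt]
          simpa [batyrevH] using h3 _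
    | .inr (.inr (.inr (.inl i))) =>
        rw [rowsum_t]; simpa [batyrevH] using h4 i
    | .inr (.inr (.inr (.inr j))) =>
        rcases Nat.eq_zero_or_pos (j : ℕ) with hj | hj
        · rw [rowsum_z0 b c x j hj]; simpa [batyrevH, hj] using h8
        · have hlt : ((j : ℕ) - 1) + 1 < p2 := by omega
          have hje : j = ⟨((⟨(j : ℕ) - 1, by omega⟩ : Fin (p2 - 1)) : ℕ) + 1, hlt⟩ := by
            apply Fin.ext; simp; omega
          rw [hje, rowsum_zsucc b c x _ hlt]
          simpa [batyrevH] using h5 _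

end Pred
section Add
variable {p0 p1 p2 p3 p4 : ℕ}

lemma batyrevH_add (d e f d' e' f' : ℤ) :
    (fun i => batyrevH p0 p1 p2 p3 p4 d e f i + batyrevH p0 p1 p2 p3 p4 d' e' f' i) =
      batyrevH p0 p1 p2 p3 p4 (d + d') (e + e') (f + f') := by
  funext i
  match i with
  | .inl i => simp only [batyrevH]; split_ifs <;> ring
  | .inr (.inl j) => simp only [batyrevH]; split_ifs <;> ring
  | .inr (.inr (.inl j)) => simp only [batyrevH]; ring
  | .inr (.inr (.inr (.inl i))) => simp only [batyrevH]; ring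
  | .inr (.inr (.inr (.inr j))) => simp only [batyrevH]; split_ifs <;> ring

lemma sum_ite_zero {m : ℕ} (hm : 1 ≤ m) (D : ℝ) :
    ∑ i : Fin m, (if (i : ℕ) = 0 then D else 0) = D := by
  have h : ∀ i : Fin m, (if (i : ℕ) = 0 then D else 0) = (if i = ⟨0, hm⟩ then D else 0) :=
    fun i => by congr 1; simp [Fin.ext_iff]
  rw [Finset.sum_congr rfl fun i _ => h i, Finset.sum_ite_eq' Finset.univ]
  simp

lemma scale_spec (S t : ℝ) (hS : 0 ≤ S) (ht0 : 0 ≤ t) (htS : t ≤ S) :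
    0 ≤ (if S = 0 then 0 else t / S) ∧ (if S = 0 then 0 else t / S) ≤ 1 ∧
      (if S = 0 then 0 else t / S) * S = t := by
  split_ifs with h
  · subst h
    refine ⟨le_refl _, zero_le_one, ?_⟩
    have : t = 0 := le_antisymm htS ht0
    simp [this]
  · have hS' : 0 < S := lt_of_le_of_ne hS (Ne.symm h)
    exact ⟨div_nonneg ht0 hS, (div_le_one hS').mpr htS, div_mul_cancel₀ t h⟩

lemma BPred_add (b : Fin p3 → ℤ) (c : Fin (p2 - 1) → ℤ) (d e f d' e' f' : ℤ)
    {y y' : BCol p0 p1 p2 p3 p4 → ℝ}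
    (hy : BPred p0 p1 p2 p3 p4 b c d e f y) (hy' : BPred p0 p1 p2 p3 p4 b c d' e' f' y') :
    BPred p0 p1 p2 p3 p4 b c (d + d') (e + e') (f + f') (y + y') := by
  obtain ⟨a1, a2, a3, a4, a5, a6, a7, a8⟩ := hy
  obtain ⟨b1, b2, b3, b4, b5, b6, b7, b8⟩ := hy'
  refine ⟨fun i => ?_, fun j => ?_, fun j => ?_, fun i => ?_, fun k => ?_, ?_, ?_, ?_⟩
  · have h1 := a1 i; have h2 := b1 i
    simp only [Pi.add_apply]
    split_ifs at h1 h2 ⊢ with hc <;> push_cast <;> linarith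
  · simpa using add_nonneg (a2 j) (b2 j)
  · simpa using add_nonneg (a3 j) (b3 j)
  · simpa using add_nonneg (a4 i) (b4 i)
  · simpa using add_nonneg (a5 k) (b5 k)
  · simp only [Pi.add_apply, mul_add, Finset.sum_add_distrib]
    push_cast
    linarith
  · simp only [Pi.add_apply, mul_add, Finset.sum_add_distrib]
    linarith
  · simp only [Pi.add_apply, Finset.sum_add_distrib]
    push_cast
    linarith

end Add
set_option maxHeartbeats 1000000 in
/-- The scalar core of the decomposition: existence of the five scaling factors. -/
lemma scalar_decomp (Sv Su Sw g Z Bt Bz d e f d' e' f' : ℝ)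
    (hSu0 : 0 ≤ Su) (hSw0 : 0 ≤ Sw) (hg0 : 0 ≤ g) (hZ0 : 0 ≤ Z)
    (hBt0 : 0 ≤ Bt) (hBz0 : 0 ≤ Bz)
    (hd : 0 ≤ d) (he : 0 ≤ e) (hf : 0 ≤ f) (hd' : 0 ≤ d') (he' : 0 ≤ e') (hf' : 0 ≤ f')
    (hSv : -(d + d') ≤ Sv)
    (h6 : Sv + Su ≤ f + f' + Bt + Bz)
    (h7 : Sv + Sw ≤ Bt + g + Bz)
    (h8 : g + Z ≤ e + e' + f + f') :
    ∃ θt θz τ θu θw : ℝ,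
      0 ≤ θt ∧ θt ≤ 1 ∧ 0 ≤ θz ∧ θz ≤ 1 ∧ 0 ≤ τ ∧ τ ≤ 1 ∧ 0 ≤ θu ∧ θu ≤ 1 ∧
      0 ≤ θw ∧ θw ≤ 1 ∧
      θt * g + θz * Z ≤ e + f ∧
      (g - θt * g) + (Z - θz * Z) ≤ e' + f' ∧
      (τ * (Sv + d + d') - d) + θu * Su ≤ f + (θt * Bt + θz * Bz) ∧
      (Sv - (τ * (Sv + d + d') - d)) + (Su - θu * Su) ≤
        f' + ((Bt - θt * Bt) + (Bz - θz * Bz)) ∧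
      (τ * (Sv + d + d') - d) + θw * Sw ≤ (θt * Bt + θz * Bz) + θt * g ∧
      (Sv - (τ * (Sv + d + d') - d)) + (Sw - θw * Sw) ≤
        ((Bt - θt * Bt) + (Bz - θz * Bz)) + (g - θt * g) := by
  set K := Sv - (Bt + Bz) with hKdef
  have hKg : K ≤ g := by linarith
  have hKF : K ≤ f + f' := by linarith
  set s := max 0 (max (K - f') (g - e' - f')) with hsdef
  have hs0 : 0 ≤ s := le_max_left _ _
  have hsKf : K - f' ≤ s := le_trans (le_max_left _ _) (le_max_right _ _)
  have hsg' : g - e' - f' ≤ s := le_trans (le_max_right _ _) (le_max_right _ _)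
  have hsg : s ≤ g := max_le hg0 (max_le (by linarith) (by linarith))
  have hsef : s ≤ e + f := max_le (by linarith) (max_le (by linarith) (by linarith))
  have hsKgf : s ≤ g + f - K := max_le (by linarith) (max_le (by linarith) (by linarith))
  set r := max 0 (g + Z - s - e' - f') with hrdef
  have hr0 : 0 ≤ r := le_max_left _ _
  have hrlb : g + Z - s - e' - f' ≤ r := le_max_right _ _
  have hrZ : r ≤ Z := max_le hZ0 (by linarith)
  have hsr : s + r ≤ e + f := by
    have h : r ≤ e + f - s := max_le (by linarith) (by linarith)
    linarith
  obtain ⟨hθt0, hθt1, hθtg⟩ := scale_spec g s hg0 hs0 hsg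
  set θt := if g = 0 then 0 else s / g with hθtdef
  obtain ⟨hθz0, hθz1, hθzZ⟩ := scale_spec Z r hZ0 hr0 hrZ
  set θz := if Z = 0 then 0 else r / Z with hθzdef
  set By := θt * Bt + θz * Bz with hBydef
  have hBy0 : 0 ≤ By := add_nonneg (mul_nonneg hθt0 hBt0) (mul_nonneg hθz0 hBz0)
  have hByB : By ≤ Bt + Bz := by
    have h1 : θt * Bt ≤ Bt := by nlinarith
    have h2 : θz * Bz ≤ Bz := by nlinarith
    linarith
  set a := max (-d) (max (Sv - f' - (Bt + Bz - By)) (Sv - ((Bt + Bz - By) + (g - s))))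
    with hadef
  have ha_d : -d ≤ a := le_max_left _ _
  have ha2 : Sv - f' - (Bt + Bz - By) ≤ a := le_trans (le_max_left _ _) (le_max_right _ _)
  have ha3 : Sv - ((Bt + Bz - By) + (g - s)) ≤ a :=
    le_trans (le_max_right _ _) (le_max_right _ _)
  have ha_ub : a ≤ Sv + d' := max_le (by linarith) (max_le (by linarith) (by linarith))
  have ha_f : a ≤ f + By := max_le (by linarith) (max_le (by linarith) (by linarith))
  have ha_s : a ≤ By + s := max_le (by linarith) (max_le (by linarith) (by linarith))
  obtain ⟨hτ0, hτ1, hτS⟩ := scale_spec (Sv + d + d') (a + d) (by linarith) (by linarith)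
    (by linarith)
  set τ := if Sv + d + d' = 0 then 0 else (a + d) / (Sv + d + d') with hτdef
  set p := max 0 (Sv + Su - a - f' - (Bt + Bz - By)) with hpdef
  have hp0' : 0 ≤ p := le_max_left _ _
  have hplb : Sv + Su - a - f' - (Bt + Bz - By) ≤ p := le_max_right _ _
  have hpSu : p ≤ Su := max_le hSu0 (by linarith)
  have hpub : p ≤ f + By - a := max_le (by linarith) (by linarith)
  obtain ⟨hθu0, hθu1, hθuS⟩ := scale_spec Su p hSu0 hp0' hpSu
  set θu := if Su = 0 then 0 else p / Su with hθudef
  set q := max 0 (Sv + Sw - a - ((Bt + Bz - By) + (g - s))) with hqdef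
  have hq0 : 0 ≤ q := le_max_left _ _
  have hqlb : Sv + Sw - a - ((Bt + Bz - By) + (g - s)) ≤ q := le_max_right _ _
  have hqSw : q ≤ Sw := max_le hSw0 (by linarith)
  have hqub : q ≤ By + s - a := max_le (by linarith) (by linarith)
  obtain ⟨hθw0, hθw1, hθwS⟩ := scale_spec Sw q hSw0 hq0 hqSw
  set θw := if Sw = 0 then 0 else q / Sw with hθwdef
  refine ⟨θt, θz, τ, θu, θw, hθt0, hθt1, hθz0, hθz1, hτ0, hτ1, hθu0, hθu1, hθw0, hθw1,
    ?_, ?_, ?_, ?_, ?_, ?_⟩ <;> linarith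
section Decomp
variable {p0 p1 p2 p3 p4 : ℕ}

set_option maxHeartbeats 2000000 in
lemma BPred_decomp (hp0 : 1 ≤ p0)
    (b : Fin p3 → ℤ) (c : Fin (p2 - 1) → ℤ)
    (hb : ∀ i, 0 ≤ b i) (hc : ∀ k, 0 ≤ c k)
    (d e f d' e' f' : ℤ)
    (hd : 0 ≤ d) (he : 0 ≤ e) (hf : 0 ≤ f)
    (hd' : 0 ≤ d') (he' : 0 ≤ e') (hf' : 0 ≤ f')
    (x : BCol p0 p1 p2 p3 p4 → ℝ)
    (hx : BPred p0 p1 p2 p3 p4 b c (d + d') (e + e') (f + f') x) :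
    ∃ y y', BPred p0 p1 p2 p3 p4 b c d e f y ∧ BPred p0 p1 p2 p3 p4 b c d' e' f' y' ∧
      y + y' = x := by
  classical
  obtain ⟨hx1, hx2, hx3, hx4, hx5, hx6, hx7, hx8⟩ := hx
  push_cast at hx6 hx7 hx8
  have hx1' : ∀ i : Fin p0,
      -(if (i : ℕ) = 0 then (d : ℝ) + d' else 0) ≤ x (Sum.inl (Sum.inl i)) := by
    intro i
    have h := hx1 i
    split_ifs at h ⊢ with hcond <;> push_cast at h <;> linarith
  have hsplit : ∑ i, ((b i : ℝ) + 1) * x (Sum.inr (Sum.inl i)) =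
      (∑ i, (b i : ℝ) * x (Sum.inr (Sum.inl i))) + ∑ i, x (Sum.inr (Sum.inl i)) := by
    simp [add_mul, Finset.sum_add_distrib]
  rw [hsplit] at hx7
  have hd0 : (0:ℝ) ≤ d := by exact_mod_cast hd
  have he0 : (0:ℝ) ≤ e := by exact_mod_cast he
  have hf0 : (0:ℝ) ≤ f := by exact_mod_cast hf
  have hd0' : (0:ℝ) ≤ d' := by exact_mod_cast hd'
  have he0' : (0:ℝ) ≤ e' := by exact_mod_cast he'
  have hf0' : (0:ℝ) ≤ f' := by exact_mod_cast hf'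
  have hSv : -((d : ℝ) + d') ≤ ∑ i, x (Sum.inl (Sum.inl i)) := by
    have h1 : ∑ i : Fin p0, -(if (i : ℕ) = 0 then (d : ℝ) + d' else 0) ≤
        ∑ i, x (Sum.inl (Sum.inl i)) := Finset.sum_le_sum fun i _ => hx1' i
    rwa [Finset.sum_neg_distrib, sum_ite_zero hp0] at h1
  obtain ⟨θt, θz, τ, θu, θw, ht0, ht1, hz0, hz1, hτ0, hτ1, hu0, hu1, hw0, hw1,
      G1, G2, G3, G4, G5, G6⟩ :=
    scalar_decomp (∑ i, x (Sum.inl (Sum.inl i))) (∑ j, x (Sum.inl (Sum.inr (Sum.inl j))))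
      (∑ j, x (Sum.inl (Sum.inr (Sum.inr j)))) (∑ i, x (Sum.inr (Sum.inl i)))
      (∑ k, x (Sum.inr (Sum.inr k))) (∑ i, (b i : ℝ) * x (Sum.inr (Sum.inl i)))
      (∑ k, (c k : ℝ) * x (Sum.inr (Sum.inr k))) d e f d' e' f'
      (Finset.sum_nonneg fun j _ => hx2 j) (Finset.sum_nonneg fun j _ => hx3 j)
      (Finset.sum_nonneg fun i _ => hx4 i) (Finset.sum_nonneg fun k _ => hx5 k)
      (Finset.sum_nonneg fun i _ => mul_nonneg (by exact_mod_cast hb i) (hx4 i))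
      (Finset.sum_nonneg fun k _ => mul_nonneg (by exact_mod_cast hc k) (hx5 k))
      hd0 he0 hf0 hd0' he0' hf0' hSv (by linarith) (by linarith) (by linarith)
  -- the two summands
  refine ⟨fun col => Sum.elim (Sum.elim
      (fun i => τ * (x (Sum.inl (Sum.inl i)) + (if (i : ℕ) = 0 then (d : ℝ) + d' else 0))
        - (if (i : ℕ) = 0 then (d : ℝ) else 0))
      (Sum.elim (fun j => θu * x (Sum.inl (Sum.inr (Sum.inl j))))
        (fun j => θw * x (Sum.inl (Sum.inr (Sum.inr j))))))
      (Sum.elim (fun i => θt * x (Sum.inr (Sum.inl i)))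
        (fun k => θz * x (Sum.inr (Sum.inr k)))) col,
    fun col => Sum.elim (Sum.elim
      (fun i => (1 - τ) * (x (Sum.inl (Sum.inl i)) + (if (i : ℕ) = 0 then (d : ℝ) + d' else 0))
        - (if (i : ℕ) = 0 then (d' : ℝ) else 0))
      (Sum.elim (fun j => (1 - θu) * x (Sum.inl (Sum.inr (Sum.inl j))))
        (fun j => (1 - θw) * x (Sum.inl (Sum.inr (Sum.inr j))))))
      (Sum.elim (fun i => (1 - θt) * x (Sum.inr (Sum.inl i)))
        (fun k => (1 - θz) * x (Sum.inr (Sum.inr k)))) col, ?_, ?_, ?_⟩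
  · refine ⟨fun i => ?_, fun j => ?_, fun j => ?_, fun i => ?_, fun k => ?_, ?_, ?_, ?_⟩
    · simp only [Sum.elim_inl]
      have h := hx1' i
      split_ifs with hcond
    -- case (i:ℕ) = 0
      · rw [if_pos hcond] at h
        have := mul_nonneg hτ0 (by linarith : (0:ℝ) ≤ x (Sum.inl (Sum.inl i)) + ((d:ℝ) + d'))
        linarith
      · rw [if_neg hcond] at h
        have := mul_nonneg hτ0 (by linarith : (0:ℝ) ≤ x (Sum.inl (Sum.inl i)) + 0)
        push_cast
        linarith
    · simpa using mul_nonneg hu0 (hx2 j)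
    · simpa using mul_nonneg hw0 (hx3 j)
    · simpa using mul_nonneg ht0 (hx4 i)
    · simpa using mul_nonneg hz0 (hx5 k)
    · simp only [Sum.elim_inl, Sum.elim_inr]
      rw [Finset.sum_sub_distrib, ← Finset.mul_sum, Finset.sum_add_distrib,
        sum_ite_zero hp0, sum_ite_zero hp0, ← Finset.mul_sum,
        Finset.sum_congr rfl (fun i _ => by ring :
          ∀ i ∈ Finset.univ, (b i : ℝ) * (θt * x (Sum.inr (Sum.inl i))) =
            θt * ((b i : ℝ) * x (Sum.inr (Sum.inl i)))), ← Finset.mul_sum,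
        Finset.sum_congr rfl (fun k _ => by ring :
          ∀ k ∈ Finset.univ, (c k : ℝ) * (θz * x (Sum.inr (Sum.inr k))) =
            θz * ((c k : ℝ) * x (Sum.inr (Sum.inr k)))), ← Finset.mul_sum]
      linarith
    · simp only [Sum.elim_inl, Sum.elim_inr]
      rw [Finset.sum_sub_distrib, ← Finset.mul_sum, Finset.sum_add_distrib,
        sum_ite_zero hp0, sum_ite_zero hp0, ← Finset.mul_sum,
        Finset.sum_congr rfl (fun i _ => by ring :
          ∀ i ∈ Finset.univ, ((b i : ℝ) + 1) * (θt * x (Sum.inr (Sum.inl i))) =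
            θt * (((b i : ℝ) + 1) * x (Sum.inr (Sum.inl i)))), ← Finset.mul_sum, hsplit,
        Finset.sum_congr rfl (fun k _ => by ring :
          ∀ k ∈ Finset.univ, (c k : ℝ) * (θz * x (Sum.inr (Sum.inr k))) =
            θz * ((c k : ℝ) * x (Sum.inr (Sum.inr k)))), ← Finset.mul_sum]
      linarith
    · simp only [Sum.elim_inl, Sum.elim_inr]
      rw [← Finset.mul_sum, ← Finset.mul_sum]
      push_cast
      linarith
  · refine ⟨fun i => ?_, fun j => ?_, fun j => ?_, fun i => ?_, fun k => ?_, ?_, ?_, ?_⟩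
    · simp only [Sum.elim_inl]
      have h := hx1' i
      split_ifs with hcond
      · rw [if_pos hcond] at h
        have := mul_nonneg (by linarith : (0:ℝ) ≤ 1 - τ)
          (by linarith : (0:ℝ) ≤ x (Sum.inl (Sum.inl i)) + ((d:ℝ) + d'))
        linarith
      · rw [if_neg hcond] at h
        have := mul_nonneg (by linarith : (0:ℝ) ≤ 1 - τ)
          (by linarith : (0:ℝ) ≤ x (Sum.inl (Sum.inl i)) + 0)
        push_cast
        linarith
    · simpa using mul_nonneg (by linarith : (0:ℝ) ≤ 1 - θu) (hx2 j)
    · simpa using mul_nonneg (by linarith : (0:ℝ) ≤ 1 - θw) (hx3 j)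
    · simpa using mul_nonneg (by linarith : (0:ℝ) ≤ 1 - θt) (hx4 i)
    · simpa using mul_nonneg (by linarith : (0:ℝ) ≤ 1 - θz) (hx5 k)
    · simp only [Sum.elim_inl, Sum.elim_inr]
      rw [Finset.sum_sub_distrib, ← Finset.mul_sum, Finset.sum_add_distrib,
        sum_ite_zero hp0, sum_ite_zero hp0, ← Finset.mul_sum,
        Finset.sum_congr rfl (fun i _ => by ring :
          ∀ i ∈ Finset.univ, (b i : ℝ) * ((1 - θt) * x (Sum.inr (Sum.inl i))) =
            (1 - θt) * ((b i : ℝ) * x (Sum.inr (Sum.inl i)))), ← Finset.mul_sum,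
        Finset.sum_congr rfl (fun k _ => by ring :
          ∀ k ∈ Finset.univ, (c k : ℝ) * ((1 - θz) * x (Sum.inr (Sum.inr k))) =
            (1 - θz) * ((c k : ℝ) * x (Sum.inr (Sum.inr k)))), ← Finset.mul_sum]
      nlinarith [G4]
    · simp only [Sum.elim_inl, Sum.elim_inr]
      rw [Finset.sum_sub_distrib, ← Finset.mul_sum, Finset.sum_add_distrib,
        sum_ite_zero hp0, sum_ite_zero hp0, ← Finset.mul_sum,
        Finset.sum_congr rfl (fun i _ => by ring :
          ∀ i ∈ Finset.univ, ((b i : ℝ) + 1) * ((1 - θt) * x (Sum.inr (Sum.inl i))) =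
            (1 - θt) * (((b i : ℝ) + 1) * x (Sum.inr (Sum.inl i)))), ← Finset.mul_sum, hsplit,
        Finset.sum_congr rfl (fun k _ => by ring :
          ∀ k ∈ Finset.univ, (c k : ℝ) * ((1 - θz) * x (Sum.inr (Sum.inr k))) =
            (1 - θz) * ((c k : ℝ) * x (Sum.inr (Sum.inr k)))), ← Finset.mul_sum]
      nlinarith [G6]
    · simp only [Sum.elim_inl, Sum.elim_inr]
      rw [← Finset.mul_sum, ← Finset.mul_sum]
      push_cast
      nlinarith [G2]
  · funext col
    rcases col with (i | (j | j)) | (i | k) <;>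
      simp only [Pi.add_apply, Sum.elim_inl, Sum.elim_inr] <;> [skip; ring; ring; ring; ring]
    split_ifs <;> ring

end Decomp


/-- For normalized height vectors on the Batyrev matrix, the
Minkowski sum of the two polytopes is the polytope of the summed heights:
`P(A,h) + P(A,h') = P(A, h+h')`. -/
theorem batyrev_minkowski_sum (p0 p1 p2 p3 p4 : ℕ)
    (hp0 : 1 ≤ p0) (hp1 : 1 ≤ p1) (hp2 : 1 ≤ p2) (hp3 : 1 ≤ p3) (hp4 : 1 ≤ p4)
    (b : Fin p3 → ℤ) (c : Fin (p2 - 1) → ℤ)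
    (hb : ∀ i, 0 ≤ b i) (hc : ∀ k, 0 ≤ c k)
    (d e f d' e' f' : ℤ)
    (hd : 0 ≤ d) (he : 0 ≤ e) (hf : 0 ≤ f)
    (hd' : 0 ≤ d') (he' : 0 ≤ e') (hf' : 0 ≤ f') :
    polyP (batyrevA p0 p1 p2 p3 p4 b c) (batyrevH p0 p1 p2 p3 p4 d e f) +
      polyP (batyrevA p0 p1 p2 p3 p4 b c) (batyrevH p0 p1 p2 p3 p4 d' e' f') =
    polyP (batyrevA p0 p1 p2 p3 p4 b c)
      (fun i => batyrevH p0 p1 p2 p3 p4 d e f i + batyrevH p0 p1 p2 p3 p4 d' e' f' i) := by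
  rw [batyrevH_add]
  ext x
  rw [Set.mem_add]
  constructor
  · rintro ⟨y, hy, y', hy', rfl⟩
    rw [mem_polyP_iff_BPred hp4 hp1 hp2] at hy hy' ⊢
    exact BPred_add b c d e f d' e' f' hy hy'
  · intro hxm
    rw [mem_polyP_iff_BPred hp4 hp1 hp2] at hxm
    obtain ⟨y, y', hy, hy', hsum⟩ :=
      BPred_decomp hp0 b c hb hc d e f d' e' f' hd he hf hd' he' hf' x hxm
    exact ⟨y, (mem_polyP_iff_BPred hp4 hp1 hp2 b c d e f y).mpr hy,
      y', (mem_polyP_iff_BPred hp4 hp1 hp2 b c d' e' f' y').mpr hy', hsum⟩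
end

section
/- For h ∈ ℤ^m and c ∈ ℤ, let S(h,c) = {x ∈ ℝ^m : x_i ≥ -h_i for all i, and x_1 + … + x_m ≤ c} (a translated dilated standard simplex). If h_1 + … + h_m + c ≥ 0 and h'_1 + … + h'_m + c' ≥ 0, then S(h,c) + S(h',c') = S(h+h', c+c') and the pair (S(h,c), S(h',c')) has the integer decomposition property: (S(h,c) ∩ ℤ^m) + (S(h',c') ∩ ℤ^m) = S(h+h', c+c') ∩ ℤ^m. -/
/-! `S(h,c)` is the simplex `{x | -h ≤ x, ∑ x ≤ c}` with corner `-h`, and such corner simplices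
add over any linearly ordered abelian group, in particular over ℝ and over ℤ: a point `z` of the
sum splits as `x + (z - x)` once `-h ≤ x ≤ z + h'` and `∑ x = max (∑ -h) (∑ z - c')`, and such an
`x` exists by distributing a prescribed total over a box coordinate by coordinate. The integer
points of the real simplex are the casts of the integer simplex, so the integer decomposition
property is the instance over ℤ. -/

open Finset Pointwise

/-- The translated dilated standard simplex
`S(h,c) = {x ∈ ℝᵐ : xᵢ ≥ -hᵢ for all i, and x₁ + ⋯ + x_m ≤ c}`. -/
def simplexS (m : ℕ) (h : Fin m → ℤ) (c : ℤ) : Set (Fin m → ℝ) :=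
  {x | (∀ i, -(h i : ℝ) ≤ x i) ∧ ∑ i, x i ≤ (c : ℝ)}

section OrderedGroup

variable {ι R : Type*} [AddCommGroup R] [LinearOrder R] [IsOrderedAddMonoid R]

theorem exists_mem_Icc_sum_eq {a b : ι → R} (hab : a ≤ b) (s : Finset ι) {t : R}
    (ht₁ : ∑ i ∈ s, a i ≤ t) (ht₂ : t ≤ ∑ i ∈ s, b i) :
    ∃ y ∈ Set.Icc a b, ∑ i ∈ s, y i = t := by
  classical
  induction s using Finset.cons_induction generalizing t with
  | empty =>
    rw [sum_empty] at ht₁ ht₂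
    exact ⟨a, ⟨le_rfl, hab⟩, by rw [sum_empty, le_antisymm ht₁ ht₂]⟩
  | cons j s hj ih =>
    rw [sum_cons] at ht₁ ht₂
    have hsab : ∑ i ∈ s, a i ≤ ∑ i ∈ s, b i := sum_le_sum fun i _ => hab i
    -- `v` lies in `[a j, b j] ∩ [t - ∑ b, t - ∑ a]`, so the rest `t - v` can be split over `s`.
    set v := max (a j) (t - ∑ i ∈ s, b i)
    obtain ⟨y, ⟨hay, hyb⟩, hy⟩ := ih (t := t - v)
      (le_sub_comm.1 (max_le (le_sub_iff_add_le.2 ht₁) (sub_le_sub_left hsab t)))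
      (sub_le_comm.1 (le_max_right _ _))
    refine ⟨Function.update y j v, ?_, ?_⟩
    · simp only [Set.mem_Icc, Pi.le_def]
      refine ⟨Function.forall_update_iff _ (p := fun i w => a i ≤ w) |>.2
          ⟨le_max_left _ _, fun i _ => hay i⟩,
        Function.forall_update_iff _ (p := fun i w => w ≤ b i) |>.2
          ⟨max_le (hab j) (sub_le_iff_le_add.2 ht₂), fun i _ => hyb i⟩⟩
    · rw [sum_cons, Function.update_self,
        sum_congr rfl fun i hi => Function.update_of_ne (ne_of_mem_of_not_mem hi hj) _ _, hy]
      abel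

variable [Fintype ι]

def cornerSimplex (a : ι → R) (c : R) : Set (ι → R) :=
  {x | (∀ i, a i ≤ x i) ∧ ∑ i, x i ≤ c}

theorem cornerSimplex_add {a b : ι → R} {c c' : R} (ha : ∑ i, a i ≤ c) (hb : ∑ i, b i ≤ c') :
    cornerSimplex a c + cornerSimplex b c' = cornerSimplex (a + b) (c + c') := by
  apply Set.Subset.antisymm
  · rintro _ ⟨x, ⟨hax, hx⟩, y, ⟨hby, hy⟩, rfl⟩
    refine ⟨fun i => add_le_add (hax i) (hby i), ?_⟩
    simp only [Pi.add_apply, sum_add_distrib]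
    exact add_le_add hx hy
  · rintro z ⟨habz, hz⟩
    have hazb : a ≤ z - b := fun i => le_sub_iff_add_le.2 (habz i)
    have hsum : ∑ i, a i ≤ ∑ i, (z - b) i := sum_le_sum fun i _ => hazb i
    simp only [Pi.sub_apply, sum_sub_distrib] at hsum
    -- Put as much mass `∑ x` on the first summand as `c'` forces, and no less than `∑ a`.
    obtain ⟨x, ⟨hax, hxzb⟩, hx⟩ := exists_mem_Icc_sum_eq hazb univ
      (le_max_left _ (∑ i, z i - c'))
      (by simp only [Pi.sub_apply, sum_sub_distrib]; exact max_le hsum (sub_le_sub_left hb _))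
    refine ⟨x, ⟨hax, ?_⟩, z - x, ⟨fun i => ?_, ?_⟩, add_sub_cancel x z⟩
    · rw [hx]
      exact max_le ha (sub_le_iff_le_add.2 hz)
    · exact le_sub_comm.1 (hxzb i)
    · simp only [Pi.sub_apply, sum_sub_distrib, hx]
      exact sub_le_comm.1 (le_max_right _ _)

end OrderedGroup

def intCastPi (ι : Type*) : (ι → ℤ) →+ (ι → ℝ) :=
  (Int.castAddHom ℝ).compLeft ι

@[simp]
theorem intCastPi_apply {ι : Type*} (a : ι → ℤ) (i : ι) : intCastPi ι a i = (a i : ℝ) := rfl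

theorem cornerSimplex_intCast_inter_intZ {ι : Type*} [Fintype ι] (a : ι → ℤ) (c : ℤ) :
    cornerSimplex (intCastPi ι a) (c : ℝ) ∩ intZ = intCastPi ι '' cornerSimplex a c := by
  apply Set.Subset.antisymm
  · rintro x ⟨⟨hax, hx⟩, hxZ⟩
    choose X hX using hxZ
    obtain rfl : x = intCastPi ι X := funext hX
    simp only [intCastPi_apply] at hax hx
    exact ⟨X, ⟨fun i => by exact_mod_cast hax i, by exact_mod_cast hx⟩, rfl⟩
  · rintro _ ⟨X, ⟨haX, hX⟩, rfl⟩
    refine ⟨⟨fun i => ?_, ?_⟩, fun i => ⟨X i, rfl⟩⟩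
    · simpa using haX i
    · simp only [intCastPi_apply]
      exact_mod_cast hX

theorem simplexS_eq_cornerSimplex (m : ℕ) (h : Fin m → ℤ) (c : ℤ) :
    simplexS m h c = cornerSimplex (intCastPi (Fin m) (-h)) (c : ℝ) := by
  ext x
  simp [simplexS, cornerSimplex]

/-- If `∑ᵢ hᵢ + c ≥ 0` and `∑ᵢ h'ᵢ + c' ≥ 0`, then
`S(h,c) + S(h',c') = S(h+h', c+c')` and the pair `(S(h,c), S(h',c'))` has the
integer decomposition property. -/
theorem simplex_sum_and_IDP (m : ℕ) (h h' : Fin m → ℤ) (c c' : ℤ)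
    (hsum : 0 ≤ (∑ i, h i) + c) (hsum' : 0 ≤ (∑ i, h' i) + c') :
    simplexS m h c + simplexS m h' c' = simplexS m (fun i => h i + h' i) (c + c') ∧
    (simplexS m h c ∩ intZ) + (simplexS m h' c' ∩ intZ) =
      simplexS m (fun i => h i + h' i) (c + c') ∩ intZ := by
  have sum_neg_le : ∀ {g : Fin m → ℤ} {d : ℤ}, 0 ≤ (∑ i, g i) + d → ∑ i, (-g) i ≤ d :=
    fun hg => by simpa [sum_neg_distrib, neg_le_iff_add_nonneg'] using hg
  have sum_neg_le_real : ∀ {g : Fin m → ℤ} {d : ℤ}, 0 ≤ (∑ i, g i) + d →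
      ∑ i, intCastPi (Fin m) (-g) i ≤ (d : ℝ) := fun hg => by
    simp only [intCastPi_apply]
    exact_mod_cast sum_neg_le hg
  have neg_sum : -(fun i => h i + h' i) = -h + -h' := neg_add h h'
  simp only [simplexS_eq_cornerSimplex, cornerSimplex_intCast_inter_intZ, neg_sum]
  rw [cornerSimplex_add (sum_neg_le_real hsum) (sum_neg_le_real hsum'), ← Set.image_add,
    cornerSimplex_add (sum_neg_le hsum) (sum_neg_le hsum'), map_add, Int.cast_add]
  exact ⟨rfl, rfl⟩
end

section
/- Fix integers r, s ≥ 1, set n = r+s, and fix nonnegative integers a_1,…,a_s. Let A be the (n+2)×n integer matrix whose rows are: v_j = e_j for j = 1,…,r; v_0 = -Σ_{j=1}^r e_j + Σ_{i=1}^s a_i e_{r+i}; u_i = e_{r+i} for i = 1,…,s; and u_0 = -Σ_{i=1}^s e_{r+i}. Suppose h, h' ∈ ℤ^{n+2} (with entries indexed by v_0,…,v_r,u_0,…,u_s) satisfy h_{v_0} + Σ_{j=1}^r h_{v_j} ≥ Σ_{i=1}^s a_i h_{u_i} and h_{u_0} + Σ_{i=1}^s h_{u_i} ≥ 0, and similarly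 for h'. Then the pair (P(A,h), P(A,h')) has the integer decomposition property: (P(A,h) ∩ ℤ^n) + (P(A,h') ∩ ℤ^n) = (P(A,h) + P(A,h')) ∩ ℤ^n. -/
open Finset Pointwise

/-- The matrix of ray generators of a smooth complete fan in `ℝ^{r+s}` with
`r+s+2` rays (Kleinschmidt's classification): rows `v_j = e_j` (`j = 1,…,r`,
index `some j`), `v₀ = -∑_{j=1}^r e_j + ∑_{i=1}^s a_i e_{r+i}` (index `none`),
`u_i = e_{r+i}` (`i = 1,…,s`, index `some i`), `u₀ = -∑_{i=1}^s e_{r+i}`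
(index `none`). -/
def kleinA (r s : ℕ) (a : Fin s → ℤ) :
    (Option (Fin r) ⊕ Option (Fin s)) → (Fin r ⊕ Fin s) → ℤ
  | .inl (some j), .inl j' => if j = j' then 1 else 0
  | .inl (some _), .inr _ => 0
  | .inl none, .inl _ => -1
  | .inl none, .inr i => a i
  | .inr (some i), .inr i' => if i = i' then 1 else 0
  | .inr (some _), .inl _ => 0
  | .inr none, .inr _ => -1
  | .inr none, .inl _ => 0

lemma mem_polyP_klein {r s : ℕ} {a : Fin s → ℤ} {h : (Option (Fin r) ⊕ Option (Fin s)) → ℤ}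
    {x : (Fin r ⊕ Fin s) → ℝ} :
    x ∈ polyP (kleinA r s a) h ↔
      (∀ j : Fin r, -(h (.inl (some j)) : ℝ) ≤ x (.inl j)) ∧
      (-(h (.inl none) : ℝ) ≤ -∑ j, x (.inl j) + ∑ i, (a i : ℝ) * x (.inr i)) ∧
      (∀ i : Fin s, -(h (.inr (some i)) : ℝ) ≤ x (.inr i)) ∧
      (-(h (.inr none) : ℝ) ≤ -∑ i, x (.inr i)) := by
  constructor
  · intro hx
    refine ⟨fun j => ?_, ?_, fun i => ?_, ?_⟩
    · have := hx (.inl (some j))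
      simpa [kleinA, Fintype.sum_sum_type, apply_ite, Finset.sum_ite_eq] using this
    · have := hx (.inl none)
      simpa [kleinA, Fintype.sum_sum_type, neg_mul, Finset.sum_neg_distrib] using this
    · have := hx (.inr (some i))
      simpa [kleinA, Fintype.sum_sum_type, apply_ite, Finset.sum_ite_eq] using this
    · have := hx (.inr none)
      simpa [kleinA, Fintype.sum_sum_type, neg_mul, Finset.sum_neg_distrib] using this
  · rintro ⟨hA, hB, hC, hD⟩ i
    match i with
    | .inl (some j) => simpa [kleinA, Fintype.sum_sum_type, apply_ite, Finset.sum_ite_eq] using hA j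
    | .inl none => simpa [kleinA, Fintype.sum_sum_type, neg_mul, Finset.sum_neg_distrib] using hB
    | .inr (some i) => simpa [kleinA, Fintype.sum_sum_type, apply_ite, Finset.sum_ite_eq] using hC i
    | .inr none => simpa [kleinA, Fintype.sum_sum_type, neg_mul, Finset.sum_neg_distrib] using hD

lemma split_sum {ι : Type*} [DecidableEq ι] (t : Finset ι) (l u : ι → ℤ)
    (hlu : ∀ i ∈ t, l i ≤ u i) :
    ∀ T : ℤ, ∑ i ∈ t, l i ≤ T → T ≤ ∑ i ∈ t, u i →
    ∃ q : ι → ℤ, (∀ i ∈ t, l i ≤ q i ∧ q i ≤ u i) ∧ ∑ i ∈ t, q i = T := by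
  induction t using Finset.cons_induction with
  | empty => intro T hT1 hT2; exact ⟨0, by simp, by simp at hT1 hT2 ⊢; omega⟩
  | cons i t' hi ih =>
    intro T hT1 hT2
    rw [Finset.sum_cons] at hT1 hT2
    set S := ∑ j ∈ t', u j with hS
    set qi := max (l i) (T - S) with hqi
    have hli : l i ≤ u i := hlu i (Finset.mem_cons_self i t')
    have hut' : ∀ j ∈ t', l j ≤ u j := fun j hj => hlu j (Finset.mem_cons_of_mem hj)
    have hst' : ∑ j ∈ t', l j ≤ S := Finset.sum_le_sum hut'
    have hq1 : l i ≤ qi := le_max_left _ _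
    have hq2 : T - S ≤ qi := le_max_right _ _
    have hq3 : qi ≤ u i := max_le hli (by omega)
    have hq4 : qi ≤ T - ∑ j ∈ t', l j := max_le (by omega) (by omega)
    obtain ⟨q, hq, hqsum⟩ := ih hut' (T - qi) (by omega) (by omega)
    refine ⟨Function.update q i qi, ?_, ?_⟩
    · intro j hj
      rcases Finset.mem_cons.mp hj with rfl | hj'
      · rw [Function.update_self]; exact ⟨hq1, hq3⟩
      · rw [Function.update_of_ne (by rintro rfl; exact hi hj')]
        exact hq j hj'
    · rw [Finset.sum_cons, Function.update_self]
      have : ∑ x ∈ t', Function.update q i qi x = ∑ x ∈ t', q x :=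
        Finset.sum_congr rfl (fun j hj => Function.update_of_ne (by rintro rfl; exact hi hj) _ _)
      rw [this, hqsum]; ring

/-- For the Kleinschmidt matrix `A` (`r,s ≥ 1`, `aᵢ ≥ 0`) and
height vectors `h, h'` satisfying the two convexity inequalities
`h_{v₀} + ∑_j h_{v_j} ≥ ∑_i a_i h_{u_i}` and `h_{u₀} + ∑_i h_{u_i} ≥ 0`,
the pair `(P(A,h), P(A,h'))` has the integer decomposition property. -/
theorem klein_IDP (r s : ℕ) (hr : 1 ≤ r) (hs : 1 ≤ s)
    (a : Fin s → ℤ) (ha : ∀ i, 0 ≤ a i)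
    (h h' : (Option (Fin r) ⊕ Option (Fin s)) → ℤ)
    (h1 : h (.inl none) + ∑ j, h (.inl (some j)) ≥ ∑ i, a i * h (.inr (some i)))
    (h2 : h (.inr none) + ∑ i, h (.inr (some i)) ≥ 0)
    (h1' : h' (.inl none) + ∑ j, h' (.inl (some j)) ≥ ∑ i, a i * h' (.inr (some i)))
    (h2' : h' (.inr none) + ∑ i, h' (.inr (some i)) ≥ 0) :
    (polyP (kleinA r s a) h ∩ intZ) + (polyP (kleinA r s a) h' ∩ intZ) =
      (polyP (kleinA r s a) h + polyP (kleinA r s a) h') ∩ intZ := by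
  ext z
  simp only [Set.mem_inter_iff, Set.mem_add]
  constructor
  · rintro ⟨p, ⟨hpP, hpZ⟩, q, ⟨hqP, hqZ⟩, rfl⟩
    refine ⟨⟨p, hpP, q, hqP, rfl⟩, fun t => ?_⟩
    obtain ⟨k, hk⟩ := hpZ t
    obtain ⟨k', hk'⟩ := hqZ t
    exact ⟨k + k', by simp [Pi.add_apply, hk, hk']⟩
  · rintro ⟨⟨p, hpP, q, hqP, rfl⟩, hz⟩
    -- integer coordinates
    set X : Fin r → ℤ := fun j => (hz (.inl j)).choose with hXdef
    set Y : Fin s → ℤ := fun i => (hz (.inr i)).choose with hYdef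
    have hX : ∀ j, (p + q) (.inl j) = ((X j : ℤ) : ℝ) := fun j => (hz (.inl j)).choose_spec
    have hY : ∀ i, (p + q) (.inr i) = ((Y i : ℤ) : ℝ) := fun i => (hz (.inr i)).choose_spec
    obtain ⟨hpA, hpB, hpC, hpD⟩ := mem_polyP_klein.mp hpP
    obtain ⟨hqA, hqB, hqC, hqD⟩ := mem_polyP_klein.mp hqP
    -- integer inequalities for the sum
    have iA : ∀ j, -(h (.inl (some j)) + h' (.inl (some j))) ≤ X j := by
      intro j
      have hrr : -((h (.inl (some j)) : ℝ) + (h' (.inl (some j)) : ℝ)) ≤ ((X j : ℤ) : ℝ) := by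
        have := hX j
        simp only [Pi.add_apply] at this
        linarith [hpA j, hqA j]
      exact_mod_cast hrr
    have iC : ∀ i, -(h (.inr (some i)) + h' (.inr (some i))) ≤ Y i := by
      intro i
      have hrr : -((h (.inr (some i)) : ℝ) + (h' (.inr (some i)) : ℝ)) ≤ ((Y i : ℤ) : ℝ) := by
        have := hY i
        simp only [Pi.add_apply] at this
        linarith [hpC i, hqC i]
      exact_mod_cast hrr
    have hXsum : ∑ j, p (.inl j) + ∑ j, q (.inl j) = ∑ j, ((X j : ℤ) : ℝ) := by
      rw [← Finset.sum_add_distrib]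
      exact Finset.sum_congr rfl (fun j _ => hX j)
    have hYsum : ∑ i, p (.inr i) + ∑ i, q (.inr i) = ∑ i, ((Y i : ℤ) : ℝ) := by
      rw [← Finset.sum_add_distrib]
      exact Finset.sum_congr rfl (fun i _ => hY i)
    have haYsum : ∑ i, (a i : ℝ) * p (.inr i) + ∑ i, (a i : ℝ) * q (.inr i)
        = ∑ i, (a i : ℝ) * ((Y i : ℤ) : ℝ) := by
      rw [← Finset.sum_add_distrib]
      refine Finset.sum_congr rfl (fun i _ => ?_)
      rw [← mul_add]; congr 1; exact hY i
    have iB : -(h (.inl none) + h' (.inl none)) ≤ -∑ j, X j + ∑ i, a i * Y i := by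
      have hrr : -((h (.inl none) : ℝ) + (h' (.inl none) : ℝ))
          ≤ -∑ j, ((X j : ℤ) : ℝ) + ∑ i, (a i : ℝ) * ((Y i : ℤ) : ℝ) := by
        linarith [hpB, hqB, hXsum, haYsum]
      have : ((-(h (.inl none) + h' (.inl none)) : ℤ) : ℝ)
          ≤ ((-∑ j, X j + ∑ i, a i * Y i : ℤ) : ℝ) := by push_cast; linarith [hrr]
      exact_mod_cast this
    have iD : -(h (.inr none) + h' (.inr none)) ≤ -∑ i, Y i := by
      have hrr : -((h (.inr none) : ℝ) + (h' (.inr none) : ℝ)) ≤ -∑ i, ((Y i : ℤ) : ℝ) := by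
        linarith [hpD, hqD, hYsum]
      have : ((-(h (.inr none) + h' (.inr none)) : ℤ) : ℝ) ≤ ((-∑ i, Y i : ℤ) : ℝ) := by
        push_cast; linarith [hrr]
      exact_mod_cast this
    -- abbreviations
    set SY := ∑ i, Y i with hSY
    set Sd := ∑ i, h (.inr (some i)) with hSd
    set Sd' := ∑ i, h' (.inr (some i)) with hSd'
    have hYlow : -(Sd + Sd') ≤ SY := by
      have := Finset.sum_le_sum (fun i (_ : i ∈ Finset.univ) => iC i)
      simpa [Finset.sum_add_distrib, Finset.sum_neg_distrib, neg_add] using this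
    -- split the y-part
    set Ty := max (SY - h' (.inr none)) (-Sd) with hTy
    have hTy1 : SY - h' (.inr none) ≤ Ty := le_max_left _ _
    have hTy2 : -Sd ≤ Ty := le_max_right _ _
    have hTy3 : Ty ≤ h (.inr none) := max_le (by omega) (by omega)
    have hTy4 : Ty ≤ SY + Sd' := max_le (by omega) (by omega)
    obtain ⟨Qy, hQy, hQysum⟩ := split_sum Finset.univ
      (fun i => -h (.inr (some i))) (fun i => Y i + h' (.inr (some i)))
      (fun i _ => by show -h (.inr (some i)) ≤ Y i + h' (.inr (some i)); have := iC i; omega) Ty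
      (by rw [Finset.sum_neg_distrib]; omega)
      (by rw [Finset.sum_add_distrib]; omega)
    have hQyl : ∀ i, -h (.inr (some i)) ≤ Qy i := fun i => (hQy i (Finset.mem_univ i)).1
    have hQyu : ∀ i, Qy i ≤ Y i + h' (.inr (some i)) := fun i => (hQy i (Finset.mem_univ i)).2
    -- the x-part heights
    set C := h (.inl none) + ∑ i, a i * Qy i with hC
    set C' := h' (.inl none) + ∑ i, a i * (Y i - Qy i) with hC'
    set Sb := ∑ j, h (.inl (some j)) with hSb
    set Sb' := ∑ j, h' (.inl (some j)) with hSb'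
    set SX := ∑ j, X j with hSX
    have hCsum : C + C' = h (.inl none) + h' (.inl none) + ∑ i, a i * Y i := by
      have key : ∑ i, a i * Qy i + ∑ i, a i * (Y i - Qy i) = ∑ i, a i * Y i := by
        rw [← Finset.sum_add_distrib]
        exact Finset.sum_congr rfl (fun i _ => by ring)
      rw [hC, hC']
      omega
    have hCpos : 0 ≤ C + Sb := by
      have key : ∑ i, a i * (-h (.inr (some i))) ≤ ∑ i, a i * Qy i :=
        Finset.sum_le_sum (fun i _ => mul_le_mul_of_nonneg_left (hQyl i) (ha i))
      have key2 : ∑ i, a i * (-h (.inr (some i))) = -∑ i, a i * h (.inr (some i)) := by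
        rw [← Finset.sum_neg_distrib]
        exact Finset.sum_congr rfl (fun i _ => by ring)
      rw [key2] at key
      omega
    have hC'pos : 0 ≤ C' + Sb' := by
      have key : ∑ i, a i * (-h' (.inr (some i))) ≤ ∑ i, a i * (Y i - Qy i) :=
        Finset.sum_le_sum (fun i _ => mul_le_mul_of_nonneg_left (by have := hQyu i; omega) (ha i))
      have key2 : ∑ i, a i * (-h' (.inr (some i))) = -∑ i, a i * h' (.inr (some i)) := by
        rw [← Finset.sum_neg_distrib]
        exact Finset.sum_congr rfl (fun i _ => by ring)
      rw [key2] at key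
      omega
    have hXtot : SX ≤ C + C' := by omega
    have hXlow : -(Sb + Sb') ≤ SX := by
      have := Finset.sum_le_sum (fun j (_ : j ∈ Finset.univ) => iA j)
      simpa [Finset.sum_add_distrib, Finset.sum_neg_distrib, neg_add] using this
    -- split the x-part
    set Tx := max (SX - C') (-Sb) with hTx
    have hTx1 : SX - C' ≤ Tx := le_max_left _ _
    have hTx2 : -Sb ≤ Tx := le_max_right _ _
    have hTx3 : Tx ≤ C := max_le (by omega) (by omega)
    have hTx4 : Tx ≤ SX + Sb' := max_le (by omega) (by omega)
    obtain ⟨Qx, hQx, hQxsum⟩ := split_sum Finset.univ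
      (fun j => -h (.inl (some j))) (fun j => X j + h' (.inl (some j)))
      (fun j _ => by show -h (.inl (some j)) ≤ X j + h' (.inl (some j)); have := iA j; omega) Tx
      (by rw [Finset.sum_neg_distrib]; omega)
      (by rw [Finset.sum_add_distrib]; omega)
    have hQxl : ∀ j, -h (.inl (some j)) ≤ Qx j := fun j => (hQx j (Finset.mem_univ j)).1
    have hQxu : ∀ j, Qx j ≤ X j + h' (.inl (some j)) := fun j => (hQx j (Finset.mem_univ j)).2
    -- the two integer summands
    set P : (Fin r ⊕ Fin s) → ℝ :=
      Sum.elim (fun j => ((Qx j : ℤ) : ℝ)) (fun i => ((Qy i : ℤ) : ℝ)) with hP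
    set W : (Fin r ⊕ Fin s) → ℝ :=
      Sum.elim (fun j => ((X j - Qx j : ℤ) : ℝ)) (fun i => ((Y i - Qy i : ℤ) : ℝ)) with hW
    refine ⟨P, ⟨?_, ?_⟩, W, ⟨?_, ?_⟩, ?_⟩
    · -- P ∈ polyP h
      rw [mem_polyP_klein]
      simp only [hP, Sum.elim_inl, Sum.elim_inr]
      refine ⟨fun j => by exact_mod_cast hQxl j, ?_, fun i => by exact_mod_cast hQyl i, ?_⟩
      · have : -h (.inl none) ≤ -∑ j, Qx j + ∑ i, a i * Qy i := by
          rw [hQxsum]; omega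
        exact_mod_cast this
      · have : -h (.inr none) ≤ -∑ i, Qy i := by rw [hQysum]; omega
        exact_mod_cast this
    · intro t
      match t with
      | .inl j => exact ⟨Qx j, rfl⟩
      | .inr i => exact ⟨Qy i, rfl⟩
    · -- W ∈ polyP h'
      rw [mem_polyP_klein]
      simp only [hW, Sum.elim_inl, Sum.elim_inr]
      refine ⟨fun j => by have := hQxu j; exact_mod_cast (by omega : -(h' (.inl (some j)) : ℤ) ≤ X j - Qx j),
        ?_, fun i => by have := hQyu i; exact_mod_cast (by omega : -(h' (.inr (some i)) : ℤ) ≤ Y i - Qy i), ?_⟩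
      · have : -h' (.inl none) ≤ -∑ j, (X j - Qx j) + ∑ i, a i * (Y i - Qy i) := by
          rw [Finset.sum_sub_distrib, hQxsum]
          omega
        exact_mod_cast this
      · have : -h' (.inr none) ≤ -∑ i, (Y i - Qy i) := by
          rw [Finset.sum_sub_distrib, hQysum]
          omega
        exact_mod_cast this
    · intro t
      match t with
      | .inl j => exact ⟨X j - Qx j, rfl⟩
      | .inr i => exact ⟨Y i - Qy i, rfl⟩
    · funext t
      match t with
      | .inl j =>
        have := hX j
        simp only [Pi.add_apply] at this ⊢
        simp only [hP, hW, Sum.elim_inl]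
        push_cast
        linarith [this]
      | .inr i =>
        have := hY i
        simp only [Pi.add_apply] at this ⊢
        simp only [hP, hW, Sum.elim_inr]
        push_cast
        linarith [this]
end

section
/- Let J be a finite index set and X ⊆ J a subset. Let e, f, e', f' be nonnegative integers and let α : J → ℤ satisfy α_j ≥ 0 for all j, Σ_{j∈J} α_j ≤ e+f+e'+f', and Σ_{j∈X} α_j ≤ f+f'. Then there exist β, γ : J → ℤ with β_j, γ_j ≥ 0 for all j, β + γ = α, Σ_{j∈J} β_j ≤ e+f, Σ_{j∈J} γ_j ≤ e'+f', Σ_{j∈X} β_j ≤ f, and Σ_{j∈X} γ_j ≤ f'. -/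
open Finset

/-- Lattice-point decomposition for dilated standard simplices,
lower range: if `α ≥ 0`, `∑_{j∈J} α_j ≤ e+f+e'+f'` and `∑_{j∈X} α_j ≤ f+f'`,
then `α = β + γ` with `β, γ ≥ 0`, `∑_J β ≤ e+f`, `∑_J γ ≤ e'+f'`,
`∑_X β ≤ f` and `∑_X γ ≤ f'`. -/
theorem simplex_split_low (J : Type*) [Fintype J] (X : Finset J)
    (e f e' f' : ℤ) (he : 0 ≤ e) (hf : 0 ≤ f) (he' : 0 ≤ e') (hf' : 0 ≤ f')
    (α : J → ℤ) (hα : ∀ j, 0 ≤ α j)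
    (hJ : ∑ j, α j ≤ e + f + e' + f')
    (hX : ∑ j ∈ X, α j ≤ f + f') :
    ∃ β γ : J → ℤ, (∀ j, 0 ≤ β j) ∧ (∀ j, 0 ≤ γ j) ∧
      (∀ j, β j + γ j = α j) ∧
      ∑ j, β j ≤ e + f ∧ ∑ j, γ j ≤ e' + f' ∧
      ∑ j ∈ X, β j ≤ f ∧ ∑ j ∈ X, γ j ≤ f' := by
  classical
  have key : ∀ n : ℕ, ∀ e f e' f' : ℤ, 0 ≤ e → 0 ≤ f → 0 ≤ e' → 0 ≤ f' →
      ∀ α : J → ℤ, (∀ j, 0 ≤ α j) → (∑ j, α j ≤ e + f + e' + f') →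
      (∑ j ∈ X, α j ≤ f + f') → (∑ j, α j ≤ (n : ℤ)) →
      ∃ β γ : J → ℤ, (∀ j, 0 ≤ β j) ∧ (∀ j, 0 ≤ γ j) ∧
        (∀ j, β j + γ j = α j) ∧
        ∑ j, β j ≤ e + f ∧ ∑ j, γ j ≤ e' + f' ∧
        ∑ j ∈ X, β j ≤ f ∧ ∑ j ∈ X, γ j ≤ f' := by
    intro n
    induction n with
    | zero =>
      intro e f e' f' he hf he' hf' α hα hJ hX hn
      have hXle : ∑ j ∈ X, α j ≤ ∑ j, α j :=
        Finset.sum_le_sum_of_subset_of_nonneg (Finset.subset_univ X)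
          (fun i _ _ => hα i)
      exact ⟨α, 0, hα, fun j => le_refl 0, fun j => add_zero _,
        by push_cast at hn; linarith, by simp; linarith,
        by push_cast at hn; linarith, by simp; linarith⟩
    | succ n ih =>
      intro e f e' f' he hf he' hf' α hα hJ hX hn
      by_cases hle : ∑ j, α j ≤ (n : ℤ)
      · exact ih e f e' f' he hf he' hf' α hα hJ hX hle
      · have hpos : 0 < ∑ j, α j := by
          push_neg at hle
          have : (0 : ℤ) ≤ (n : ℤ) := Int.natCast_nonneg n
          linarith
        obtain ⟨j, hj1⟩ : ∃ j, 1 ≤ α j := by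
          by_contra h
          push_neg at h
          have : ∑ j, α j ≤ 0 := Finset.sum_nonpos (fun i _ => by
            have := h i; have := hα i; linarith)
          linarith
        set α' : J → ℤ := fun i => α i - (if i = j then 1 else 0) with hα'def
        have hA' : ∀ i, 0 ≤ α' i := by
          intro i
          by_cases h : i = j <;> simp [α', h] <;> [linarith; exact hα i]
        have hS : ∑ i, α' i = (∑ i, α i) - 1 := by
          simp [α', Finset.sum_sub_distrib]
        have hSX : ∑ i ∈ X, α' i = (∑ i ∈ X, α i) - (if j ∈ X then 1 else 0) := by
          simp [α', Finset.sum_sub_distrib]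
        have hSn : ∑ i, α' i ≤ (n : ℤ) := by
          rw [hS]; push_cast at hn; linarith
        by_cases hjX : j ∈ X
        · have h1 : 1 ≤ ∑ i ∈ X, α i :=
            le_trans hj1 (Finset.single_le_sum (fun i _ => hα i) hjX)
          by_cases hf1 : 1 ≤ f
          · obtain ⟨β, γ, hβ, hγ, hbg, hB, hG, hBX, hGX⟩ :=
              ih e (f - 1) e' f' he (by linarith) he' hf' α' hA'
                (by rw [hS]; linarith)
                (by rw [hSX]; simp [hjX]; linarith) hSn
            refine ⟨fun i => β i + (if i = j then 1 else 0), γ, ?_, hγ, ?_, ?_, hG, ?_, hGX⟩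
            · intro i; by_cases hij : i = j <;> simp [hij] <;> linarith [hβ j, hβ i]
            · intro i
              have h := hbg i
              simp only [α'] at h
              by_cases hij : i = j <;> simp [hij] at h ⊢ <;> linarith
            · rw [Finset.sum_add_distrib]; simp; linarith
            · rw [Finset.sum_add_distrib, Finset.sum_ite_eq' X j]
              simp [hjX]; linarith
          · have hf'1 : 1 ≤ f' := by linarith
            obtain ⟨β, γ, hβ, hγ, hbg, hB, hG, hBX, hGX⟩ :=
              ih e f e' (f' - 1) he hf he' (by linarith) α' hA'
                (by rw [hS]; linarith)
                (by rw [hSX]; simp [hjX]; linarith) hSn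
            refine ⟨β, fun i => γ i + (if i = j then 1 else 0), hβ, ?_, ?_, hB, ?_, hBX, ?_⟩
            · intro i; by_cases hij : i = j <;> simp [hij] <;> linarith [hγ j, hγ i]
            · intro i
              have h := hbg i
              simp only [α'] at h
              by_cases hij : i = j <;> simp [hij] at h ⊢ <;> linarith
            · rw [Finset.sum_add_distrib]; simp; linarith
            · rw [Finset.sum_add_distrib, Finset.sum_ite_eq' X j]
              simp [hjX]; linarith
        · by_cases he1 : 1 ≤ e
          · obtain ⟨β, γ, hβ, hγ, hbg, hB, hG, hBX, hGX⟩ :=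
              ih (e - 1) f e' f' (by linarith) hf he' hf' α' hA'
                (by rw [hS]; linarith)
                (by rw [hSX]; simp [hjX]; linarith) hSn
            refine ⟨fun i => β i + (if i = j then 1 else 0), γ, ?_, hγ, ?_, ?_, hG, ?_, hGX⟩
            · intro i; by_cases hij : i = j <;> simp [hij] <;> linarith [hβ j, hβ i]
            · intro i
              have h := hbg i
              simp only [α'] at h
              by_cases hij : i = j <;> simp [hij] at h ⊢ <;> linarith
            · rw [Finset.sum_add_distrib]; simp; linarith
            · rw [Finset.sum_add_distrib, Finset.sum_ite_eq' X j]
              simp [hjX]; linarith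
          · by_cases he'1 : 1 ≤ e'
            · obtain ⟨β, γ, hβ, hγ, hbg, hB, hG, hBX, hGX⟩ :=
                ih e f (e' - 1) f' he hf (by linarith) hf' α' hA'
                  (by rw [hS]; linarith)
                  (by rw [hSX]; simp [hjX]; linarith) hSn
              refine ⟨β, fun i => γ i + (if i = j then 1 else 0), hβ, ?_, ?_, hB, ?_, hBX, ?_⟩
              · intro i; by_cases hij : i = j <;> simp [hij] <;> linarith [hγ j, hγ i]
              · intro i
                have h := hbg i
                simp only [α'] at h
                by_cases hij : i = j <;> simp [hij] at h ⊢ <;> linarith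
              · rw [Finset.sum_add_distrib]; simp; linarith
              · rw [Finset.sum_add_distrib, Finset.sum_ite_eq' X j]
                simp [hjX]; linarith
            · have heq : e = 0 := by linarith
              have heq' : e' = 0 := by linarith
              -- ∑_X α + α j ≤ ∑_J α
              have hins : ∑ i ∈ X, α i + α j ≤ ∑ i, α i := by
                have h1 : ∑ i ∈ insert j X, α i = α j + ∑ i ∈ X, α i :=
                  Finset.sum_insert hjX
                have h2 : ∑ i ∈ insert j X, α i ≤ ∑ i, α i :=
                  Finset.sum_le_sum_of_subset_of_nonneg (Finset.subset_univ _)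
                    (fun i _ _ => hα i)
                linarith
              have hXstrict : ∑ i ∈ X, α i ≤ f + f' - 1 := by
                rw [heq, heq'] at hJ; linarith
              have hXnn : 0 ≤ ∑ i ∈ X, α i :=
                Finset.sum_nonneg (fun i _ => hα i)
              by_cases hf1 : 1 ≤ f
              · obtain ⟨β, γ, hβ, hγ, hbg, hB, hG, hBX, hGX⟩ :=
                  ih e (f - 1) e' f' he (by linarith) he' hf' α' hA'
                    (by rw [hS]; linarith)
                    (by rw [hSX]; simp [hjX]; linarith) hSn
                refine ⟨fun i => β i + (if i = j then 1 else 0), γ, ?_, hγ, ?_, ?_, hG, ?_, hGX⟩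
                · intro i; by_cases hij : i = j <;> simp [hij] <;> linarith [hβ j, hβ i]
                · intro i
                  have h := hbg i
                  simp only [α'] at h
                  by_cases hij : i = j <;> simp [hij] at h ⊢ <;> linarith
                · rw [Finset.sum_add_distrib]; simp; linarith
                · rw [Finset.sum_add_distrib, Finset.sum_ite_eq' X j]
                  simp [hjX]; linarith
              · have hf'1 : 1 ≤ f' := by linarith
                obtain ⟨β, γ, hβ, hγ, hbg, hB, hG, hBX, hGX⟩ :=
                  ih e f e' (f' - 1) he hf he' (by linarith) α' hA'
                    (by rw [hS]; linarith)
                    (by rw [hSX]; simp [hjX]; linarith) hSn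
                refine ⟨β, fun i => γ i + (if i = j then 1 else 0), hβ, ?_, ?_, hB, ?_, hBX, ?_⟩
                · intro i; by_cases hij : i = j <;> simp [hij] <;> linarith [hγ j, hγ i]
                · intro i
                  have h := hbg i
                  simp only [α'] at h
                  by_cases hij : i = j <;> simp [hij] at h ⊢ <;> linarith
                · rw [Finset.sum_add_distrib]; simp; linarith
                · rw [Finset.sum_add_distrib, Finset.sum_ite_eq' X j]
                  simp [hjX]; linarith
  obtain ⟨m, hm⟩ : ∃ m : ℕ, ∑ j, α j ≤ (m : ℤ) :=
    ⟨(∑ j, α j).toNat, by simp [Int.le_toNat]⟩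
  exact key m e f e' f' he hf he' hf' α hα hJ hX hm
end

section
/- Let n = p0+p1+p2+p3+p4-3, let A be the Batyrev matrix determined by integers p0,p1,p2,p3,p4 ≥ 1 and nonnegative integers b_1,…,b_{p3}, c_2,…,c_{p2}, and let d,e,f be nonnegative integers with normalized height vector h = h(d,e,f). Then the image of P(A,h) under the coordinate projection π_J : ℝ^n → ℝ^J onto the coordinates indexed by J = {t_1,…,t_{p3}, z_2,…,z_{p2}} equals the dilated standard simplex {x ∈ ℝ^J : x_j ≥ 0 for all j ∈ J and Σ_{j∈J} x_j ≤ e+f}. -/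
open Finset Pointwise

/-- The image of the Batyrev polytope `P(A, h(d,e,f))` under
the coordinate projection onto the coordinates indexed by
`J = {t₁,…,t_{p3}, z₂,…,z_{p2}}` is the dilated standard simplex
`{x : x_j ≥ 0, ∑_{j∈J} x_j ≤ e+f}`. -/
theorem batyrev_projection (p0 p1 p2 p3 p4 : ℕ)
    (hp0 : 1 ≤ p0) (hp1 : 1 ≤ p1) (hp2 : 1 ≤ p2) (hp3 : 1 ≤ p3) (hp4 : 1 ≤ p4)
    (b : Fin p3 → ℤ) (c : Fin (p2 - 1) → ℤ)
    (hb : ∀ i, 0 ≤ b i) (hc : ∀ k, 0 ≤ c k)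
    (d e f : ℤ) (hd : 0 ≤ d) (he : 0 ≤ e) (hf : 0 ≤ f) :
    (fun (x : BCol p0 p1 p2 p3 p4 → ℝ) (j : Fin p3 ⊕ Fin (p2 - 1)) => x (Sum.inr j)) ''
        polyP (batyrevA p0 p1 p2 p3 p4 b c) (batyrevH p0 p1 p2 p3 p4 d e f) =
      {y : Fin p3 ⊕ Fin (p2 - 1) → ℝ | (∀ j, 0 ≤ y j) ∧ ∑ j, y j ≤ ((e + f : ℤ) : ℝ)} := by

  ext y
  simp only [Set.mem_image, Set.mem_setOf_eq]
  constructor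
  · rintro ⟨x, hx, rfl⟩
    have hrow : ∀ i, -((batyrevH p0 p1 p2 p3 p4 d e f i : ℤ) : ℝ) ≤
        ∑ j, ((batyrevA p0 p1 p2 p3 p4 b c i j : ℤ) : ℝ) * x j := hx
    refine ⟨?_, ?_⟩
    · intro j
      cases j with
      | inl i =>
        have := hrow (.inr (.inr (.inr (.inl i))))
        simpa [batyrevA, batyrevH, Fintype.sum_sum_type, mul_ite, mul_comm,
          Fin.val_eq_val, Finset.sum_ite_eq] using this
      | inr k =>
        have hk : (k : ℕ) + 1 < p2 := by omega
        have := hrow (.inr (.inr (.inr (.inr ⟨(k : ℕ) + 1, hk⟩))))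
        simpa [batyrevA, batyrevH, Fintype.sum_sum_type, mul_ite, mul_comm,
          Fin.val_eq_val, Finset.sum_ite_eq] using this
    · have h0 : (0 : ℕ) < p2 := hp2
      have := hrow (.inr (.inr (.inr (.inr ⟨0, h0⟩))))
      simp only [batyrevA, batyrevH, Fintype.sum_sum_type] at this
      simp only [Fintype.sum_sum_type]
      push_cast at this ⊢
      simp only [zero_mul, Finset.sum_const_zero, neg_one_mul, if_pos rfl,
        Finset.sum_neg_distrib, zero_add, add_zero] at this
      linarith [this]
  · rintro ⟨hy0, hys⟩
    refine ⟨Sum.elim (fun _ => 0) y, ?_, rfl⟩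
    intro i
    have hbnn : (0:ℝ) ≤ ∑ i, ((b i : ℤ):ℝ) * y (.inl i) :=
      Finset.sum_nonneg fun i _ => mul_nonneg (by exact_mod_cast hb i) (hy0 _)
    have hbnn1 : (0:ℝ) ≤ ∑ i, ((b i + 1 : ℤ):ℝ) * y (.inl i) :=
      Finset.sum_nonneg fun i _ =>
        mul_nonneg (by exact_mod_cast add_nonneg (hb i) zero_le_one) (hy0 _)
    have hcnn : (0:ℝ) ≤ ∑ k, ((c k : ℤ):ℝ) * y (.inr k) :=
      Finset.sum_nonneg fun k _ => mul_nonneg (by exact_mod_cast hc k) (hy0 _)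
    rcases i with i | j | j | i | j
    · simp only [batyrevA, batyrevH, Fintype.sum_sum_type]
      simp only [Sum.elim_inl, Sum.elim_inr, mul_zero, Finset.sum_const_zero]
      split <;> push_cast <;>
        simp only [zero_mul, Finset.sum_const_zero, add_zero, zero_add] <;>
        norm_num <;> exact_mod_cast hd
    · rcases Nat.eq_zero_or_pos (j : ℕ) with hj | hj
      · simp only [batyrevA, batyrevH, Fintype.sum_sum_type, hj, if_true,
          Sum.elim_inl, Sum.elim_inr, mul_zero, Finset.sum_const_zero]
        push_cast
        simp only [neg_zero, zero_add, add_zero]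
        have : -(f:ℝ) ≤ 0 := by exact_mod_cast neg_nonpos.mpr hf
        push_cast at hbnn hcnn
        linarith
      · have hj' : ¬ (j : ℕ) = 0 := by omega
        simp [batyrevA, batyrevH, hj', Fintype.sum_sum_type, mul_ite]
    · rcases Nat.eq_zero_or_pos (j : ℕ) with hj | hj
      · simp only [batyrevA, batyrevH, Fintype.sum_sum_type, hj, if_true,
          Sum.elim_inl, Sum.elim_inr, mul_zero, Finset.sum_const_zero]
        push_cast
        push_cast at hbnn1 hcnn
        simp only [neg_zero, zero_add, add_zero]
        linarith
      · have hj' : ¬ (j : ℕ) = 0 := by omega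
        simp [batyrevA, batyrevH, hj', Fintype.sum_sum_type, mul_ite]
    · have := hy0 (.inl i)
      simp only [batyrevA, batyrevH, Fintype.sum_sum_type]
      simp only [Sum.elim_inl, Sum.elim_inr, mul_zero, Finset.sum_const_zero]
      simp [mul_ite, Fin.val_eq_val, Finset.sum_ite_eq]
      exact this
    · rcases Nat.eq_zero_or_pos (j : ℕ) with hj | hj
      · simp only [batyrevA, batyrevH, Fintype.sum_sum_type, hj, if_true,
          Sum.elim_inl, Sum.elim_inr, mul_zero, Finset.sum_const_zero]
        simp only [Fintype.sum_sum_type] at hys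
        push_cast at hys ⊢
        simp only [neg_one_mul, Finset.sum_neg_distrib]
        linarith
      · have hj' : ¬ (j : ℕ) = 0 := by omega
        have hjj : (j : ℕ) - 1 < p2 - 1 := by omega
        simp only [batyrevA, batyrevH, hj', if_false, Fintype.sum_sum_type,
          Sum.elim_inl, Sum.elim_inr, mul_zero, Finset.sum_const_zero]
        have heq : ∑ k : Fin (p2-1), (if (j:ℕ) = (k:ℕ)+1 then (1:ℝ) else 0) * y (.inr k)
            = y (.inr ⟨(j:ℕ)-1, hjj⟩) := by
          rw [Finset.sum_eq_single (⟨(j:ℕ)-1, hjj⟩ : Fin (p2-1))]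
          · simp; omega
          · intro k _ hk
            have : ¬ (j:ℕ) = (k:ℕ)+1 := by
              intro h; apply hk; apply Fin.ext; simp; omega
            simp [this]
          · simp
        push_cast
        simp only [zero_mul, Finset.sum_const_zero, zero_add, neg_zero]
        rw [heq]
        exact hy0 _
end

section
/- Let n = p0+p1+p2+p3+p4-3, let A be the Batyrev matrix determined by integers p0,p1,p2,p3,p4 ≥ 1 and nonnegative integers b_1,…,b_{p3}, c_2,…,c_{p2}, and let d,e,f be nonnegative integers with normalized height vector h = h(d,e,f). Then P(A,h) is a lattice polytope: it is a bounded set equal to the convex hull (over ℝ) of its set of integer points P(A,h) ∩ ℤ^n. -/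
/-!
By Krein–Milman a compact convex set is the closure of the convex hull of its extreme points, and
a bounded set contains finitely many integer points, so it suffices that every vertex of the
bounded polyhedron `P = P(A, h)` is integral. A point of `P` is a vertex iff no nonzero direction
that moves only coordinates strictly above their lower bound keeps every tight row tight.

Within each block `v`, `u`, `y` the columns of `A` agree outside the coordinate rows, so a vertex
has at most one coordinate above its bound per block and is integral once the block sums
`V = ∑ (vᵢ - lbᵢ)`, `U = ∑ uⱼ`, `Y = ∑ yⱼ` and the coordinates `t`, `z` are. These form a vertex
of the aggregated polytope `V + U ≤ f + d + loadA`, `V + Y ≤ d + loadB`, `∑ t + ∑ z ≤ e + f`.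
There a move of `t, z` can be compensated by `V, U, Y` unless `V > 0 = U = Y` with the first two
rows tight, which forces `∑ t = f` and allows only moves fixing `∑ t`. Hence `t` and `z` each
have at most one nonzero entry, `∑ t ∈ {0, f, e + f}`, `∑ z ∈ {0, e + f - ∑ t}`, and then
`V ∈ {0, α, β}`, `U ∈ {0, α - V}`, `Y ∈ {0, β - V}` for the integral right-hand sides `α`, `β` of
the first two rows.
-/

open Finset Pointwise

theorem mem_intZ_iff_s11 {κ : Type*} {x : κ → ℝ} : x ∈ intZ ↔ ∀ j, x j ∈ (⊥ : Subring ℝ) := by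
  simp [intZ, Subring.mem_bot, eq_comm]

section Polyhedron

variable {ι κ : Type*} [Fintype κ]

theorem convex_polyP (A : ι → κ → ℤ) (h : ι → ℤ) : Convex ℝ (polyP A h) := by
  simp only [polyP, Set.ofPred_forall]
  exact convex_iInter fun i => convex_halfSpace_ge
    ⟨fun x y => by simp [mul_add, Finset.sum_add_distrib],
      fun a x => by simp [Finset.mul_sum, mul_left_comm]⟩ _

theorem isClosed_polyP (A : ι → κ → ℤ) (h : ι → ℤ) : IsClosed (polyP A h) := by
  simp only [polyP, Set.ofPred_forall]
  exact isClosed_iInter fun i => isClosed_le continuous_const (by fun_prop)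

theorem eq_zero_of_mem_extremePoints_polyP [Finite ι] {A : ι → κ → ℤ} {h : ι → ℤ}
    {x : κ → ℝ} (hx : x ∈ (polyP A h).extremePoints ℝ) (g : κ → ℝ)
    (hg : ∀ i, ∑ j, (A i j : ℝ) * x j = -h i → ∑ j, (A i j : ℝ) * g j = 0) : g = 0 := by
  have hnear : ∀ᶠ ε in nhds (0 : ℝ), x + ε • g ∈ polyP A h := by
    simp only [polyP, Set.mem_ofPred_eq, Filter.eventually_all]
    intro i
    have hsplit : ∀ ε : ℝ, ∑ j, (A i j : ℝ) * (x + ε • g) j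
        = ∑ j, (A i j : ℝ) * x j + ε * ∑ j, (A i j : ℝ) * g j := fun ε => by
      simp [mul_add, Finset.sum_add_distrib, Finset.mul_sum, mul_left_comm]
    simp only [hsplit]
    rcases (hx.1 i).eq_or_lt with htight | hslack
    · exact Filter.Eventually.of_forall fun ε => by simp [hg i htight.symm, htight]
    · exact (continuous_const.add (continuous_id.mul continuous_const)).continuousAt.eventually
        (lt_mem_nhds (by simpa using hslack)) |>.mono fun _ => le_of_lt
  obtain ⟨δ, hδ, hball⟩ := Metric.eventually_nhds_iff.1 hnear
  have hpos := hball (y := δ / 2) (by rw [Real.dist_0_eq_abs, abs_of_pos (by positivity)]; linarith)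
  have hneg := hball (y := -(δ / 2)) (by
    rw [Real.dist_0_eq_abs, abs_neg, abs_of_pos (by positivity)]; linarith)
  have hmid : x ∈ openSegment ℝ (x + (δ / 2) • g) (x + (-(δ / 2)) • g) :=
    ⟨1 / 2, 1 / 2, by norm_num, by norm_num, by norm_num, by module⟩
  have := (mem_extremePoints.1 hx).2 _ hpos _ hneg hmid
  simpa [hδ.ne'] using this.1

theorem finite_Icc_inter_intZ [DecidableEq κ] (lo hi : κ → ℝ) : (Set.Icc lo hi ∩ intZ).Finite := by
  refine ((Set.finite_Icc (fun j => ⌈lo j⌉) (fun j => ⌊hi j⌋)).image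
    fun k j => (k j : ℝ)).subset ?_
  rintro x ⟨⟨hlo, hhi⟩, hx⟩
  choose k hk using hx
  refine ⟨k, ⟨fun j => ?_, fun j => ?_⟩, funext fun j => (hk j).symm⟩
  · exact Int.ceil_le.2 (hk j ▸ hlo j)
  · exact Int.le_floor.2 (hk j ▸ hhi j)

theorem eq_convexHull_inter_intZ {s : Set (κ → ℝ)} (hconv : Convex ℝ s) (hclosed : IsClosed s)
    {lo hi : κ → ℝ} (hbox : s ⊆ Set.Icc lo hi) (hext : s.extremePoints ℝ ⊆ intZ) :
    s = convexHull ℝ (s ∩ intZ) := by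
  classical
  have hfin : (s ∩ intZ).Finite :=
    (finite_Icc_inter_intZ lo hi).subset (Set.inter_subset_inter_left _ hbox)
  have hcompact : IsCompact s :=
    Metric.isCompact_of_isClosed_isBounded hclosed ((Metric.isBounded_Icc lo hi).subset hbox)
  refine (convexHull_min Set.inter_subset_left hconv).antisymm' ?_
  calc s = closure (convexHull ℝ (s.extremePoints ℝ)) :=
        (closure_convexHull_extremePoints hcompact hconv).symm
    _ ⊆ closure (convexHull ℝ (s ∩ intZ)) :=
        closure_mono (convexHull_mono fun x hx => ⟨hx.1, hext hx⟩)
    _ = convexHull ℝ (s ∩ intZ) := (hfin.isClosed_convexHull ℝ).closure_eq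

end Polyhedron

section Support

variable {ι : Type*}

theorem mem_of_sum_mem_of_pairwise [Fintype ι] {M σ : Type*} [AddCommMonoid M] [SetLike σ M]
    [AddSubmonoidClass σ M] {s : σ} {w : ι → M} (hw : ∀ i j, w i ≠ 0 → w j ≠ 0 → i = j)
    (hsum : ∑ j, w j ∈ s) (i : ι) : w i ∈ s := by
  classical
  by_cases hi : w i = 0
  · exact hi ▸ zero_mem s
  rwa [← Finset.sum_eq_single i (fun j _ hj => by_contra fun hj' => hj (hw j i hj' hi))
    fun h => absurd (Finset.mem_univ i) h]

theorem single_apply_eq_zero_of_eq_zero [DecidableEq ι] {w : ι → ℝ} {i k : ι} (hi : w i ≠ 0)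
    (hk : w k = 0) (a : ℝ) : (Pi.single i a : ι → ℝ) k = 0 := by
  rw [Pi.single_apply, if_neg]
  rintro rfl
  exact hi hk

theorem pairwise_ne_zero_of_rigid [Fintype ι] {w : ι → ℝ}
    (hw : ∀ g : ι → ℝ, (∀ k, w k = 0 → g k = 0) → ∑ k, g k = 0 → g = 0) (i j : ι)
    (hi : w i ≠ 0) (hj : w j ≠ 0) : i = j := by
  classical
  by_contra hij
  have h := hw (Pi.single i 1 - Pi.single j 1) (fun k hk => by
    simp [single_apply_eq_zero_of_eq_zero hi hk, single_apply_eq_zero_of_eq_zero hj hk]) (by simp)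
  simpa [hij] using congrFun h i

theorem exists_sum_eq_of_support [Fintype ι] {w : ι → ℝ} {a : ℝ} (ha : w = 0 → a = 0) :
    ∃ g : ι → ℝ, (∀ i, w i = 0 → g i = 0) ∧ ∑ i, g i = a := by
  classical
  by_cases hw : w = 0
  · exact ⟨0, by simp, by simp [ha hw]⟩
  obtain ⟨i, hi⟩ := Function.ne_iff.1 hw
  exact ⟨Pi.single i a, fun j hj => single_apply_eq_zero_of_eq_zero hi hj a, by simp⟩

theorem sum_mul_eq_zero_of_support [Fintype ι] {w t g : ι → ℝ} (hwt : ∀ i, 0 ≤ w i * t i)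
    (h : ∑ i, w i * t i = 0) (hg : ∀ i, t i = 0 → g i = 0) : ∑ i, w i * g i = 0 := by
  refine Finset.sum_eq_zero fun i _ => ?_
  rcases mul_eq_zero.1 ((Finset.sum_eq_zero_iff_of_nonneg fun i _ => hwt i).1 h i
    (Finset.mem_univ i)) with hw | ht
  · simp [hw]
  · simp [hg i ht]

end Support

section Aggregate

variable {ιt ιz : Type*} [Fintype ιt] [Fintype ιz]

def loadA (b : ιt → ℤ) (c : ιz → ℤ) (t : ιt → ℝ) (z : ιz → ℝ) : ℝ :=
  ∑ i, (b i : ℝ) * t i + ∑ k, (c k : ℝ) * z k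

def loadB (b : ιt → ℤ) (c : ιz → ℤ) (t : ιt → ℝ) (z : ιz → ℝ) : ℝ :=
  loadA b c t z + ∑ i, t i

@[simp] theorem loadA_zero (b : ιt → ℤ) (c : ιz → ℤ) : loadA b c 0 0 = 0 := by simp [loadA]

@[simp] theorem loadB_zero (b : ιt → ℤ) (c : ιz → ℤ) : loadB b c 0 0 = 0 := by simp [loadB]

theorem loadA_nonneg {b : ιt → ℤ} {c : ιz → ℤ} {t : ιt → ℝ} {z : ιz → ℝ} (hb : ∀ i, 0 ≤ b i)
    (hc : ∀ k, 0 ≤ c k) (ht : ∀ i, 0 ≤ t i) (hz : ∀ k, 0 ≤ z k) : 0 ≤ loadA b c t z :=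
  add_nonneg (Finset.sum_nonneg fun i _ => mul_nonneg (by exact_mod_cast hb i) (ht i))
    (Finset.sum_nonneg fun k _ => mul_nonneg (by exact_mod_cast hc k) (hz k))

theorem loadA_eq_zero_of_support {b : ιt → ℤ} {c : ιz → ℤ} {t gt : ιt → ℝ} {z gz : ιz → ℝ}
    (hb : ∀ i, 0 ≤ b i) (hc : ∀ k, 0 ≤ c k) (ht : ∀ i, 0 ≤ t i) (hz : ∀ k, 0 ≤ z k)
    (h : loadA b c t z = 0) (hgt : ∀ i, t i = 0 → gt i = 0) (hgz : ∀ k, z k = 0 → gz k = 0) :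
    loadA b c gt gz = 0 := by
  have hbt : ∀ i, 0 ≤ (b i : ℝ) * t i := fun i => mul_nonneg (by exact_mod_cast hb i) (ht i)
  have hcz : ∀ k, 0 ≤ (c k : ℝ) * z k := fun k => mul_nonneg (by exact_mod_cast hc k) (hz k)
  have hsum := (add_eq_zero_iff_of_nonneg (Finset.sum_nonneg fun i _ => hbt i)
    (Finset.sum_nonneg fun k _ => hcz k)).1 h
  rw [loadA, sum_mul_eq_zero_of_support hbt hsum.1 hgt, sum_mul_eq_zero_of_support hcz hsum.2 hgz,
    add_zero]

/-- For a point of the Batyrev polytope, `V = ∑ (vᵢ - lbᵢ)`, `U = ∑ uⱼ`, `Y = ∑ yⱼ`, and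
`F = f - ∑ lbᵢ`, `D = -∑ lbᵢ`, `E = e + f`: then `le_A`, `le_B`, `le_C` are the rows `u₁`, `y₁`,
`z₁`. -/
structure AggregatePoint (F D E : ℤ) (b : ιt → ℤ) (c : ιz → ℤ) (V U Y : ℝ) (t : ιt → ℝ)
    (z : ιz → ℝ) : Prop where
  V_nonneg : 0 ≤ V
  U_nonneg : 0 ≤ U
  Y_nonneg : 0 ≤ Y
  t_nonneg : ∀ i, 0 ≤ t i
  z_nonneg : ∀ k, 0 ≤ z k
  le_A : V + U ≤ F + loadA b c t z
  le_B : V + Y ≤ D + loadB b c t z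
  le_C : ∑ i, t i + ∑ k, z k ≤ E

theorem AggregatePoint.exists_bound (F D E : ℤ)
    {b : ιt → ℤ} {c : ιz → ℤ} (hb : ∀ i, 0 ≤ b i) (hc : ∀ k, 0 ≤ c k) :
    ∃ K : ℝ, ∀ V U Y t z, AggregatePoint F D E b c V U Y t z →
      V ≤ K ∧ U ≤ K ∧ Y ≤ K ∧ (∀ i, t i ≤ K) ∧ ∀ k, z k ≤ K := by
  set S := ∑ i, (b i : ℝ) + ∑ k, (c k : ℝ)
  have hSE : 0 ≤ S * |(E : ℝ)| := mul_nonneg (add_nonneg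
    (Finset.sum_nonneg fun i _ => by exact_mod_cast hb i)
    (Finset.sum_nonneg fun k _ => by exact_mod_cast hc k)) (abs_nonneg _)
  refine ⟨|(F : ℝ)| + |(D : ℝ)| + S * |(E : ℝ)| + |(E : ℝ)|, fun V U Y t z hp => ?_⟩
  have hZ := Finset.sum_nonneg fun k (_ : k ∈ Finset.univ) => hp.z_nonneg k
  have hT : ∑ i, t i ≤ |(E : ℝ)| := by linarith [le_abs_self (E : ℝ), hp.le_C]
  have ht : ∀ i, t i ≤ |(E : ℝ)| := fun i => by
    linarith [Finset.single_le_sum (fun i _ => hp.t_nonneg i) (Finset.mem_univ i)]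
  have hz : ∀ k, z k ≤ |(E : ℝ)| := fun k => by
    linarith [Finset.single_le_sum (fun k _ => hp.z_nonneg k) (Finset.mem_univ k),
      le_abs_self (E : ℝ), hp.le_C, Finset.sum_nonneg fun i (_ : i ∈ Finset.univ) => hp.t_nonneg i]
  have hload : loadA b c t z ≤ S * |(E : ℝ)| := by
    rw [loadA, add_mul, Finset.sum_mul, Finset.sum_mul]
    exact add_le_add
      (Finset.sum_le_sum fun i _ => mul_le_mul_of_nonneg_left (ht i) (by exact_mod_cast hb i))
      (Finset.sum_le_sum fun k _ => mul_le_mul_of_nonneg_left (hz k) (by exact_mod_cast hc k))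
  have hA := hp.le_A
  have hB := hp.le_B
  rw [loadB] at hB
  have hV := hp.V_nonneg
  have hU := hp.U_nonneg
  have hY := hp.Y_nonneg
  have hE₀ := abs_nonneg (E : ℝ)
  have hF₀ := abs_nonneg (F : ℝ)
  have hD₀ := abs_nonneg (D : ℝ)
  have hF := le_abs_self (F : ℝ)
  have hD := le_abs_self (D : ℝ)
  exact ⟨by linarith, by linarith, by linarith, fun i => by linarith [ht i],
    fun k => by linarith [hz k]⟩

/-- A vertex of the aggregated polytope, characterised by rigidity: a direction that moves only
coordinates that are off their bound and keeps every tight constraint tight vanishes. -/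
structure AggregateVertex (F D E : ℤ) (b : ιt → ℤ) (c : ιz → ℤ) (V U Y : ℝ) (t : ιt → ℝ)
    (z : ιz → ℝ) : Prop extends AggregatePoint F D E b c V U Y t z where
  rigid : ∀ (gV gU gY : ℝ) (gt : ιt → ℝ) (gz : ιz → ℝ),
    (V = 0 → gV = 0) → (U = 0 → gU = 0) → (Y = 0 → gY = 0) →
    (∀ i, t i = 0 → gt i = 0) → (∀ k, z k = 0 → gz k = 0) →
    (V + U = F + loadA b c t z → gV + gU = loadA b c gt gz) →
    (V + Y = D + loadB b c t z → gV + gY = loadB b c gt gz) →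
    (∑ i, t i + ∑ k, z k = E → ∑ i, gt i + ∑ k, gz k = 0) →
    gV = 0 ∧ gU = 0 ∧ gY = 0 ∧ gt = 0 ∧ gz = 0

end Aggregate

/-- `δA`, `δB` are the changes of the right-hand sides of rows `A`, `B` to be absorbed. -/
theorem exists_compensation {V U Y δA δB : ℝ} {tA tB : Prop}
    (hbal : V ≠ 0 → U = 0 → Y = 0 → tA → tB → δA = δB) (hA : V = 0 → U = 0 → tA → δA = 0)
    (hB : V = 0 → Y = 0 → tB → δB = 0) :
    ∃ gV gU gY : ℝ, (V = 0 → gV = 0) ∧ (U = 0 → gU = 0) ∧ (Y = 0 → gY = 0) ∧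
      (tA → gV + gU = δA) ∧ (tB → gV + gY = δB) := by
  classical
  by_cases hV : V = 0
  · refine ⟨0, if U = 0 then 0 else δA, if Y = 0 then 0 else δB, fun _ => rfl,
      fun h => if_pos h, fun h => if_pos h, fun h => ?_, fun h => ?_⟩ <;> split_ifs <;> simp_all
  by_cases hY : Y = 0
  · by_cases hU : U = 0
    · by_cases htA : tA
      · exact ⟨δA, 0, 0, by simp_all, by simp, by simp, by simp,
          fun h => by simp [hbal hV hU hY htA h]⟩
      · exact ⟨δB, 0, 0, by simp_all, by simp, by simp, fun h => absurd h htA, by simp⟩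
    · exact ⟨δB, δA - δB, 0, by simp_all, by simp_all, by simp, by simp, by simp⟩
  · exact ⟨δA, 0, δB - δA, by simp_all, by simp, by simp_all, by simp, by simp⟩

namespace AggregateVertex

variable {ιt ιz : Type*} [Fintype ιt] [Fintype ιz] {F D E : ℤ} {b : ιt → ℤ} {c : ιz → ℤ}
  {V U Y : ℝ} {t : ιt → ℝ} {z : ιz → ℝ}

theorem rigid_VUY (hv : AggregateVertex F D E b c V U Y t z) {gV gU gY : ℝ}
    (hgV : V = 0 → gV = 0) (hgU : U = 0 → gU = 0) (hgY : Y = 0 → gY = 0)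
    (hA : V + U = F + loadA b c t z → gV + gU = 0) (hB : V + Y = D + loadB b c t z → gV + gY = 0) :
    gV = 0 ∧ gU = 0 ∧ gY = 0 := by
  obtain ⟨h1, h2, h3, -⟩ := hv.rigid gV gU gY 0 0 hgV hgU hgY (by simp) (by simp)
    (by simpa using hA) (by simpa using hB) (by simp)
  exact ⟨h1, h2, h3⟩

theorem tightA_of_U_ne_zero (hv : AggregateVertex F D E b c V U Y t z) (hU : U ≠ 0) :
    V + U = F + loadA b c t z := by
  by_contra hA
  exact one_ne_zero (hv.rigid_VUY (gV := 0) (gU := 1) (gY := 0) (fun _ => rfl)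
    (fun h => absurd h hU) (fun _ => rfl) (fun h => absurd h hA) (by simp)).2.1

theorem tightB_of_Y_ne_zero (hv : AggregateVertex F D E b c V U Y t z) (hY : Y ≠ 0) :
    V + Y = D + loadB b c t z := by
  by_contra hB
  exact one_ne_zero (hv.rigid_VUY (gV := 0) (gU := 0) (gY := 1) (fun _ => rfl)
    (fun _ => rfl) (fun h => absurd h hY) (by simp) (fun h => absurd h hB)).2.2

theorem tight_of_V_ne_zero (hv : AggregateVertex F D E b c V U Y t z) (hV : V ≠ 0) :
    V + U = F + loadA b c t z ∨ V + Y = D + loadB b c t z := by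
  by_contra! h
  exact one_ne_zero (hv.rigid_VUY (gV := 1) (gU := 0) (gY := 0) (fun h => absurd h hV)
    (fun _ => rfl) (fun _ => rfl) (fun h' => absurd h' h.1) (fun h' => absurd h' h.2)).1

theorem tightB_of_V_U (hv : AggregateVertex F D E b c V U Y t z) (hV : V ≠ 0) (hU : U ≠ 0) :
    V + Y = D + loadB b c t z := by
  by_contra hB
  exact one_ne_zero (hv.rigid_VUY (gV := 1) (gU := -1) (gY := 0) (fun h => absurd h hV)
    (fun h => absurd h hU) (fun _ => rfl) (by simp) (fun h => absurd h hB)).1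

theorem tightA_of_V_Y (hv : AggregateVertex F D E b c V U Y t z) (hV : V ≠ 0) (hY : Y ≠ 0) :
    V + U = F + loadA b c t z := by
  by_contra hA
  exact one_ne_zero (hv.rigid_VUY (gV := 1) (gU := 0) (gY := -1) (fun h => absurd h hV)
    (fun _ => rfl) (fun h => absurd h hY) (fun h => absurd h hA) (by simp)).1

theorem not_V_U_Y (hv : AggregateVertex F D E b c V U Y t z) (hV : V ≠ 0) (hU : U ≠ 0)
    (hY : Y ≠ 0) : False :=
  one_ne_zero (hv.rigid_VUY (gV := 1) (gU := -1) (gY := -1) (fun h => absurd h hV)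
    (fun h => absurd h hU) (fun h => absurd h hY) (by simp) (by simp)).1

theorem V_eq_zero_or (hv : AggregateVertex F D E b c V U Y t z) :
    V = 0 ∨ V = F + loadA b c t z ∨ V = D + loadB b c t z := by
  by_cases hV : V = 0
  · exact Or.inl hV
  by_cases hU : U = 0
  · by_cases hY : Y = 0
    · rcases hv.tight_of_V_ne_zero hV with h | h <;> simp_all
    · have := hv.tightA_of_V_Y hV hY
      simp_all
  · have hY : Y = 0 := by_contra fun hY => hv.not_V_U_Y hV hU hY
    have := hv.tightB_of_V_U hV hU
    simp_all

/-- A move of `t, z` is compensated by a move of `V, U, Y` (`exists_compensation`); the only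
obstruction is a vertex with `V ≠ 0 = U = Y` and both rows `A`, `B` tight, where the move must
keep `∑ t` fixed. -/
theorem rigid_tz (hv : AggregateVertex F D E b c V U Y t z) (hD : 0 ≤ D) (hDF : D ≤ F)
    (hb : ∀ i, 0 ≤ b i) (hc : ∀ k, 0 ≤ c k) {gt : ιt → ℝ} {gz : ιz → ℝ}
    (hgt : ∀ i, t i = 0 → gt i = 0) (hgz : ∀ k, z k = 0 → gz k = 0)
    (hbal : V ≠ 0 → U = 0 → Y = 0 → V + U = F + loadA b c t z → V + Y = D + loadB b c t z →
      ∑ i, gt i = 0)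
    (hC : ∑ i, t i + ∑ k, z k = E → ∑ i, gt i + ∑ k, gz k = 0) : gt = 0 ∧ gz = 0 := by
  have hload := loadA_nonneg hb hc hv.t_nonneg hv.z_nonneg
  have hT := Finset.sum_nonneg fun i (_ : i ∈ Finset.univ) => hv.t_nonneg i
  have hF : (0 : ℝ) ≤ F := by exact_mod_cast hD.trans hDF
  have hD' : (0 : ℝ) ≤ D := by exact_mod_cast hD
  obtain ⟨gV, gU, gY, hgV, hgU, hgY, hA, hB⟩ := exists_compensation (V := V) (U := U) (Y := Y)
    (tA := V + U = F + loadA b c t z) (tB := V + Y = D + loadB b c t z)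
    (δA := loadA b c gt gz) (δB := loadB b c gt gz)
    (fun hV hU hY hA hB => by simp [loadB, hbal hV hU hY hA hB])
    (fun hV hU hA => loadA_eq_zero_of_support hb hc hv.t_nonneg hv.z_nonneg
      (by rw [hV, hU] at hA; linarith) hgt hgz)
    (fun hV hY hB => by
      rw [hV, hY, loadB] at hB
      have hsum : ∑ i, t i = 0 := by linarith
      rw [loadB, loadA_eq_zero_of_support hb hc hv.t_nonneg hv.z_nonneg (by linarith) hgt hgz,
        Finset.sum_eq_zero fun i _ => hgt i (((Finset.sum_eq_zero_iff_of_nonneg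
          fun i _ => hv.t_nonneg i).1 hsum) i (Finset.mem_univ i)), add_zero])
  obtain ⟨-, -, -, h1, h2⟩ := hv.rigid gV gU gY gt gz hgV hgU hgY hgt hgz hA hB hC
  exact ⟨h1, h2⟩

theorem t_pairwise (hv : AggregateVertex F D E b c V U Y t z) (hD : 0 ≤ D) (hDF : D ≤ F)
    (hb : ∀ i, 0 ≤ b i) (hc : ∀ k, 0 ≤ c k) : ∀ i j, t i ≠ 0 → t j ≠ 0 → i = j :=
  pairwise_ne_zero_of_rigid fun gt hgt hsum => (hv.rigid_tz hD hDF hb hc (gz := 0) hgt (by simp)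
    (fun _ _ _ _ _ => hsum) (fun _ => by simp [hsum])).1

theorem z_pairwise (hv : AggregateVertex F D E b c V U Y t z) (hD : 0 ≤ D) (hDF : D ≤ F)
    (hb : ∀ i, 0 ≤ b i) (hc : ∀ k, 0 ≤ c k) : ∀ k l, z k ≠ 0 → z l ≠ 0 → k = l :=
  pairwise_ne_zero_of_rigid fun gz hgz hsum => (hv.rigid_tz hD hDF hb hc (gt := 0) (by simp) hgz
    (fun _ _ _ _ _ => by simp) (fun _ => by simp [hsum])).2

theorem tightC_of_z_ne_zero (hv : AggregateVertex F D E b c V U Y t z) (hD : 0 ≤ D)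
    (hDF : D ≤ F) (hb : ∀ i, 0 ≤ b i) (hc : ∀ k, 0 ≤ c k) {k : ιz} (hk : z k ≠ 0) :
    ∑ i, t i + ∑ k, z k = E := by
  classical
  by_contra hC
  have h := (hv.rigid_tz hD hDF hb hc (gt := 0) (gz := Pi.single k 1) (by simp)
    (fun m hm => single_apply_eq_zero_of_eq_zero hk hm 1) (fun _ _ _ _ _ => by simp)
    (fun h => absurd h hC)).2
  simpa using congrFun h k

theorem sum_t_mem (hv : AggregateVertex F D E b c V U Y t z) (hD : 0 ≤ D) (hDF : D ≤ F)
    (hb : ∀ i, 0 ≤ b i) (hc : ∀ k, 0 ≤ c k) : ∑ i, t i ∈ (⊥ : Subring ℝ) := by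
  classical
  by_cases ht : ∀ i, t i = 0
  · simp [ht]
  obtain ⟨i, hi⟩ := not_forall.1 ht
  -- at a balanced vertex `V = F + loadA = D + loadA + ∑ t`
  by_cases hbal : V ≠ 0 ∧ U = 0 ∧ Y = 0 ∧ V + U = F + loadA b c t z ∧ V + Y = D + loadB b c t z
  · obtain ⟨-, hU, hY, hA, hB⟩ := hbal
    rw [show ∑ i, t i = ((F - D : ℤ) : ℝ) by rw [loadB] at hB; push_cast; linarith]
    exact intCast_mem _ _
  have hJ := fun gt gz hgt hgz hC => hv.rigid_tz hD hDF hb hc (gt := gt) (gz := gz) hgt hgz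
    (fun hV hU hY hA hB => absurd ⟨hV, hU, hY, hA, hB⟩ hbal) hC
  have hz : ∀ k, z k = 0 := fun k => by
    by_contra hk
    have h := (hJ (Pi.single i 1) (-Pi.single k 1)
      (fun m hm => single_apply_eq_zero_of_eq_zero hi hm 1)
      (fun m hm => by simp [single_apply_eq_zero_of_eq_zero hk hm]) (fun _ => by simp)).1
    simpa using congrFun h i
  have hC : ∑ i, t i + ∑ k, z k = E := by
    by_contra hC
    have h := (hJ (Pi.single i 1) 0 (fun m hm => single_apply_eq_zero_of_eq_zero hi hm 1)
      (by simp) (fun h => absurd h hC)).1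
    simpa using congrFun h i
  simp only [hz, Finset.sum_const_zero, add_zero] at hC
  rw [hC]
  exact intCast_mem _ _

theorem sum_z_mem (hv : AggregateVertex F D E b c V U Y t z) (hD : 0 ≤ D) (hDF : D ≤ F)
    (hb : ∀ i, 0 ≤ b i) (hc : ∀ k, 0 ≤ c k) : ∑ k, z k ∈ (⊥ : Subring ℝ) := by
  by_cases hz : ∀ k, z k = 0
  · simp [hz]
  obtain ⟨k, hk⟩ := not_forall.1 hz
  rw [eq_sub_of_add_eq' (hv.tightC_of_z_ne_zero hD hDF hb hc hk)]
  exact sub_mem (intCast_mem _ _) (hv.sum_t_mem hD hDF hb hc)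

theorem mem_bot (hv : AggregateVertex F D E b c V U Y t z) (hD : 0 ≤ D) (hDF : D ≤ F)
    (hb : ∀ i, 0 ≤ b i) (hc : ∀ k, 0 ≤ c k) :
    V ∈ (⊥ : Subring ℝ) ∧ U ∈ (⊥ : Subring ℝ) ∧ Y ∈ (⊥ : Subring ℝ) ∧
      (∀ i, t i ∈ (⊥ : Subring ℝ)) ∧ ∀ k, z k ∈ (⊥ : Subring ℝ) := by
  have ht := mem_of_sum_mem_of_pairwise (hv.t_pairwise hD hDF hb hc) (hv.sum_t_mem hD hDF hb hc)
  have hz := mem_of_sum_mem_of_pairwise (hv.z_pairwise hD hDF hb hc) (hv.sum_z_mem hD hDF hb hc)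
  have hload : loadA b c t z ∈ (⊥ : Subring ℝ) :=
    add_mem (sum_mem fun i _ => mul_mem (intCast_mem _ _) (ht i))
      (sum_mem fun k _ => mul_mem (intCast_mem _ _) (hz k))
  have hα : (F : ℝ) + loadA b c t z ∈ (⊥ : Subring ℝ) := add_mem (intCast_mem _ _) hload
  have hβ : (D : ℝ) + loadB b c t z ∈ (⊥ : Subring ℝ) :=
    add_mem (intCast_mem _ _) (add_mem hload (sum_mem fun i _ => ht i))
  have hV : V ∈ (⊥ : Subring ℝ) := by
    rcases hv.V_eq_zero_or with h | h | h <;> rw [h]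
    exacts [zero_mem _, hα, hβ]
  refine ⟨hV, ?_, ?_, ht, hz⟩
  · by_cases hU : U = 0
    · simp [hU]
    · rw [eq_sub_of_add_eq' (hv.tightA_of_U_ne_zero hU)]
      exact sub_mem hα hV
  · by_cases hY : Y = 0
    · simp [hY]
    · rw [eq_sub_of_add_eq' (hv.tightB_of_Y_ne_zero hY)]
      exact sub_mem hβ hV

end AggregateVertex

section Batyrev

variable {p0 p1 p2 p3 p4 : ℕ}

def vLB (d : ℤ) (i : Fin p0) : ℤ := if (i : ℕ) = 0 then -d else 0

def batyrevLB (d : ℤ) : BCol p0 p1 p2 p3 p4 → ℤ := Sum.elim (Sum.elim (vLB d) 0) 0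

def coordRow : BCol p0 p1 p2 p3 p4 → BRow p0 p1 p2 p3 p4
  | .inl (.inl i) => .inl i
  | .inl (.inr (.inl j)) => .inr (.inl ⟨j + 1, Nat.add_lt_of_lt_sub j.2⟩)
  | .inl (.inr (.inr j)) => .inr (.inr (.inl ⟨j + 1, Nat.add_lt_of_lt_sub j.2⟩))
  | .inr (.inl i) => .inr (.inr (.inr (.inl i)))
  | .inr (.inr k) => .inr (.inr (.inr (.inr ⟨k + 1, Nat.add_lt_of_lt_sub k.2⟩)))

theorem batyrevRow_cases (r : BRow p0 p1 p2 p3 p4) :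
    (∃ p, r = coordRow p) ∨ (∃ j : Fin p4, (j : ℕ) = 0 ∧ r = .inr (.inl j)) ∨
      (∃ j : Fin p1, (j : ℕ) = 0 ∧ r = .inr (.inr (.inl j))) ∨
      (∃ j : Fin p2, (j : ℕ) = 0 ∧ r = .inr (.inr (.inr (.inr j)))) := by
  rcases r with i | j | j | i | j
  · exact Or.inl ⟨.inl (.inl i), rfl⟩
  · rcases Nat.eq_zero_or_pos j with hj | hj
    · exact Or.inr (Or.inl ⟨j, hj, rfl⟩)
    · exact Or.inl ⟨.inl (.inr (.inl ⟨j - 1, by omega⟩)), by simp [coordRow, Fin.ext_iff]; omega⟩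
  · rcases Nat.eq_zero_or_pos j with hj | hj
    · exact Or.inr (Or.inr (Or.inl ⟨j, hj, rfl⟩))
    · exact Or.inl ⟨.inl (.inr (.inr ⟨j - 1, by omega⟩)), by simp [coordRow, Fin.ext_iff]; omega⟩
  · exact Or.inl ⟨.inr (.inl i), rfl⟩
  · rcases Nat.eq_zero_or_pos j with hj | hj
    · exact Or.inr (Or.inr (Or.inr ⟨j, hj, rfl⟩))
    · exact Or.inl ⟨.inr (.inr ⟨j - 1, by omega⟩), by simp [coordRow, Fin.ext_iff]; omega⟩

theorem batyrevH_coordRow (d e f : ℤ) (p : BCol p0 p1 p2 p3 p4) :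
    batyrevH p0 p1 p2 p3 p4 d e f (coordRow p) = -batyrevLB d p := by
  rcases p with (i | j | j) | (i | k) <;> simp [coordRow, batyrevH, batyrevLB, vLB]
  split_ifs <;> simp

def vPart (w : BCol p0 p1 p2 p3 p4 → ℝ) : Fin p0 → ℝ := fun i => w (.inl (.inl i))
def uPart (w : BCol p0 p1 p2 p3 p4 → ℝ) : Fin (p4 - 1) → ℝ := fun j => w (.inl (.inr (.inl j)))
def yPart (w : BCol p0 p1 p2 p3 p4 → ℝ) : Fin (p1 - 1) → ℝ := fun j => w (.inl (.inr (.inr j)))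
def tPart (w : BCol p0 p1 p2 p3 p4 → ℝ) : Fin p3 → ℝ := fun i => w (.inr (.inl i))
def zPart (w : BCol p0 p1 p2 p3 p4 → ℝ) : Fin (p2 - 1) → ℝ := fun k => w (.inr (.inr k))

variable (b : Fin p3 → ℤ) (c : Fin (p2 - 1) → ℤ)

def aggA (w : BCol p0 p1 p2 p3 p4 → ℝ) : ℝ :=
  ∑ i, vPart w i + ∑ j, uPart w j - loadA b c (tPart w) (zPart w)

def aggB (w : BCol p0 p1 p2 p3 p4 → ℝ) : ℝ :=
  ∑ i, vPart w i + ∑ j, yPart w j - loadB b c (tPart w) (zPart w)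

def aggC (w : BCol p0 p1 p2 p3 p4 → ℝ) : ℝ := ∑ i, tPart w i + ∑ k, zPart w k

theorem batyrevA_coordRow (p : BCol p0 p1 p2 p3 p4) (w : BCol p0 p1 p2 p3 p4 → ℝ) :
    ∑ j, (batyrevA p0 p1 p2 p3 p4 b c (coordRow p) j : ℝ) * w j = w p := by
  rcases p with (i | j | j) | (i | k) <;>
    simp [coordRow, batyrevA, Fintype.sum_sum_type, Fin.val_inj, ite_mul]

theorem batyrevA_rowU (j : Fin p4) (hj : (j : ℕ) = 0) (w : BCol p0 p1 p2 p3 p4 → ℝ) :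
    ∑ col, (batyrevA p0 p1 p2 p3 p4 b c (.inr (.inl j)) col : ℝ) * w col = -aggA b c w := by
  simp [batyrevA, aggA, loadA, vPart, uPart, tPart, zPart, hj, Fintype.sum_sum_type,
    Finset.sum_neg_distrib]
  ring

theorem batyrevA_rowY (j : Fin p1) (hj : (j : ℕ) = 0) (w : BCol p0 p1 p2 p3 p4 → ℝ) :
    ∑ col, (batyrevA p0 p1 p2 p3 p4 b c (.inr (.inr (.inl j))) col : ℝ) * w col =
      -aggB b c w := by
  simp [batyrevA, aggB, loadB, loadA, vPart, yPart, tPart, zPart, hj, Fintype.sum_sum_type,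
    Finset.sum_neg_distrib, add_mul, Finset.sum_add_distrib]
  ring

theorem batyrevA_rowZ (j : Fin p2) (hj : (j : ℕ) = 0) (w : BCol p0 p1 p2 p3 p4 → ℝ) :
    ∑ col, (batyrevA p0 p1 p2 p3 p4 b c (.inr (.inr (.inr (.inr j)))) col : ℝ) * w col =
      -aggC w := by
  simp [batyrevA, aggC, tPart, zPart, hj, Fintype.sum_sum_type, Finset.sum_neg_distrib]
  ring

end Batyrev

section BatyrevPolytope

variable {p0 p1 p2 p3 p4 : ℕ} {b : Fin p3 → ℤ} {c : Fin (p2 - 1) → ℤ} {d e f : ℤ}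
  {x : BCol p0 p1 p2 p3 p4 → ℝ}

local notation "P" => polyP (batyrevA p0 p1 p2 p3 p4 b c) (batyrevH p0 p1 p2 p3 p4 d e f)

theorem batyrevLB_le_of_mem (hx : x ∈ P) (p : BCol p0 p1 p2 p3 p4) :
    (batyrevLB d p : ℝ) ≤ x p := by
  have h := hx (coordRow p)
  rw [batyrevA_coordRow, batyrevH_coordRow] at h
  simpa using h

theorem aggregatePoint_of_mem (hp1 : 1 ≤ p1) (hp2 : 1 ≤ p2) (hp4 : 1 ≤ p4) (hx : x ∈ P) :
    AggregatePoint (f - ∑ i : Fin p0, vLB d i) (-∑ i : Fin p0, vLB d i) (e + f) b c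
      (∑ i, (vPart x i - vLB d i))
      (∑ j, uPart x j) (∑ j, yPart x j) (tPart x) (zPart x) := by
  have hlb := batyrevLB_le_of_mem hx
  have hA := hx (.inr (.inl ⟨0, hp4⟩))
  have hB := hx (.inr (.inr (.inl ⟨0, hp1⟩)))
  have hC := hx (.inr (.inr (.inr (.inr ⟨0, hp2⟩))))
  rw [batyrevA_rowU b c _ rfl] at hA
  rw [batyrevA_rowY b c _ rfl] at hB
  rw [batyrevA_rowZ b c _ rfl] at hC
  simp only [batyrevH, aggA, aggB, aggC, loadB] at hA hB hC
  simp at hA hB hC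
  refine ⟨Finset.sum_nonneg fun i _ =>
      sub_nonneg.2 (by simpa [vPart, batyrevLB] using hlb (.inl (.inl i))),
    Finset.sum_nonneg fun j _ => by simpa [uPart, batyrevLB] using hlb (.inl (.inr (.inl j))),
    Finset.sum_nonneg fun j _ => by simpa [yPart, batyrevLB] using hlb (.inl (.inr (.inr j))),
    fun i => by simpa [tPart, batyrevLB] using hlb (.inr (.inl i)),
    fun k => by simpa [zPart, batyrevLB] using hlb (.inr (.inr k)), ?_, ?_, ?_⟩
  · rw [Finset.sum_sub_distrib]
    push_cast
    linarith
  · rw [Finset.sum_sub_distrib, loadB]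
    push_cast
    linarith
  · push_cast
    linarith

theorem parts_eq_zero_of_mem_extremePoints (hx : x ∈ Set.extremePoints ℝ P)
    {gv : Fin p0 → ℝ} {gu : Fin (p4 - 1) → ℝ} {gy : Fin (p1 - 1) → ℝ} {gt : Fin p3 → ℝ}
    {gz : Fin (p2 - 1) → ℝ} (hgv : ∀ i, vPart x i = vLB d i → gv i = 0)
    (hgu : ∀ j, uPart x j = 0 → gu j = 0) (hgy : ∀ j, yPart x j = 0 → gy j = 0)
    (hgt : ∀ i, tPart x i = 0 → gt i = 0) (hgz : ∀ k, zPart x k = 0 → gz k = 0)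
    (hA : aggA b c x = f → ∑ i, gv i + ∑ j, gu j = loadA b c gt gz)
    (hB : aggB b c x = 0 → ∑ i, gv i + ∑ j, gy j = loadB b c gt gz)
    (hC : aggC x = e + f → ∑ i, gt i + ∑ k, gz k = 0) :
    gv = 0 ∧ gu = 0 ∧ gy = 0 ∧ gt = 0 ∧ gz = 0 := by
  have h : (Sum.elim (Sum.elim gv (Sum.elim gu gy)) (Sum.elim gt gz) : BCol p0 p1 p2 p3 p4 → ℝ)
      = 0 := by
    refine eq_zero_of_mem_extremePoints_polyP hx _ fun r hr => ?_
    rcases batyrevRow_cases r with ⟨p, rfl⟩ | ⟨j, hj, rfl⟩ | ⟨j, hj, rfl⟩ | ⟨j, hj, rfl⟩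
    · rw [batyrevA_coordRow, batyrevH_coordRow] at hr
      rw [batyrevA_coordRow]
      rcases p with (i | j | j) | (i | k)
      exacts [hgv i (by simpa [vPart, batyrevLB] using hr),
        hgu j (by simpa [uPart, batyrevLB] using hr), hgy j (by simpa [yPart, batyrevLB] using hr),
        hgt i (by simpa [tPart, batyrevLB] using hr), hgz k (by simpa [zPart, batyrevLB] using hr)]
    · rw [batyrevA_rowU b c j hj] at hr ⊢
      simp only [batyrevH, hj, if_true, neg_inj] at hr
      change -(∑ i, gv i + ∑ j, gu j - loadA b c gt gz) = 0
      rw [hA hr, sub_self, neg_zero]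
    · rw [batyrevA_rowY b c j hj] at hr ⊢
      simp only [batyrevH, Int.cast_zero, neg_zero, neg_eq_zero] at hr
      change -(∑ i, gv i + ∑ j, gy j - loadB b c gt gz) = 0
      rw [hB hr, sub_self, neg_zero]
    · rw [batyrevA_rowZ b c j hj] at hr ⊢
      simp only [batyrevH, hj, if_true, neg_inj] at hr
      change -(∑ i, gt i + ∑ k, gz k) = 0
      rw [hC (by push_cast at hr; linarith), neg_zero]
  exact ⟨funext fun i => congrFun h (.inl (.inl i)),
    funext fun j => congrFun h (.inl (.inr (.inl j))),
    funext fun j => congrFun h (.inl (.inr (.inr j))), funext fun i => congrFun h (.inr (.inl i)),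
    funext fun k => congrFun h (.inr (.inr k))⟩

theorem aggregateVertex_of_mem_extremePoints (hp1 : 1 ≤ p1) (hp2 : 1 ≤ p2) (hp4 : 1 ≤ p4)
    (hx : x ∈ Set.extremePoints ℝ P) :
    AggregateVertex (f - ∑ i : Fin p0, vLB d i) (-∑ i : Fin p0, vLB d i) (e + f) b c
      (∑ i, (vPart x i - vLB d i)) (∑ j, uPart x j) (∑ j, yPart x j) (tPart x) (zPart x) := by
  refine ⟨aggregatePoint_of_mem hp1 hp2 hp4 hx.1,
    fun gV gU gY gt gz hgV hgU hgY hgt hgz hA hB hC => ?_⟩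
  obtain ⟨gv, hgv, rfl⟩ := exists_sum_eq_of_support (w := fun i => vPart x i - vLB d i) (a := gV)
    fun h => hgV (by simp [h])
  obtain ⟨gu, hgu, rfl⟩ := exists_sum_eq_of_support (w := uPart x) (a := gU)
    fun h => hgU (by simp [h])
  obtain ⟨gy, hgy, rfl⟩ := exists_sum_eq_of_support (w := yPart x) (a := gY)
    fun h => hgY (by simp [h])
  obtain ⟨h1, h2, h3, h4, h5⟩ := parts_eq_zero_of_mem_extremePoints hx
    (fun i hi => hgv i (sub_eq_zero.2 hi)) hgu hgy hgt hgz
    (fun h => hA (by rw [aggA] at h; rw [Finset.sum_sub_distrib]; push_cast; linarith))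
    (fun h => hB (by rw [aggB] at h; rw [Finset.sum_sub_distrib]; push_cast; linarith))
    (fun h => hC (by rw [aggC] at h; exact_mod_cast h))
  exact ⟨by simp [h1], by simp [h2], by simp [h3], h4, h5⟩

theorem blocks_pairwise_of_mem_extremePoints (hx : x ∈ Set.extremePoints ℝ P) :
    (∀ i j, vPart x i - vLB d i ≠ 0 → vPart x j - vLB d j ≠ 0 → i = j) ∧
      (∀ i j, uPart x i ≠ 0 → uPart x j ≠ 0 → i = j) ∧
      (∀ i j, yPart x i ≠ 0 → yPart x j ≠ 0 → i = j) :=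
  ⟨pairwise_ne_zero_of_rigid fun gv hgv hsum =>
    (parts_eq_zero_of_mem_extremePoints hx (gu := 0) (gy := 0) (gt := 0) (gz := 0)
      (fun i hi => hgv i (sub_eq_zero.2 hi)) (by simp) (by simp) (by simp) (by simp)
      (fun _ => by simp [hsum]) (fun _ => by simp [hsum]) (fun _ => by simp)).1,
  pairwise_ne_zero_of_rigid fun gu hgu hsum =>
    (parts_eq_zero_of_mem_extremePoints hx (gv := 0) (gy := 0) (gt := 0) (gz := 0)
      (by simp) hgu (by simp) (by simp) (by simp)
      (fun _ => by simp [hsum]) (fun _ => by simp) (fun _ => by simp)).2.1,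
  pairwise_ne_zero_of_rigid fun gy hgy hsum =>
    (parts_eq_zero_of_mem_extremePoints hx (gv := 0) (gu := 0) (gt := 0) (gz := 0)
      (by simp) (by simp) hgy (by simp) (by simp)
      (fun _ => by simp) (fun _ => by simp [hsum]) (fun _ => by simp)).2.2.1⟩

theorem mem_intZ_of_mem_extremePoints (hp1 : 1 ≤ p1) (hp2 : 1 ≤ p2) (hp4 : 1 ≤ p4)
    (hb : ∀ i, 0 ≤ b i) (hc : ∀ k, 0 ≤ c k) (hd : 0 ≤ d) (hf : 0 ≤ f)
    (hx : x ∈ Set.extremePoints ℝ P) : x ∈ intZ := by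
  have hL : ∑ i : Fin p0, vLB d i ≤ 0 := Finset.sum_nonpos fun i _ => by
    unfold vLB
    split_ifs <;> omega
  obtain ⟨hV, hU, hY, ht, hz⟩ :=
    (aggregateVertex_of_mem_extremePoints hp1 hp2 hp4 hx).mem_bot (by omega) (by omega) hb hc
  obtain ⟨hvp, hup, hyp⟩ := blocks_pairwise_of_mem_extremePoints hx
  rw [mem_intZ_iff_s11]
  rintro ((i | j | j) | (i | k))
  · simpa [vPart] using add_mem (mem_of_sum_mem_of_pairwise hvp hV i) (intCast_mem _ (vLB d i))
  · exact mem_of_sum_mem_of_pairwise hup hU j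
  · exact mem_of_sum_mem_of_pairwise hyp hY j
  · exact ht i
  · exact hz k

end BatyrevPolytope

theorem exists_polyP_batyrev_subset_Icc {p0 p1 p2 p3 p4 : ℕ} (hp1 : 1 ≤ p1) (hp2 : 1 ≤ p2)
    (hp4 : 1 ≤ p4) {b : Fin p3 → ℤ} {c : Fin (p2 - 1) → ℤ} (hb : ∀ i, 0 ≤ b i)
    (hc : ∀ k, 0 ≤ c k) (d e f : ℤ) :
    ∃ lo hi : BCol p0 p1 p2 p3 p4 → ℝ,
      polyP (batyrevA p0 p1 p2 p3 p4 b c) (batyrevH p0 p1 p2 p3 p4 d e f) ⊆ Set.Icc lo hi := by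
  obtain ⟨K, hK⟩ := AggregatePoint.exists_bound (f - ∑ i : Fin p0, vLB d i)
    (-∑ i : Fin p0, vLB d i) (e + f) hb hc
  refine ⟨fun p => batyrevLB d p, fun p => batyrevLB d p + K, fun x hx =>
    ⟨batyrevLB_le_of_mem hx, fun p => ?_⟩⟩
  have hlb := batyrevLB_le_of_mem hx
  obtain ⟨hV, hU, hY, ht, hz⟩ := hK _ _ _ _ _ (aggregatePoint_of_mem hp1 hp2 hp4 hx)
  rcases p with (i | j | j) | (i | k)
  · have := Finset.single_le_sum (fun i _ => sub_nonneg.2 (hlb (.inl (.inl i))))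
      (Finset.mem_univ i)
    simp [batyrevLB, vPart] at this hV ⊢
    linarith
  · have := Finset.single_le_sum (f := uPart x)
      (fun j _ => by simpa [uPart, batyrevLB] using hlb (.inl (.inr (.inl j)))) (Finset.mem_univ j)
    simp [batyrevLB, uPart] at this hU ⊢
    linarith
  · have := Finset.single_le_sum (f := yPart x)
      (fun j _ => by simpa [yPart, batyrevLB] using hlb (.inl (.inr (.inr j)))) (Finset.mem_univ j)
    simp [batyrevLB, yPart] at this hY ⊢
    linarith
  · simpa [batyrevLB, tPart] using ht i
  · simpa [batyrevLB, zPart] using hz k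

theorem batyrev_lattice_polytope_general (p0 p1 p2 p3 p4 : ℕ)
    (hp1 : 1 ≤ p1) (hp2 : 1 ≤ p2) (hp4 : 1 ≤ p4)
    (b : Fin p3 → ℤ) (c : Fin (p2 - 1) → ℤ)
    (hb : ∀ i, 0 ≤ b i) (hc : ∀ k, 0 ≤ c k)
    (d e f : ℤ) (hd : 0 ≤ d) (hf : 0 ≤ f) :
    Bornology.IsBounded
      (polyP (batyrevA p0 p1 p2 p3 p4 b c) (batyrevH p0 p1 p2 p3 p4 d e f)) ∧
    polyP (batyrevA p0 p1 p2 p3 p4 b c) (batyrevH p0 p1 p2 p3 p4 d e f) =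
      convexHull ℝ
        (polyP (batyrevA p0 p1 p2 p3 p4 b c) (batyrevH p0 p1 p2 p3 p4 d e f) ∩ intZ) := by
  obtain ⟨lo, hi, hbox⟩ := exists_polyP_batyrev_subset_Icc hp1 hp2 hp4 hb hc d e f
  exact ⟨(Metric.isBounded_Icc lo hi).subset hbox,
    eq_convexHull_inter_intZ (convex_polyP _ _) (isClosed_polyP _ _) hbox
      fun _ hx => mem_intZ_of_mem_extremePoints hp1 hp2 hp4 hb hc hd hf hx⟩

/-- The Batyrev polytope `P(A, h(d,e,f))` (with `d,e,f ≥ 0`)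
is a lattice polytope: it is bounded and equals the convex hull of its set of
integer points. -/
theorem batyrev_lattice_polytope (p0 p1 p2 p3 p4 : ℕ)
    (hp0 : 1 ≤ p0) (hp1 : 1 ≤ p1) (hp2 : 1 ≤ p2) (hp3 : 1 ≤ p3) (hp4 : 1 ≤ p4)
    (b : Fin p3 → ℤ) (c : Fin (p2 - 1) → ℤ)
    (hb : ∀ i, 0 ≤ b i) (hc : ∀ k, 0 ≤ c k)
    (d e f : ℤ) (hd : 0 ≤ d) (he : 0 ≤ e) (hf : 0 ≤ f) :
    Bornology.IsBounded
      (polyP (batyrevA p0 p1 p2 p3 p4 b c) (batyrevH p0 p1 p2 p3 p4 d e f)) ∧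
    polyP (batyrevA p0 p1 p2 p3 p4 b c) (batyrevH p0 p1 p2 p3 p4 d e f) =
      convexHull ℝ
        (polyP (batyrevA p0 p1 p2 p3 p4 b c) (batyrevH p0 p1 p2 p3 p4 d e f) ∩ intZ) :=
  batyrev_lattice_polytope_general p0 p1 p2 p3 p4 hp1 hp2 hp4 b c hb hc d e f hd hf
end
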